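/- arXiv:2509.25009 — 6 statements merged into one kernel-verified Lean document; each statement's English description precedes it below -/
import Mathlib

section
/- Under the conditional parallel trends assumption E[Y1(0) - Y0 | X, A=1] = E[Y1(0) - Y0 | X, A=0], consistency Y1 = A·Y1(1) + (1-A)·Y1(0), and the MAR condition that Y0 is conditionally independent of R0 given (X, A) with P(R0=1 | X, A) ∈ (0,1) a.s., the ATT θ = E[Y1(1) - Y1(0) | A=1] equals E[(A/E[A])·(Y1 - E[Y0 | X, A=1, R0=1] - E[Y1 | X, A=0] + E[Y0 | X, A=0, R0=1])]. -/
open MeasureTheory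

/-- `m ∘ X` is a version of the conditional expectation `E[Y ∣ X]` restricted to the
event `E` (i.e. a version of `E[Y ∣ X, E]`). -/
def IsCondExpOn {Ω 𝒳 : Type*} [MeasurableSpace Ω] [MeasurableSpace 𝒳]
    (μ : MeasureTheory.Measure Ω) (X : Ω → 𝒳) (E : Set Ω) (Y : Ω → ℝ) (m : 𝒳 → ℝ) : Prop :=
  Measurable m ∧ ∀ s : Set 𝒳, MeasurableSet s →
    ∫ ω in E ∩ X ⁻¹' s, Y ω ∂μ = ∫ ω in E ∩ X ⁻¹' s, m (X ω) ∂μ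

namespace ATTaux

variable {Ω 𝒳 : Type*} [MeasurableSpace Ω] [MeasurableSpace 𝒳]

lemma restrict_inter_preimage (μ : Measure Ω) {X : Ω → 𝒳} (hX : Measurable X)
    (E : Set Ω) {s : Set 𝒳} (hs : MeasurableSet s) :
    μ.restrict (E ∩ X ⁻¹' s) = (μ.restrict E).restrict (X ⁻¹' s) := by
  rw [Measure.restrict_restrict (hX hs), Set.inter_comm]

lemma setIntegral_binary (ν : Measure Ω) {B : Ω → ℝ}
    (hB : Measurable B) (hbin : ∀ ω, B ω = 0 ∨ B ω = 1) (T : Set Ω) :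
    ∫ ω in T, B ω ∂ν = (ν (T ∩ {ω | B ω = 1})).toReal := by
  have hmeas : MeasurableSet {ω | B ω = 1} := hB (measurableSet_singleton 1)
  have hptw : ∀ ω, B ω = Set.indicator {ω | B ω = 1} (fun _ => (1 : ℝ)) ω := by
    intro ω
    rcases hbin ω with h | h <;> simp [Set.indicator_apply, h]
  calc ∫ ω in T, B ω ∂ν
      = ∫ ω in T, Set.indicator {ω | B ω = 1} (fun _ => (1 : ℝ)) ω ∂ν :=
        integral_congr_ae (Filter.Eventually.of_forall fun ω => hptw ω)
    _ = ∫ _ω in T ∩ {ω | B ω = 1}, (1 : ℝ) ∂ν := setIntegral_indicator hmeas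
    _ = (ν (T ∩ {ω | B ω = 1})).toReal := by simp; rfl

lemma pos_part_bound {ν : Measure Ω} [IsFiniteMeasure ν] {X : Ω → 𝒳} (hX : Measurable X)
    {Y : Ω → ℝ} (hY : Integrable Y ν) {m : 𝒳 → ℝ} (hm : Measurable m)
    (key : ∀ s : Set 𝒳, MeasurableSet s →
      ∫ ω in X ⁻¹' s, Y ω ∂ν = ∫ ω in X ⁻¹' s, m (X ω) ∂ν) :
    ∫⁻ ω in X ⁻¹' {x | 0 ≤ m x}, ENNReal.ofReal (m (X ω)) ∂ν < ⊤ := by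
  set C := ∫⁻ ω, ‖Y ω‖₊ ∂ν with hC
  have hCfin : C < ⊤ := hY.2
  have main : ∀ (n : ℕ) (s : Set 𝒳), MeasurableSet s → (∀ x ∈ s, 0 ≤ m x ∧ m x ≤ n) →
      ∫⁻ ω in X ⁻¹' s, ENNReal.ofReal (m (X ω)) ∂ν ≤ C := by
    intro n s hs hbound
    have hTmeas : MeasurableSet (X ⁻¹' s) := hX hs
    have hib : IntegrableOn (fun ω => m (X ω)) (X ⁻¹' s) ν := by
      refine Integrable.mono' (integrable_const (n : ℝ))
        (hm.comp hX).aestronglyMeasurable.restrict ?_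
      refine (ae_restrict_iff' hTmeas).2 (Filter.Eventually.of_forall fun ω hω => ?_)
      have hb := hbound _ hω
      rw [Real.norm_eq_abs, abs_of_nonneg hb.1]
      exact hb.2
    have hnn : 0 ≤ᵐ[ν.restrict (X ⁻¹' s)] fun ω => m (X ω) :=
      (ae_restrict_iff' hTmeas).2 (Filter.Eventually.of_forall fun ω hω => (hbound _ hω).1)
    calc ∫⁻ ω in X ⁻¹' s, ENNReal.ofReal (m (X ω)) ∂ν
        = ENNReal.ofReal (∫ ω in X ⁻¹' s, m (X ω) ∂ν) :=
          (ofReal_integral_eq_lintegral_ofReal hib hnn).symm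
      _ = ENNReal.ofReal (∫ ω in X ⁻¹' s, Y ω ∂ν) := by rw [key s hs]
      _ ≤ (‖∫ ω in X ⁻¹' s, Y ω ∂ν‖₊ : ENNReal) := by
          rw [← Real.nnnorm_abs]; change ENNReal.ofReal _ ≤ ‖|∫ ω in X ⁻¹' s, Y ω ∂ν|‖ₑ; rw [Real.enorm_eq_ofReal (abs_nonneg _)]
          exact ENNReal.ofReal_le_ofReal (le_abs_self _)
      _ ≤ ∫⁻ ω in X ⁻¹' s, ‖Y ω‖₊ ∂ν := enorm_integral_le_lintegral_enorm _
      _ ≤ C := setLIntegral_le_lintegral _ _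
  set T : ℕ → Set 𝒳 := fun n => {x | 0 ≤ m x ∧ m x ≤ n} with hT
  have hTm : ∀ n, MeasurableSet (T n) := fun n =>
    (measurableSet_le measurable_const hm).inter (measurableSet_le hm measurable_const)
  have hmono : Monotone fun n => X ⁻¹' T n := by
    intro a b hab ω hω
    exact ⟨hω.1, hω.2.trans (by exact_mod_cast Nat.cast_le.2 hab)⟩
  have hun : ⋃ n, X ⁻¹' T n = X ⁻¹' {x | 0 ≤ m x} := by
    ext ω
    simp only [Set.mem_iUnion, Set.mem_preimage, hT, Set.mem_setOf_eq]
    exact ⟨fun ⟨n, hn, _⟩ => hn, fun h0 => ⟨⌈m (X ω)⌉₊, h0, Nat.le_ceil _⟩⟩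
  set W := ν.withDensity (fun ω => ENNReal.ofReal (m (X ω))) with hW
  have happ : ∀ (S : Set Ω), MeasurableSet S →
      W S = ∫⁻ ω in S, ENNReal.ofReal (m (X ω)) ∂ν := fun S hS => withDensity_apply _ hS
  have hle : W (X ⁻¹' {x | 0 ≤ m x}) ≤ C := by
    rw [← hun, Directed.measure_iUnion hmono.directed_le]
    exact iSup_le fun n => by
      rw [happ _ (hX (hTm n))]
      exact main n (T n) (hTm n) fun x hx => hx
  calc ∫⁻ ω in X ⁻¹' {x | 0 ≤ m x}, ENNReal.ofReal (m (X ω)) ∂ν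
      = W (X ⁻¹' {x | 0 ≤ m x}) :=
        (happ _ (hX (measurableSet_le measurable_const hm))).symm
    _ ≤ C := hle
    _ < ⊤ := hCfin

lemma integrableOn_of_isCondExpOn {μ : Measure Ω} [IsFiniteMeasure μ]
    {X : Ω → 𝒳} (hX : Measurable X) {E : Set Ω}
    {Y : Ω → ℝ} (hY : Integrable Y μ) {m : 𝒳 → ℝ}
    (h : IsCondExpOn μ X E Y m) :
    IntegrableOn (fun ω => m (X ω)) E μ := by
  have hm := h.1
  set ν := μ.restrict E with hν
  have key : ∀ s : Set 𝒳, MeasurableSet s →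
      ∫ ω in X ⁻¹' s, Y ω ∂ν = ∫ ω in X ⁻¹' s, m (X ω) ∂ν := by
    intro s hs
    rw [hν, ← restrict_inter_preimage μ hX E hs]
    exact h.2 s hs
  have keyneg : ∀ s : Set 𝒳, MeasurableSet s →
      ∫ ω in X ⁻¹' s, -Y ω ∂ν = ∫ ω in X ⁻¹' s, (-m) (X ω) ∂ν := by
    intro s hs
    simp only [Pi.neg_apply, integral_neg]
    rw [key s hs]
  have hpos := pos_part_bound hX hY.restrict hm key
  have hneg := pos_part_bound hX hY.restrict.neg hm.neg keyneg
  refine ⟨(hm.comp hX).aestronglyMeasurable.restrict, ?_⟩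
  have hP : MeasurableSet (X ⁻¹' {x | 0 ≤ m x}) := hX (measurableSet_le measurable_const hm)
  rw [HasFiniteIntegral, ← lintegral_add_compl (fun ω => ‖m (X ω)‖ₑ) hP]
  have e1 : ∫⁻ ω in X ⁻¹' {x | 0 ≤ m x}, (‖m (X ω)‖₊ : ENNReal) ∂ν
      = ∫⁻ ω in X ⁻¹' {x | 0 ≤ m x}, ENNReal.ofReal (m (X ω)) ∂ν := by
    refine setLIntegral_congr_fun hP (fun ω hω => ?_)
    exact Real.enorm_eq_ofReal hω
  have e2 : ∫⁻ ω in (X ⁻¹' {x | 0 ≤ m x})ᶜ, (‖m (X ω)‖₊ : ENNReal) ∂ν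
      ≤ ∫⁻ ω in X ⁻¹' {x | 0 ≤ (-m) x}, ENNReal.ofReal ((-m) (X ω)) ∂ν := by
    have hsub : (X ⁻¹' {x | 0 ≤ m x})ᶜ ⊆ X ⁻¹' {x | 0 ≤ (-m) x} := by
      intro ω hω
      simp only [Set.mem_compl_iff, Set.mem_preimage, Set.mem_setOf_eq, not_le] at hω ⊢
      simpa using hω.le
    calc ∫⁻ ω in (X ⁻¹' {x | 0 ≤ m x})ᶜ, (‖m (X ω)‖₊ : ENNReal) ∂ν
        = ∫⁻ ω in (X ⁻¹' {x | 0 ≤ m x})ᶜ, ENNReal.ofReal ((-m) (X ω)) ∂ν := by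
          refine setLIntegral_congr_fun hP.compl (fun ω hω => ?_)
          simp only [Set.mem_compl_iff, Set.mem_preimage, Set.mem_setOf_eq, not_le] at hω
          rw [← Real.nnnorm_abs]; change ‖|m (X ω)|‖ₑ = _; rw [Real.enorm_eq_ofReal (abs_nonneg _), abs_of_neg hω]
          rfl
      _ ≤ _ := lintegral_mono_set hsub
  exact lt_of_le_of_lt (add_le_add e1.le e2) (ENNReal.add_lt_top.2 ⟨hpos, hneg⟩)

lemma ae_map_zero_of_forall_setIntegral {ν : Measure Ω} [IsFiniteMeasure ν] {X : Ω → 𝒳}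
    (hX : Measurable X) {g : 𝒳 → ℝ} (hg : Measurable g)
    (hint : Integrable (fun ω => g (X ω)) ν)
    (h : ∀ s : Set 𝒳, MeasurableSet s → ∫ ω in X ⁻¹' s, g (X ω) ∂ν = 0) :
    g =ᵐ[Measure.map X ν] 0 := by
  haveI : IsFiniteMeasure (Measure.map X ν) :=
    ⟨by rw [Measure.map_apply hX MeasurableSet.univ, Set.preimage_univ]; exact measure_lt_top ν _⟩
  have hgm : Integrable g (Measure.map X ν) :=
    (integrable_map_measure hg.aestronglyMeasurable hX.aemeasurable).2 hint
  refine ae_eq_zero_of_forall_setIntegral_eq_of_sigmaFinite (fun s hs _ => hgm.integrableOn) ?_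
  intro s hs _
  rw [setIntegral_map hs hg.aestronglyMeasurable hX.aemeasurable]
  exact h s hs

set_option maxHeartbeats 1000000 in
lemma MAR_arm {μ : Measure Ω} [IsFiniteMeasure μ] {X : Ω → 𝒳} (hX : Measurable X)
    {E : Set Ω} (hE : MeasurableSet E) {R0 Y0 : Ω → ℝ}
    (hR0 : Measurable R0) (hR0bin : ∀ ω, R0 ω = 0 ∨ R0 ω = 1)
    (hY0 : Measurable Y0) (hY0int : Integrable Y0 μ)
    {γ mf : 𝒳 → ℝ}
    (hγ : IsCondExpOn μ X E R0 γ)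
    (hγol : ∀ᵐ ω ∂μ, 0 < γ (X ω) ∧ γ (X ω) < 1)
    (hmf : IsCondExpOn μ X E Y0 mf)
    (hCI : IsCondExpOn μ X E (fun ω => Y0 ω * R0 ω) (fun x => mf x * γ x))
    {m : 𝒳 → ℝ} (hm : IsCondExpOn μ X (E ∩ {ω | R0 ω = 1}) Y0 m) :
    m =ᵐ[Measure.map X (μ.restrict E)] mf := by
  have hR1 : MeasurableSet {ω | R0 ω = 1} := hR0 (measurableSet_singleton 1)
  have hγm : Measurable γ := hγ.1
  have hmm : Measurable m := hm.1
  have hmfm : Measurable mf := hmf.1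
  have hR0bd : ∃ C : ℝ, ∀ ω, ‖R0 ω‖ ≤ C :=
    ⟨1, fun ω => by rcases hR0bin ω with h | h <;> simp [h]⟩
  set ν := μ.restrict E with hν
  set κ := Measure.map X ν with hκ
  set ρ := Measure.map X (μ.restrict (E ∩ {ω | R0 ω = 1})) with hρ
  haveI : IsFiniteMeasure κ :=
    ⟨by rw [hκ, Measure.map_apply hX MeasurableSet.univ, Set.preimage_univ]
        exact measure_lt_top ν _⟩
  -- a.e. facts on κ
  have hγκ : ∀ᵐ x ∂κ, 0 < γ x ∧ γ x < 1 := by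
    refine (ae_map_iff hX.aemeasurable ?_).2 (ae_restrict_of_ae hγol)
    exact (measurableSet_lt measurable_const hγm).inter (measurableSet_lt hγm measurable_const)
  have hγnn : ∀ᵐ x ∂κ, 0 ≤ γ x := hγκ.mono fun x hx => hx.1.le
  have hγint : Integrable γ κ := by
    refine Integrable.mono' (integrable_const (1 : ℝ)) hγm.aestronglyMeasurable ?_
    exact hγκ.mono fun x hx => by rw [Real.norm_eq_abs, abs_of_nonneg hx.1.le]; exact hx.2.le
  -- set-shuffling identity
  have hset : ∀ s : Set 𝒳, E ∩ {ω | R0 ω = 1} ∩ X ⁻¹' s = E ∩ X ⁻¹' s ∩ {ω | R0 ω = 1} := by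
    intro s
    ext ω
    simp only [Set.mem_inter_iff, Set.mem_setOf_eq, Set.mem_preimage]
    tauto
  -- for all s, ∫_s γ dκ = (ρ s).toReal
  have hγκint : ∀ s : Set 𝒳, MeasurableSet s → ∫ x in s, γ x ∂κ = (ρ s).toReal := by
    intro s hs
    rw [hκ, setIntegral_map hs hγm.aestronglyMeasurable hX.aemeasurable, hν,
      ← restrict_inter_preimage μ hX E hs, ← hγ.2 s hs,
      setIntegral_binary μ hR0 hR0bin _, hρ, Measure.map_apply hX hs,
      Measure.restrict_apply (hX hs)]
    have heq : E ∩ X ⁻¹' s ∩ {ω | R0 ω = 1} = X ⁻¹' s ∩ (E ∩ {ω | R0 ω = 1}) := by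
      ext ω
      simp only [Set.mem_inter_iff, Set.mem_setOf_eq, Set.mem_preimage]
      tauto
    rw [heq]
  -- ρ = κ.withDensity (toNNReal ∘ γ)
  have hρw : ρ = κ.withDensity (fun x => ((γ x).toNNReal : ENNReal)) := by
    refine Measure.ext fun s hs => ?_
    have hfin : ρ s ≠ ⊤ := by
      rw [hρ, Measure.map_apply hX hs]
      exact (measure_lt_top _ _).ne
    have hwd : κ.withDensity (fun x => ((γ x).toNNReal : ENNReal)) s
        = ENNReal.ofReal (∫ x in s, γ x ∂κ) := by
      rw [withDensity_apply _ hs,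
        ofReal_integral_eq_lintegral_ofReal hγint.integrableOn (ae_restrict_of_ae hγnn)]
      congr 1
    rw [hwd, hγκint s hs, ENNReal.ofReal_toReal hfin]
  -- m is ρ-integrable
  have hmρ : Integrable m ρ := by
    rw [hρ]
    exact (integrable_map_measure hmm.aestronglyMeasurable hX.aemeasurable).2
      (integrableOn_of_isCondExpOn hX hY0int hm)
  -- γ·m is κ-integrable
  have hγmint : Integrable (fun x => γ x * m x) κ := by
    have hmρ' : Integrable m (κ.withDensity fun x => ((γ x).toNNReal : ENNReal)) := by
      rw [← hρw]; exact hmρ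
    have h1 := (integrable_withDensity_iff_integrable_smul₀
      (f := fun x => (γ x).toNNReal)
      ((measurable_real_toNNReal.comp hγm : Measurable fun x => (γ x).toNNReal)).aemeasurable
      (g := m)).1 hmρ'
    refine h1.congr (hγnn.mono fun x hx => ?_)
    simp [NNReal.smul_def, Real.coe_toNNReal _ hx]
  -- mf·γ is κ-integrable
  have hmfγint : Integrable (fun x => mf x * γ x) κ := by
    rw [hκ]
    refine (integrable_map_measure (hmfm.mul hγm).aestronglyMeasurable hX.aemeasurable).2 ?_
    refine integrableOn_of_isCondExpOn hX ?_ hCI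
    exact (hY0int.bdd_mul hR0.aestronglyMeasurable (Filter.Eventually.of_forall hR0bd.choose_spec)).congr
      (Filter.Eventually.of_forall fun ω => mul_comm _ _)
  -- key set-integral identity on κ
  have hkey : ∀ s : Set 𝒳, MeasurableSet s →
      ∫ x in s, (γ x * m x - mf x * γ x) ∂κ = 0 := by
    intro s hs
    have lhs1 : ∫ x in s, γ x * m x ∂κ = ∫ x in s, m x ∂ρ := by
      rw [hρw, setIntegral_withDensity_eq_setIntegral_smul₀
        (f := fun x => (γ x).toNNReal)
        ((measurable_real_toNNReal.comp hγm : Measurable fun x => (γ x).toNNReal)).aemeasurable.restrict m hs]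
      refine integral_congr_ae ((ae_restrict_of_ae hγnn).mono fun x hx => ?_)
      simp [NNReal.smul_def, Real.coe_toNNReal _ hx]
    have lhs2 : ∫ x in s, m x ∂ρ = ∫ ω in E ∩ {ω | R0 ω = 1} ∩ X ⁻¹' s, m (X ω) ∂μ := by
      rw [hρ, setIntegral_map hs hmm.aestronglyMeasurable hX.aemeasurable,
        ← restrict_inter_preimage μ hX _ hs]
    -- ∫_{E∩R0=1∩X⁻¹s} m∘X = ∫_{E∩R0=1∩X⁻¹s} Y0 = ∫_{E∩X⁻¹s} Y0·R0 = ∫_{E∩X⁻¹s} (mf·γ)∘X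
    have lhs3 : ∫ ω in E ∩ {ω | R0 ω = 1} ∩ X ⁻¹' s, m (X ω) ∂μ
        = ∫ ω in E ∩ X ⁻¹' s, Y0 ω * R0 ω ∂μ := by
      rw [← hm.2 s hs]
      have hind : ∀ ω, Y0 ω * R0 ω = Set.indicator {ω | R0 ω = 1} Y0 ω := by
        intro ω
        rcases hR0bin ω with h | h <;> simp [Set.indicator_apply, h]
      calc ∫ ω in E ∩ {ω | R0 ω = 1} ∩ X ⁻¹' s, Y0 ω ∂μ
          = ∫ ω in E ∩ X ⁻¹' s ∩ {ω | R0 ω = 1}, Y0 ω ∂μ := by rw [hset s]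
        _ = ∫ ω in E ∩ X ⁻¹' s, Set.indicator {ω | R0 ω = 1} Y0 ω ∂μ :=
            (setIntegral_indicator hR1).symm
        _ = ∫ ω in E ∩ X ⁻¹' s, Y0 ω * R0 ω ∂μ :=
            integral_congr_ae (Filter.Eventually.of_forall fun ω => (hind ω).symm)
    have lhs4 : ∫ ω in E ∩ X ⁻¹' s, Y0 ω * R0 ω ∂μ = ∫ x in s, mf x * γ x ∂κ := by
      rw [hCI.2 s hs, hκ, setIntegral_map (f := fun x => mf x * γ x) hs (hmfm.mul hγm).aestronglyMeasurable
        hX.aemeasurable, hν, ← restrict_inter_preimage μ hX E hs]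
    rw [integral_sub hγmint.integrableOn hmfγint.integrableOn, lhs1, lhs2, lhs3, lhs4, sub_self]
  -- conclude a.e. equality
  have hdiff : (fun x => γ x * m x - mf x * γ x) =ᵐ[κ] 0 := by
    refine ae_eq_zero_of_forall_setIntegral_eq_of_sigmaFinite
      (fun s hs _ => (hγmint.sub hmfγint).integrableOn) (fun s hs _ => hkey s hs)
  refine (hdiff.and hγκ).mono fun x hx => ?_
  obtain ⟨h0, h1, _⟩ := hx
  have : γ x * (m x - mf x) = 0 := by
    rw [mul_sub]
    calc γ x * m x - γ x * mf x = γ x * m x - mf x * γ x := by ring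
      _ = 0 := h0
  rcases mul_eq_zero.1 this with h | h
  · exact absurd h (ne_of_gt h1)
  · exact sub_eq_zero.1 h


end ATTaux

open ATTaux in
set_option maxHeartbeats 1000000 in
/-- **Identification of the ATT under outcome-independent MAR.** Under conditional
parallel trends, consistency, positivity, and MAR of the pre-treatment outcome
(`Y0 ⊥ R0 ∣ (X, A)`, `P(R0=1 ∣ X, A) ∈ (0,1)` a.s.), the ATT
`θ = E[Y1(1) - Y1(0) ∣ A = 1]` equals
`E[(A/E[A])·(Y1 - E[Y0 ∣ X, A=1, R0=1] - E[Y1 ∣ X, A=0] + E[Y0 ∣ X, A=0, R0=1])]`. -/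
theorem att_identification_outcome_independent_MAR
    {Ω 𝒳 : Type*} [MeasurableSpace Ω] [MeasurableSpace 𝒳]
    (μ : Measure Ω) [IsProbabilityMeasure μ]
    (X : Ω → 𝒳) (A R0 Y0 Y10 Y11 Y1 : Ω → ℝ)
    (hX : Measurable X) (hA : Measurable A) (hR0 : Measurable R0)
    (hY0 : Measurable Y0) (hY10 : Measurable Y10) (hY11 : Measurable Y11)
    (hAbin : ∀ ω, A ω = 0 ∨ A ω = 1) (hR0bin : ∀ ω, R0 ω = 0 ∨ R0 ω = 1)
    (hY0int : Integrable Y0 μ) (hY10int : Integrable Y10 μ) (hY11int : Integrable Y11 μ)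
    -- consistency: observed outcome equals the potential outcome of the assigned arm
    (hcons : ∀ ω, Y1 ω = A ω * Y11 ω + (1 - A ω) * Y10 ω)
    -- positivity: P(A = 1) > 0 and π(X) ∈ (0, 1) a.s.
    (π : 𝒳 → ℝ)
    (hπ : IsCondExpOn μ X Set.univ A π)
    (hA1pos : 0 < μ {ω | A ω = 1})
    (hπ01 : ∀ᵐ ω ∂μ, 0 < π (X ω) ∧ π (X ω) < 1)
    -- conditional parallel trends: a common version mPT of
    -- E[Y1(0) - Y0 ∣ X, A = 1] and E[Y1(0) - Y0 ∣ X, A = 0]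
    (mPT : 𝒳 → ℝ)
    (hPT1 : IsCondExpOn μ X {ω | A ω = 1} (fun ω => Y10 ω - Y0 ω) mPT)
    (hPT0 : IsCondExpOn μ X {ω | A ω = 0} (fun ω => Y10 ω - Y0 ω) mPT)
    -- MAR: γa is a version of P(R0 = 1 ∣ X, A = a), with weak overlap,
    -- and Y0 ⊥ R0 ∣ (X, A) as the conditional product rule, where
    -- mfa is a version of E[Y0 ∣ X, A = a]
    (γ1 γ0 mf1 mf0 : 𝒳 → ℝ)
    (hγ1 : IsCondExpOn μ X {ω | A ω = 1} R0 γ1)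
    (hγ0 : IsCondExpOn μ X {ω | A ω = 0} R0 γ0)
    (hγ1ol : ∀ᵐ ω ∂μ, 0 < γ1 (X ω) ∧ γ1 (X ω) < 1)
    (hγ0ol : ∀ᵐ ω ∂μ, 0 < γ0 (X ω) ∧ γ0 (X ω) < 1)
    (hmf1 : IsCondExpOn μ X {ω | A ω = 1} Y0 mf1)
    (hmf0 : IsCondExpOn μ X {ω | A ω = 0} Y0 mf0)
    (hCI1 : IsCondExpOn μ X {ω | A ω = 1} (fun ω => Y0 ω * R0 ω)
      (fun x => mf1 x * γ1 x))
    (hCI0 : IsCondExpOn μ X {ω | A ω = 0} (fun ω => Y0 ω * R0 ω)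
      (fun x => mf0 x * γ0 x))
    -- the observed-data regression functions
    (m01 m00 m10 : 𝒳 → ℝ)
    -- m01 is a version of E[Y0 ∣ X, A = 1, R0 = 1]
    (hm01 : IsCondExpOn μ X ({ω | A ω = 1} ∩ {ω | R0 ω = 1}) Y0 m01)
    -- m00 is a version of E[Y0 ∣ X, A = 0, R0 = 1]
    (hm00 : IsCondExpOn μ X ({ω | A ω = 0} ∩ {ω | R0 ω = 1}) Y0 m00)
    -- m10 is a version of E[Y1 ∣ X, A = 0]
    (hm10 : IsCondExpOn μ X {ω | A ω = 0} Y1 m10)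
    (hint : Integrable (fun ω =>
      A ω * (Y1 ω - m01 (X ω) - m10 (X ω) + m00 (X ω))) μ) :
    (∫ ω in {ω | A ω = 1}, (Y11 ω - Y10 ω) ∂μ) / (μ {ω | A ω = 1}).toReal
      = ∫ ω, A ω / (∫ ω', A ω' ∂μ)
          * (Y1 ω - m01 (X ω) - m10 (X ω) + m00 (X ω)) ∂μ := by
  have hA1 : MeasurableSet {ω | A ω = 1} := hA (measurableSet_singleton 1)
  have hA0 : MeasurableSet {ω | A ω = 0} := hA (measurableSet_singleton 0)
  have hπm : Measurable π := hπ.1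
  have hmPTm : Measurable mPT := hPT1.1
  have hm01m : Measurable m01 := hm01.1
  have hm00m : Measurable m00 := hm00.1
  have hm10m : Measurable m10 := hm10.1
  have hmf1m : Measurable mf1 := hmf1.1
  have hmf0m : Measurable mf0 := hmf0.1
  have hAbd : ∃ C : ℝ, ∀ ω, ‖A ω‖ ≤ C :=
    ⟨1, fun ω => by rcases hAbin ω with h | h <;> simp [h]⟩
  have hAint : Integrable A μ := by
    refine Integrable.mono' (integrable_const (1 : ℝ)) hA.aestronglyMeasurable ?_
    exact Filter.Eventually.of_forall fun ω => by
      rcases hAbin ω with h | h <;> simp [h]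
  have hY1int : Integrable Y1 μ := by
    have h1 : Integrable (fun ω => A ω * Y11 ω) μ :=
      hY11int.bdd_mul hA.aestronglyMeasurable (Filter.Eventually.of_forall hAbd.choose_spec)
    have h2 : Integrable (fun ω => (1 - A ω) * Y10 ω) μ :=
      hY10int.bdd_mul (measurable_const.sub hA).aestronglyMeasurable
        (Filter.Eventually.of_forall (fun ω => by rcases hAbin ω with h | h <;> simp [h] : ∀ ω, ‖1 - A ω‖ ≤ 1))
    exact (h1.add h2).congr (Filter.Eventually.of_forall fun ω => (hcons ω).symm)
  have hπint : Integrable (fun ω => π (X ω)) μ := by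
    have h := integrableOn_of_isCondExpOn hX hAint hπ
    rwa [integrableOn_univ] at h
  -- transfer of null sets from each arm to the whole space
  have hπeq : ∀ N : Set 𝒳, MeasurableSet N →
      (μ ({ω | A ω = 1} ∩ X ⁻¹' N)).toReal = ∫ ω in X ⁻¹' N, π (X ω) ∂μ := by
    intro N hN
    have h := hπ.2 N hN
    rw [Set.univ_inter] at h
    rw [← h, setIntegral_binary μ hA hAbin, Set.inter_comm]
  have hπeq0 : ∀ N : Set 𝒳, MeasurableSet N →
      (μ ({ω | A ω = 0} ∩ X ⁻¹' N)).toReal = ∫ ω in X ⁻¹' N, (1 - π (X ω)) ∂μ := by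
    intro N hN
    have hB : ∀ ω, (1 : ℝ) - A ω = 0 ∨ (1 : ℝ) - A ω = 1 := fun ω => by
      rcases hAbin ω with h | h
      · right; rw [h]; ring
      · left; rw [h]; ring
    have h1 : ∫ ω in X ⁻¹' N, (1 - A ω) ∂μ
        = (μ (X ⁻¹' N ∩ {ω | (1 : ℝ) - A ω = 1})).toReal :=
      setIntegral_binary μ (measurable_const.sub hA) hB _
    have hseteq : {ω | (1 : ℝ) - A ω = 1} = {ω | A ω = 0} := by
      ext ω
      simp only [Set.mem_setOf_eq]
      constructor <;> intro h <;> linarith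
    have h2 : ∫ ω in X ⁻¹' N, (1 - A ω) ∂μ = ∫ ω in X ⁻¹' N, (1 - π (X ω)) ∂μ := by
      rw [integral_sub (integrable_const (1 : ℝ)).integrableOn hAint.integrableOn,
        integral_sub (integrable_const (1 : ℝ)).integrableOn hπint.integrableOn]
      have h := hπ.2 N hN
      rw [Set.univ_inter] at h
      rw [h]
    rw [← h2, h1, hseteq, Set.inter_comm]
  have mk_transfer : ∀ (g : Ω → ℝ), Integrable g μ →
      (∀ᵐ ω ∂μ, 0 < g ω) →
      ∀ N : Set 𝒳, MeasurableSet N → (∫ ω in X ⁻¹' N, g ω ∂μ = 0) → μ (X ⁻¹' N) = 0 := by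
    intro g hgint hgpos N hN hz
    have hnn : 0 ≤ᵐ[μ.restrict (X ⁻¹' N)] g :=
      ae_restrict_of_ae (hgpos.mono fun ω h => h.le)
    have hae0 : g =ᵐ[μ.restrict (X ⁻¹' N)] 0 :=
      (setIntegral_eq_zero_iff_of_nonneg_ae hnn hgint.integrableOn).1 hz
    have hpos : ∀ᵐ ω ∂μ.restrict (X ⁻¹' N), 0 < g ω := ae_restrict_of_ae hgpos
    have hfalse : ∀ᵐ ω ∂μ.restrict (X ⁻¹' N), False := by
      filter_upwards [hae0, hpos] with ω h1 h2
      rw [Pi.zero_apply] at h1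
      exact absurd h1 (ne_of_gt h2)
    have hres : μ.restrict (X ⁻¹' N) = 0 :=
      ae_eq_bot.1 (Filter.eventually_false_iff_eq_bot.1 hfalse)
    calc μ (X ⁻¹' N) = (μ.restrict (X ⁻¹' N)) Set.univ := (Measure.restrict_apply_univ _).symm
      _ = 0 := by rw [hres]; rfl
  have transfer1 : ∀ N : Set 𝒳, MeasurableSet N →
      μ ({ω | A ω = 1} ∩ X ⁻¹' N) = 0 → μ (X ⁻¹' N) = 0 := by
    intro N hN h0
    refine mk_transfer (fun ω => π (X ω)) hπint (hπ01.mono fun ω h => h.1) N hN ?_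
    rw [← hπeq N hN, h0, ENNReal.toReal_zero]
  have transfer0 : ∀ N : Set 𝒳, MeasurableSet N →
      μ ({ω | A ω = 0} ∩ X ⁻¹' N) = 0 → μ (X ⁻¹' N) = 0 := by
    intro N hN h0
    refine mk_transfer (fun ω => 1 - π (X ω))
      ((integrable_const (1 : ℝ)).sub hπint)
      (hπ01.mono fun ω h => by change (0:ℝ) < 1 - π (X ω); linarith [h.2]) N hN ?_
    rw [← hπeq0 N hN, h0, ENNReal.toReal_zero]
  -- within-arm MAR identifications
  have hae1 : m01 =ᵐ[Measure.map X (μ.restrict {ω | A ω = 1})] mf1 :=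
    MAR_arm hX hA1 hR0 hR0bin hY0 hY0int hγ1 hγ1ol hmf1 hCI1 hm01
  have hae0' : m00 =ᵐ[Measure.map X (μ.restrict {ω | A ω = 0})] mf0 :=
    MAR_arm hX hA0 hR0 hR0bin hY0 hY0int hγ0 hγ0ol hmf0 hCI0 hm00
  -- control-arm regression identity
  have i10 : IntegrableOn (fun ω => m10 (X ω)) {ω | A ω = 0} μ :=
    integrableOn_of_isCondExpOn hX hY1int hm10
  have imf0 : IntegrableOn (fun ω => mf0 (X ω)) {ω | A ω = 0} μ :=
    integrableOn_of_isCondExpOn hX hY0int hmf0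
  have imPT0 : IntegrableOn (fun ω => mPT (X ω)) {ω | A ω = 0} μ :=
    integrableOn_of_isCondExpOn hX (hY10int.sub hY0int) hPT0
  have hg3 : (fun x => m10 x - (mf0 x + mPT x))
      =ᵐ[Measure.map X (μ.restrict {ω | A ω = 0})] 0 := by
    refine ae_map_zero_of_forall_setIntegral hX (hm10m.sub (hmf0m.add hmPTm)) ?_ ?_
    · exact i10.sub (imf0.add imPT0)
    · intro s hs
      rw [← restrict_inter_preimage μ hX _ hs]
      have hS : MeasurableSet ({ω | A ω = 0} ∩ X ⁻¹' s) := hA0.inter (hX hs)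
      have i10' : IntegrableOn (fun ω => m10 (X ω)) ({ω | A ω = 0} ∩ X ⁻¹' s) μ :=
        i10.mono_set Set.inter_subset_left
      have imf0' : IntegrableOn (fun ω => mf0 (X ω)) ({ω | A ω = 0} ∩ X ⁻¹' s) μ :=
        imf0.mono_set Set.inter_subset_left
      have imPT0' : IntegrableOn (fun ω => mPT (X ω)) ({ω | A ω = 0} ∩ X ⁻¹' s) μ :=
        imPT0.mono_set Set.inter_subset_left
      have isum : IntegrableOn (fun ω => mf0 (X ω) + mPT (X ω))
          ({ω | A ω = 0} ∩ X ⁻¹' s) μ := imf0'.add imPT0'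
      have esplit : ∫ ω in {ω | A ω = 0} ∩ X ⁻¹' s,
            (m10 (X ω) - (mf0 (X ω) + mPT (X ω))) ∂μ
          = ∫ ω in {ω | A ω = 0} ∩ X ⁻¹' s, m10 (X ω) ∂μ
            - (∫ ω in {ω | A ω = 0} ∩ X ⁻¹' s, mf0 (X ω) ∂μ
              + ∫ ω in {ω | A ω = 0} ∩ X ⁻¹' s, mPT (X ω) ∂μ) := by
        rw [integral_sub i10' isum, integral_add imf0' imPT0']
      have e10 : ∫ ω in {ω | A ω = 0} ∩ X ⁻¹' s, m10 (X ω) ∂μ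
          = ∫ ω in {ω | A ω = 0} ∩ X ⁻¹' s, Y10 ω ∂μ := by
        rw [← hm10.2 s hs]
        refine setIntegral_congr_fun hS fun ω hω => ?_
        have h0 : A ω = 0 := hω.1
        rw [hcons ω, h0]
        ring
      have eY10 : ∫ ω in {ω | A ω = 0} ∩ X ⁻¹' s, Y10 ω ∂μ
          = ∫ ω in {ω | A ω = 0} ∩ X ⁻¹' s, (Y10 ω - Y0 ω) ∂μ
            + ∫ ω in {ω | A ω = 0} ∩ X ⁻¹' s, Y0 ω ∂μ := by
        have hsub : IntegrableOn (fun ω => Y10 ω - Y0 ω) ({ω | A ω = 0} ∩ X ⁻¹' s) μ :=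
          (hY10int.sub hY0int).integrableOn
        rw [← integral_add hsub hY0int.integrableOn]
        exact integral_congr_ae (Filter.Eventually.of_forall fun ω => by ring)
      show ∫ ω in {ω | A ω = 0} ∩ X ⁻¹' s, (m10 (X ω) - (mf0 (X ω) + mPT (X ω))) ∂μ = 0
      rw [esplit, e10, eY10, hPT0.2 s hs, hmf0.2 s hs]
      ring
  -- move everything to a.e. statements w.r.t. the pushforward of μ
  have toLam1 : ∀ {f g : 𝒳 → ℝ}, Measurable f → Measurable g →
      f =ᵐ[Measure.map X (μ.restrict {ω | A ω = 1})] g →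
      ∀ᵐ x ∂(Measure.map X μ), f x = g x := by
    intro f g hf hg hfg
    have hNmeas : MeasurableSet {x | ¬ f x = g x} := (measurableSet_eq_fun hf hg).compl
    have h0 : (Measure.map X (μ.restrict {ω | A ω = 1})) {x | ¬ f x = g x} = 0 := hfg
    rw [Measure.map_apply hX hNmeas, Measure.restrict_apply (hX hNmeas)] at h0
    rw [ae_iff, Measure.map_apply hX hNmeas]
    exact transfer1 _ hNmeas (by rwa [Set.inter_comm] at h0)
  have toLam0 : ∀ {f g : 𝒳 → ℝ}, Measurable f → Measurable g →
      f =ᵐ[Measure.map X (μ.restrict {ω | A ω = 0})] g →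
      ∀ᵐ x ∂(Measure.map X μ), f x = g x := by
    intro f g hf hg hfg
    have hNmeas : MeasurableSet {x | ¬ f x = g x} := (measurableSet_eq_fun hf hg).compl
    have h0 : (Measure.map X (μ.restrict {ω | A ω = 0})) {x | ¬ f x = g x} = 0 := hfg
    rw [Measure.map_apply hX hNmeas, Measure.restrict_apply (hX hNmeas)] at h0
    rw [ae_iff, Measure.map_apply hX hNmeas]
    exact transfer0 _ hNmeas (by rwa [Set.inter_comm] at h0)
  have hLam1 : ∀ᵐ x ∂(Measure.map X μ), m01 x = mf1 x := toLam1 hm01m hmf1m hae1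
  have hLam0 : ∀ᵐ x ∂(Measure.map X μ), m00 x = mf0 x := toLam0 hm00m hmf0m hae0'
  have hLam3 : ∀ᵐ x ∂(Measure.map X μ), m10 x - (mf0 x + mPT x) = 0 :=
    toLam0 (hm10m.sub (hmf0m.add hmPTm)) measurable_const hg3
  have hDLam : ∀ᵐ x ∂(Measure.map X μ), mf1 x + mPT x = m01 x + m10 x - m00 x := by
    filter_upwards [hLam1, hLam0, hLam3] with x h1 h2 h3
    linarith
  have hDmeas : MeasurableSet {x | mf1 x + mPT x = m01 x + m10 x - m00 x} :=
    measurableSet_eq_fun (hmf1m.add hmPTm) ((hm01m.add hm10m).sub hm00m)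
  have hDω : ∀ᵐ ω ∂μ, mf1 (X ω) + mPT (X ω) = m01 (X ω) + m10 (X ω) - m00 (X ω) :=
    (ae_map_iff hX.aemeasurable hDmeas).1 hDLam
  -- final assembly
  set c := (μ {ω | A ω = 1}).toReal with hc
  have hcpos : 0 < c := ENNReal.toReal_pos (ne_of_gt hA1pos) (measure_ne_top μ _)
  have hEA : ∫ ω, A ω ∂μ = c := by
    have h := setIntegral_binary μ hA hAbin Set.univ
    rwa [setIntegral_univ, Set.univ_inter] at h
  have hRHS1 : ∫ ω, A ω / (∫ ω', A ω' ∂μ)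
        * (Y1 ω - m01 (X ω) - m10 (X ω) + m00 (X ω)) ∂μ
      = c⁻¹ * ∫ ω, A ω * (Y1 ω - m01 (X ω) - m10 (X ω) + m00 (X ω)) ∂μ := by
    rw [hEA, ← integral_const_mul]
    exact integral_congr_ae (Filter.Eventually.of_forall fun ω => by ring)
  have hvanish : ∀ ω, ω ∉ {ω | A ω = 1} →
      A ω * (Y1 ω - m01 (X ω) - m10 (X ω) + m00 (X ω)) = 0 := by
    intro ω hω
    rcases hAbin ω with h | h
    · rw [h]; ring
    · exact absurd h hω
  have hRHS2 : ∫ ω, A ω * (Y1 ω - m01 (X ω) - m10 (X ω) + m00 (X ω)) ∂μ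
      = ∫ ω in {ω | A ω = 1}, A ω * (Y1 ω - m01 (X ω) - m10 (X ω) + m00 (X ω)) ∂μ :=
    (setIntegral_eq_integral_of_forall_compl_eq_zero hvanish).symm
  have hEqOn : Set.EqOn
      (fun ω => A ω * (Y1 ω - m01 (X ω) - m10 (X ω) + m00 (X ω)))
      (fun ω => Y11 ω - (m01 (X ω) + m10 (X ω) - m00 (X ω))) {ω | A ω = 1} := by
    intro ω hω
    have h1 : A ω = 1 := hω
    simp only
    rw [hcons ω, h1]
    ring
  have hRHS3 : ∫ ω in {ω | A ω = 1}, A ω * (Y1 ω - m01 (X ω) - m10 (X ω) + m00 (X ω)) ∂μ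
      = ∫ ω in {ω | A ω = 1}, (Y11 ω - (m01 (X ω) + m10 (X ω) - m00 (X ω))) ∂μ :=
    setIntegral_congr_fun hA1 hEqOn
  have hstuffIntOn : IntegrableOn
      (fun ω => Y11 ω - (m01 (X ω) + m10 (X ω) - m00 (X ω))) {ω | A ω = 1} μ :=
    IntegrableOn.congr_fun hint.integrableOn hEqOn hA1
  have hMint : IntegrableOn (fun ω => m01 (X ω) + m10 (X ω) - m00 (X ω)) {ω | A ω = 1} μ := by
    have h := hY11int.integrableOn.sub hstuffIntOn
    exact IntegrableOn.congr_fun h (fun ω _ => by simp only [Pi.sub_apply]; ring) hA1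
  have hsplit : ∫ ω in {ω | A ω = 1}, (Y11 ω - (m01 (X ω) + m10 (X ω) - m00 (X ω))) ∂μ
      = ∫ ω in {ω | A ω = 1}, Y11 ω ∂μ
        - ∫ ω in {ω | A ω = 1}, (m01 (X ω) + m10 (X ω) - m00 (X ω)) ∂μ :=
    integral_sub hY11int.integrableOn hMint
  have imf1 : IntegrableOn (fun ω => mf1 (X ω)) {ω | A ω = 1} μ :=
    integrableOn_of_isCondExpOn hX hY0int hmf1
  have imPT1 : IntegrableOn (fun ω => mPT (X ω)) {ω | A ω = 1} μ :=
    integrableOn_of_isCondExpOn hX (hY10int.sub hY0int) hPT1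
  have hMchain : ∫ ω in {ω | A ω = 1}, (m01 (X ω) + m10 (X ω) - m00 (X ω)) ∂μ
      = ∫ ω in {ω | A ω = 1}, Y10 ω ∂μ := by
    have hcongr : ∫ ω in {ω | A ω = 1}, (m01 (X ω) + m10 (X ω) - m00 (X ω)) ∂μ
        = ∫ ω in {ω | A ω = 1}, (mf1 (X ω) + mPT (X ω)) ∂μ :=
      (integral_congr_ae (ae_restrict_of_ae hDω)).symm
    rw [hcongr, integral_add imf1 imPT1]
    have s3 : ∫ ω in {ω | A ω = 1}, mf1 (X ω) ∂μ = ∫ ω in {ω | A ω = 1}, Y0 ω ∂μ := by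
      have h := hmf1.2 Set.univ MeasurableSet.univ
      rw [Set.preimage_univ, Set.inter_univ] at h
      exact h.symm
    have s4 : ∫ ω in {ω | A ω = 1}, mPT (X ω) ∂μ
        = ∫ ω in {ω | A ω = 1}, Y10 ω ∂μ - ∫ ω in {ω | A ω = 1}, Y0 ω ∂μ := by
      have h := hPT1.2 Set.univ MeasurableSet.univ
      rw [Set.preimage_univ, Set.inter_univ] at h
      rw [← h, integral_sub hY10int.integrableOn hY0int.integrableOn]
    rw [s3, s4]
    ring
  have hLHSsub : ∫ ω in {ω | A ω = 1}, (Y11 ω - Y10 ω) ∂μ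
      = ∫ ω in {ω | A ω = 1}, Y11 ω ∂μ - ∫ ω in {ω | A ω = 1}, Y10 ω ∂μ :=
    integral_sub hY11int.integrableOn hY10int.integrableOn
  rw [hRHS1, hRHS2, hRHS3, hsplit, hMchain, hLHSsub, div_eq_inv_mul]
end

section
/- Under the outcome-dependent MAR assumption Y0 ⊥ R0 | (X, Y1, A) with γ(X,Y1,A) = P(R0=1 | X, Y1, A) > 0 a.s., the nested regression η0(x,a) := E[ E[Y0 | X=x, Y1, A=a, R0=1] | X=x, A=a ] equals E[Y0 | X=x, A=a] almost surely. -/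
open MeasureTheory

set_option maxHeartbeats 2000000 in
/-- **The nested regression recovers the conditional mean under outcome-dependent MAR.**
Under `Y0 ⊥ R0 ∣ (X, Y1, A)` with `γ(X, Y1, A) = P(R0 = 1 ∣ X, Y1, A) > 0` a.s.,
the nested regression `η0(x, a) = E[ E[Y0 ∣ X = x, Y1, A = a, R0 = 1] ∣ X = x, A = a]`
equals `E[Y0 ∣ X = x, A = a]` almost surely. -/
theorem nested_regression_eq_conditional_mean
    {Ω 𝒳 : Type*} [MeasurableSpace Ω] [MeasurableSpace 𝒳]
    (μ : Measure Ω) [IsProbabilityMeasure μ]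
    (X : Ω → 𝒳) (A R0 Y0 Y1 : Ω → ℝ)
    (hX : Measurable X) (hA : Measurable A) (hR0 : Measurable R0)
    (hY0 : Measurable Y0) (hY1 : Measurable Y1)
    (hAbin : ∀ ω, A ω = 0 ∨ A ω = 1) (hR0bin : ∀ ω, R0 ω = 0 ∨ R0 ω = 1)
    (hY0int : Integrable Y0 μ) (hY1int : Integrable Y1 μ)
    (a : ℝ) (ha : a = 0 ∨ a = 1)
    (mIn γ : 𝒳 × ℝ → ℝ) (η : 𝒳 → ℝ)
    -- mIn is a version of the inner regression E[Y0 ∣ X, Y1, A = a, R0 = 1]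
    (hmIn : IsCondExpOn μ (fun ω => (X ω, Y1 ω)) ({ω | A ω = a} ∩ {ω | R0 ω = 1}) Y0 mIn)
    -- γ is a version of P(R0 = 1 ∣ X, Y1, A = a)
    (hγ : IsCondExpOn μ (fun ω => (X ω, Y1 ω)) {ω | A ω = a} R0 γ)
    -- weak overlap: γ(X, Y1, A) > 0 a.s.
    (hγpos : ∀ᵐ ω ∂μ, 0 < γ (X ω, Y1 ω))
    -- outcome-dependent MAR: Y0 ⊥ R0 ∣ (X, Y1, A), as the product rule
    -- E[Y0·R0 ∣ X, Y1, A = a] = E[Y0 ∣ X, Y1, A = a]·γ(X, Y1)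
    (mFull : 𝒳 × ℝ → ℝ)
    (hmFull : IsCondExpOn μ (fun ω => (X ω, Y1 ω)) {ω | A ω = a} Y0 mFull)
    (hCI : IsCondExpOn μ (fun ω => (X ω, Y1 ω)) {ω | A ω = a}
      (fun ω => Y0 ω * R0 ω) (fun w => mFull w * γ w))
    -- η is the nested regression: E[mIn(X, Y1) ∣ X, A = a]
    (hη : IsCondExpOn μ X {ω | A ω = a} (fun ω => mIn (X ω, Y1 ω)) η)
    (hmInint : Integrable (fun ω => mIn (X ω, Y1 ω)) μ) :
    -- conclusion: η is a version of E[Y0 ∣ X, A = a]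
    IsCondExpOn μ X {ω | A ω = a} Y0 η := by
  classical
  set Z : Ω → 𝒳 × ℝ := fun ω => (X ω, Y1 ω) with hZdef
  have hZ : Measurable Z := hX.prodMk hY1
  set E : Set Ω := {ω | A ω = a} with hEdef
  have hEm : MeasurableSet E := hA (measurableSet_singleton a)
  set R : Set Ω := {ω | R0 ω = 1} with hRdef
  have hRm : MeasurableSet R := hR0 (measurableSet_singleton 1)
  set F : Set Ω := E ∩ R with hFdef
  have hFm : MeasurableSet F := hEm.inter hRm
  set ρ : Measure (𝒳 × ℝ) := Measure.map Z (μ.restrict E) with hρdef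
  set ρ1 : Measure (𝒳 × ℝ) := Measure.map Z (μ.restrict F) with hρ1def
  haveI hfinE : IsFiniteMeasure (μ.restrict E) :=
    ⟨by rw [Measure.restrict_apply_univ]; exact measure_lt_top μ E⟩
  haveI hfinF : IsFiniteMeasure (μ.restrict F) :=
    ⟨by rw [Measure.restrict_apply_univ]; exact measure_lt_top μ F⟩
  haveI : IsFiniteMeasure ρ := Measure.isFiniteMeasure_map _ _
  haveI : IsFiniteMeasure ρ1 := Measure.isFiniteMeasure_map _ _
  have hγm : Measurable γ := hγ.1
  have hmInm : Measurable mIn := hmIn.1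
  have hmFullm : Measurable mFull := hmFull.1
  -- transfer of integrals along the map Z
  have key_map : ∀ (W : Set Ω), MeasurableSet W → ∀ (f : 𝒳 × ℝ → ℝ), Measurable f →
      ∀ t : Set (𝒳 × ℝ), MeasurableSet t →
      ∫ w in t, f w ∂(Measure.map Z (μ.restrict W)) = ∫ ω in W ∩ Z ⁻¹' t, f (Z ω) ∂μ := by
    intro W hW f hf t ht
    rw [setIntegral_map ht hf.aestronglyMeasurable hZ.aemeasurable,
      Measure.restrict_restrict (hZ ht), Set.inter_comm]
  -- multiplying by R0 is restricting to R
  have mul_R0 : ∀ (S : Set Ω), MeasurableSet S → ∀ (f : Ω → ℝ),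
      ∫ ω in S, f ω * R0 ω ∂μ = ∫ ω in S ∩ R, f ω ∂μ := by
    intro S hS f
    rw [← setIntegral_indicator hRm]
    refine integral_congr_ae (Filter.Eventually.of_forall fun ω => ?_)
    rcases hR0bin ω with h0 | h1
    · have hω : ω ∉ R := by simp [hRdef, h0]
      simp [Set.indicator_of_notMem hω, h0]
    · have hω : ω ∈ R := by simp [hRdef, h1]
      simp [Set.indicator_of_mem hω, h1]
  -- γ positive a.e. w.r.t. ρ
  have hγpos' : ∀ᵐ w ∂ρ, 0 < γ w := by
    rw [hρdef, MeasureTheory.ae_map_iff hZ.aemeasurable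
      (measurableSet_lt measurable_const hγm)]
    exact ae_restrict_of_ae hγpos
  have hγnn : 0 ≤ᵐ[ρ] γ := hγpos'.mono fun w hw => hw.le
  -- ρ1 in terms of integrals of γ against ρ
  have h1 : ∀ t : Set (𝒳 × ℝ), MeasurableSet t →
      (ρ1 t).toReal = ∫ w in t, γ w ∂ρ := by
    intro t ht
    have hγint := hγ.2 t ht
    have hrw : ∫ ω in E ∩ Z ⁻¹' t, R0 ω ∂μ = (ρ1 t).toReal := by
      have : ∀ ω, R0 ω = R.indicator (fun _ => (1 : ℝ)) ω := by
        intro ω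
        rcases hR0bin ω with h0 | h1
        · have hω : ω ∉ R := by simp [hRdef, h0]
          simp [Set.indicator_of_notMem hω, h0]
        · have hω : ω ∈ R := by simp [hRdef, h1]
          simp [Set.indicator_of_mem hω, h1]
      rw [integral_congr_ae (Filter.Eventually.of_forall fun ω => this ω),
        setIntegral_indicator hRm, setIntegral_const, smul_eq_mul, mul_one]
      congr 1
      rw [hρ1def, Measure.map_apply hZ ht, Measure.restrict_apply (hZ ht)]
      rw [Set.inter_right_comm, ← hFdef]  -- ⊢ μ (E ∩ Z⁻¹' t ∩ R) = μ (Z⁻¹' t ∩ F)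
      rw [Set.inter_comm]
      rfl
    rw [← hrw, hγint, key_map E hEm γ hγm t ht]
  -- the density function
  set g : 𝒳 × ℝ → ENNReal := fun w => ((γ w).toNNReal : ENNReal) with hgdef
  have hofg : (fun w => ENNReal.ofReal (γ w)) = g := rfl
  have hgm : Measurable g := measurable_coe_nnreal_ennreal.comp hγm.real_toNNReal
  have h2 : ∀ t : Set (𝒳 × ℝ), MeasurableSet t → (∫⁻ w in t, g w ∂ρ) < ⊤ →
      ρ1 t = ∫⁻ w in t, g w ∂ρ := by
    intro t ht hfin
    have heq : ∫ w in t, γ w ∂ρ = (∫⁻ w in t, g w ∂ρ).toReal := by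
      rw [integral_eq_lintegral_of_nonneg_ae (ae_restrict_of_ae hγnn)
        hγm.aestronglyMeasurable.restrict, ← hofg]
    have := (h1 t ht).trans heq
    exact (ENNReal.toReal_eq_toReal_iff' (measure_ne_top ρ1 t) hfin.ne).mp this
  -- localizing sets
  set v : ℕ → Set (𝒳 × ℝ) := fun n => {w | |γ w| ≤ n} ∩ {w | |mFull w| ≤ n} with hvdef
  have hvm : ∀ n, MeasurableSet (v n) := fun n =>
    (measurableSet_le hγm.abs measurable_const).inter
      (measurableSet_le hmFullm.abs measurable_const)
  have hvcover : ∀ w, ∃ n, w ∈ v n := by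
    intro w
    obtain ⟨n, hn⟩ := exists_nat_ge (max (|γ w|) (|mFull w|))
    exact ⟨n, le_trans (le_max_left _ _) hn, le_trans (le_max_right _ _) hn⟩
  -- the restricted measure identity
  have hmeas_eq : ∀ n : ℕ, ρ1.restrict (v n) = (ρ.restrict (v n)).withDensity g := by
    intro n
    refine Measure.ext fun t ht => ?_
    rw [Measure.restrict_apply ht, withDensity_apply _ ht,
      Measure.restrict_restrict ht]
    refine h2 _ (ht.inter (hvm n)) ?_
    calc ∫⁻ w in t ∩ v n, g w ∂ρ
        ≤ ∫⁻ _ in t ∩ v n, (ENNReal.ofReal n) ∂ρ := by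
          refine setLIntegral_mono measurable_const fun w hw => ?_
          exact ENNReal.ofReal_le_ofReal ((abs_le.mp hw.2.1).2)
      _ = ENNReal.ofReal n * ρ (t ∩ v n) := by rw [setLIntegral_const]
      _ < ⊤ := ENNReal.mul_lt_top ENNReal.ofReal_lt_top (measure_lt_top _ _)
  -- mIn is integrable with respect to ρ1
  have hmInρ1 : Integrable mIn ρ1 := by
    rw [hρ1def, integrable_map_measure hmInm.aestronglyMeasurable hZ.aemeasurable]
    exact hmInint.restrict
  -- key identity: ∫ mIn dρ1 = ∫ γ·mIn dρ on subsets of v n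
  have hkey : ∀ n : ℕ, ∀ t : Set (𝒳 × ℝ), MeasurableSet t →
      ∫ w in t, mIn w ∂(ρ1.restrict (v n)) =
        ∫ w in t, γ w * mIn w ∂(ρ.restrict (v n)) := by
    intro n t ht
    rw [hmeas_eq n, restrict_withDensity ht,
      integral_withDensity_eq_integral_smul (hγm.real_toNNReal)]
    refine integral_congr_ae ?_
    have : ∀ᵐ w ∂((ρ.restrict (v n)).restrict t), 0 < γ w :=
      ae_restrict_of_ae (ae_restrict_of_ae hγpos')
    refine this.mono fun w hw => ?_
    show (γ w).toNNReal • mIn w = γ w * mIn w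
    rw [NNReal.smul_def, Real.coe_toNNReal _ hw.le, smul_eq_mul]
  -- the two candidate densities agree a.e. on each v n
  have hloc : ∀ n : ℕ,
      (fun w => mFull w * γ w) =ᵐ[ρ.restrict (v n)] fun w => mIn w * γ w := by
    intro n
    have hint1 : Integrable (fun w => mFull w * γ w) (ρ.restrict (v n)) := by
      refine Integrable.mono' (integrable_const ((n : ℝ) * n))
        (hmFullm.mul hγm).aestronglyMeasurable ?_
      rw [ae_restrict_iff' (hvm n)]
      refine Filter.Eventually.of_forall fun w hw => ?_
      rw [Real.norm_eq_abs, abs_mul]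
      exact mul_le_mul hw.2 hw.1 (abs_nonneg _) (by positivity)
    have hint2 : Integrable (fun w => mIn w * γ w) (ρ.restrict (v n)) := by
      have h1 : Integrable mIn ((ρ.restrict (v n)).withDensity g) := by
        rw [← hmeas_eq n]; exact hmInρ1.restrict
      have h2 : Integrable (fun w => (γ w).toNNReal • mIn w) (ρ.restrict (v n)) :=
        (integrable_withDensity_iff_integrable_smul hγm.real_toNNReal).mp h1
      refine h2.congr ?_
      have : ∀ᵐ w ∂(ρ.restrict (v n)), 0 < γ w := ae_restrict_of_ae hγpos'
      refine this.mono fun w hw => ?_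
      show (γ w).toNNReal • mIn w = mIn w * γ w
      rw [NNReal.smul_def, Real.coe_toNNReal _ hw.le, smul_eq_mul, mul_comm]
    refine Integrable.ae_eq_of_forall_setIntegral_eq _ _ hint1 hint2 ?_
    intro t ht _
    have lhs : ∫ w in t, mFull w * γ w ∂(ρ.restrict (v n)) =
        ∫ w in t ∩ v n, mFull w * γ w ∂ρ := by
      rw [Measure.restrict_restrict ht]
    have rhs : ∫ w in t, mIn w * γ w ∂(ρ.restrict (v n)) =
        ∫ w in t, γ w * mIn w ∂(ρ.restrict (v n)) := by
      simp_rw [mul_comm]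
    rw [lhs, rhs, ← hkey n t ht, Measure.restrict_restrict ht]
    -- remaining: ∫ w in t ∩ v n, mFull w * γ w ∂ρ = ∫ w in t ∩ v n, mIn w ∂ρ1
    have htv : MeasurableSet (t ∩ v n) := ht.inter (hvm n)
    rw [hρdef, key_map E hEm (fun w => mFull w * γ w) (hmFullm.mul hγm) _ htv]
    have hCIt := (hCI.2 (t ∩ v n) htv).symm
    rw [hCIt, mul_R0 _ (hEm.inter (hZ htv)) Y0, Set.inter_right_comm, ← hFdef]
    have hmInt := hmIn.2 (t ∩ v n) htv
    rw [hmInt, ← key_map F hFm mIn hmInm _ htv, ← hρ1def]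
  -- hence a.e. on ρ
  have hall : ∀ᵐ w ∂ρ, ∀ n : ℕ, w ∈ v n → mFull w * γ w = mIn w * γ w := by
    rw [MeasureTheory.ae_all_iff]
    intro n
    exact (ae_restrict_iff' (hvm n)).mp (hloc n)
  have hprod : ∀ᵐ w ∂ρ, mFull w * γ w = mIn w * γ w := by
    refine hall.mono fun w hw => ?_
    obtain ⟨n, hn⟩ := hvcover w
    exact hw n hn
  have hfe : mFull =ᵐ[ρ] mIn := by
    refine (hprod.and hγpos').mono fun w hw => ?_
    exact mul_right_cancel₀ (ne_of_gt hw.2) hw.1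
  have hfeμ : (fun ω => mFull (Z ω)) =ᵐ[μ.restrict E] fun ω => mIn (Z ω) :=
    ae_of_ae_map hZ.aemeasurable hfe
  -- conclude
  refine ⟨hη.1, fun s hs => ?_⟩
  have hpre : Z ⁻¹' (s ×ˢ (Set.univ : Set ℝ)) = X ⁻¹' s := by
    ext ω; simp [hZdef]
  calc ∫ ω in E ∩ X ⁻¹' s, Y0 ω ∂μ
      = ∫ ω in E ∩ Z ⁻¹' (s ×ˢ (Set.univ : Set ℝ)), Y0 ω ∂μ := by rw [hpre]
    _ = ∫ ω in E ∩ Z ⁻¹' (s ×ˢ (Set.univ : Set ℝ)), mFull (Z ω) ∂μ :=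
        hmFull.2 _ (hs.prod MeasurableSet.univ)
    _ = ∫ ω in E ∩ X ⁻¹' s, mFull (Z ω) ∂μ := by rw [hpre]
    _ = ∫ ω in E ∩ X ⁻¹' s, mIn (Z ω) ∂μ := by
        rw [Set.inter_comm E (X ⁻¹' s), ← Measure.restrict_restrict (hX hs)]
        exact integral_congr_ae (ae_restrict_of_ae hfeμ)
    _ = ∫ ω in E ∩ X ⁻¹' s, η (X ω) ∂μ := hη.2 s hs
end

section
/- Under consistency Y1 = A·Y1(1) + (1-A)·Y1(0) and the conditional parallel trends assumption Y1(0) - Y0 ⊥ A | X, one has E[Y1(0) - Y0 | A=1] = E[ E[Y1 - Y0 | X, A=0] | A=1 ], provided P(A=1) > 0 and P(A=0 | X) > 0 a.s. -/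
open MeasureTheory

lemma aux_null {Ω 𝒳 : Type*} [MeasurableSpace Ω] [MeasurableSpace 𝒳]
    (μ : Measure Ω) [IsFiniteMeasure μ] (X : Ω → 𝒳) (hX : Measurable X)
    (E : Set Ω) (hE : MeasurableSet E)
    (f g : 𝒳 → ℝ) (hf : Measurable f) (hg : Measurable g)
    (heq : ∀ s : Set 𝒳, MeasurableSet s →
      ∫ ω in E ∩ X ⁻¹' s, f (X ω) ∂μ = ∫ ω in E ∩ X ⁻¹' s, g (X ω) ∂μ) :
    μ (E ∩ X ⁻¹' {x | f x < g x}) = 0 := by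
  have hcov : {x | f x < g x} = ⋃ N : ℕ, {x | f x < g x ∧ |f x| ≤ N ∧ |g x| ≤ N} := by
    ext x
    simp only [Set.mem_setOf_eq, Set.mem_iUnion]
    constructor
    · intro h
      refine ⟨Nat.ceil (max |f x| |g x|), h, ?_, ?_⟩
      · exact le_trans (le_max_left _ _) (Nat.le_ceil _)
      · exact le_trans (le_max_right _ _) (Nat.le_ceil _)
    · rintro ⟨N, h, _⟩; exact h
  rw [hcov, Set.preimage_iUnion, Set.inter_iUnion]
  refine measure_iUnion_null fun N => ?_
  have hs : MeasurableSet {x | f x < g x ∧ |f x| ≤ (N : ℝ) ∧ |g x| ≤ (N : ℝ)} := by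
    refine (measurableSet_lt hf hg).inter ((measurableSet_le hf.abs measurable_const).inter
      (measurableSet_le hg.abs measurable_const))
  set s : Set 𝒳 := {x | f x < g x ∧ |f x| ≤ (N : ℝ) ∧ |g x| ≤ (N : ℝ)} with hsdef
  have hTm : MeasurableSet (E ∩ X ⁻¹' s) := hE.inter (hX hs)
  have hfint : IntegrableOn (fun ω => f (X ω)) (E ∩ X ⁻¹' s) μ := by
    refine Integrable.mono' (integrable_const (N : ℝ)) (hf.comp hX).aestronglyMeasurable ?_
    exact (ae_restrict_iff' hTm).2 (ae_of_all _ fun ω hω => hω.2.2.1)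
  have hgint : IntegrableOn (fun ω => g (X ω)) (E ∩ X ⁻¹' s) μ := by
    refine Integrable.mono' (integrable_const (N : ℝ)) (hg.comp hX).aestronglyMeasurable ?_
    exact (ae_restrict_iff' hTm).2 (ae_of_all _ fun ω hω => hω.2.2.2)
  have hint0 : ∫ ω in E ∩ X ⁻¹' s, (g (X ω) - f (X ω)) ∂μ = 0 := by
    rw [integral_sub hgint hfint, heq s hs, sub_self]
  by_contra hne
  have hμpos : 0 < μ (E ∩ X ⁻¹' s) := pos_iff_ne_zero.2 hne
  have hpos : 0 < ∫ ω in E ∩ X ⁻¹' s, (g (X ω) - f (X ω)) ∂μ := by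
    rw [setIntegral_pos_iff_support_of_nonneg_ae
      ((ae_restrict_iff' hTm).2 (ae_of_all _ fun ω hω => sub_nonneg.2 (le_of_lt hω.2.1)))
      (hgint.sub hfint)]
    refine lt_of_lt_of_le hμpos (measure_mono ?_)
    intro ω hω
    exact ⟨sub_ne_zero.2 (ne_of_gt hω.2.1), hω⟩
  rw [hint0] at hpos
  exact lt_irrefl 0 hpos

/-- **Counterfactual trend identification.** Under consistency
`Y1 = A·Y1(1) + (1-A)·Y1(0)` and conditional parallel trends
(`E[Y1(0) - Y0 ∣ X, A = 1] = E[Y1(0) - Y0 ∣ X, A = 0]` a.s., expressed by a common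
version `mPT`), with `P(A = 1) > 0` and `P(A = 0 ∣ X) > 0` a.s., one has
`E[Y1(0) - Y0 ∣ A = 1] = E[ E[Y1 - Y0 ∣ X, A = 0] ∣ A = 1 ]`. -/
theorem counterfactual_trend_identification
    {Ω 𝒳 : Type*} [MeasurableSpace Ω] [MeasurableSpace 𝒳]
    (μ : Measure Ω) [IsProbabilityMeasure μ]
    (X : Ω → 𝒳) (A Y0 Y10 Y11 Y1 : Ω → ℝ)
    (hX : Measurable X) (hA : Measurable A)
    (hY0 : Measurable Y0) (hY10 : Measurable Y10) (hY11 : Measurable Y11)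
    (hAbin : ∀ ω, A ω = 0 ∨ A ω = 1)
    (hY0int : Integrable Y0 μ) (hY10int : Integrable Y10 μ) (hY11int : Integrable Y11 μ)
    -- consistency
    (hcons : ∀ ω, Y1 ω = A ω * Y11 ω + (1 - A ω) * Y10 ω)
    (π : 𝒳 → ℝ)
    -- π is a version of the propensity score P(A = 1 ∣ X)
    (hπ : IsCondExpOn μ X Set.univ A π)
    -- positivity: P(A = 1) > 0 and P(A = 0 ∣ X) > 0 a.s. (indeed π(X) ∈ (0,1) a.s.)
    (hA1pos : 0 < μ {ω | A ω = 1})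
    (hπ01 : ∀ᵐ ω ∂μ, 0 < π (X ω) ∧ π (X ω) < 1)
    -- conditional parallel trends: a common version mPT of
    -- E[Y1(0) - Y0 ∣ X, A = 1] and E[Y1(0) - Y0 ∣ X, A = 0]
    (mPT : 𝒳 → ℝ)
    (hPT1 : IsCondExpOn μ X {ω | A ω = 1} (fun ω => Y10 ω - Y0 ω) mPT)
    (hPT0 : IsCondExpOn μ X {ω | A ω = 0} (fun ω => Y10 ω - Y0 ω) mPT)
    -- m0 is a version of E[Y1 - Y0 ∣ X, A = 0]
    (m0 : 𝒳 → ℝ)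
    (hm0 : IsCondExpOn μ X {ω | A ω = 0} (fun ω => Y1 ω - Y0 ω) m0)
    (hm0int : Integrable (fun ω => m0 (X ω)) μ) :
    (∫ ω in {ω | A ω = 1}, (Y10 ω - Y0 ω) ∂μ) / (μ {ω | A ω = 1}).toReal
      = (∫ ω in {ω | A ω = 1}, m0 (X ω) ∂μ) / (μ {ω | A ω = 1}).toReal := by
  obtain ⟨hm0meas, hm0eq⟩ := hm0
  obtain ⟨hmPTmeas, hPT0eq⟩ := hPT0
  obtain ⟨-, hPT1eq⟩ := hPT1
  obtain ⟨hπmeas, hπeq⟩ := hπ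
  have hE0m : MeasurableSet {ω | A ω = 0} := hA (measurableSet_singleton 0)
  have hE1m : MeasurableSet {ω | A ω = 1} := hA (measurableSet_singleton 1)
  -- Step 1 : m0 and mPT have the same integrals over {A=0} ∩ X⁻¹ s
  have step1 : ∀ s : Set 𝒳, MeasurableSet s →
      ∫ ω in {ω | A ω = 0} ∩ X ⁻¹' s, m0 (X ω) ∂μ
        = ∫ ω in {ω | A ω = 0} ∩ X ⁻¹' s, mPT (X ω) ∂μ := by
    intro s hs
    rw [← hm0eq s hs, ← hPT0eq s hs]
    refine setIntegral_congr_fun (hE0m.inter (hX hs)) fun ω hω => ?_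
    have h0 : A ω = 0 := hω.1
    simp [hcons ω, h0]
  -- Step 2 : m0 = mPT a.e. on {A=0} in the X-fibered sense
  have hD0 : μ ({ω | A ω = 0} ∩ X ⁻¹' {x | m0 x ≠ mPT x}) = 0 := by
    have h1 := aux_null μ X hX _ hE0m m0 mPT hm0meas hmPTmeas step1
    have h2 := aux_null μ X hX _ hE0m mPT m0 hmPTmeas hm0meas (fun s hs => (step1 s hs).symm)
    have hsplit : {x | m0 x ≠ mPT x} = {x | m0 x < mPT x} ∪ {x | mPT x < m0 x} := by
      ext x; exact ne_iff_lt_or_gt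
    rw [hsplit, Set.preimage_union, Set.inter_union_distrib_left]
    exact measure_union_null h1 h2
  -- Step 3 : absolute continuity via positivity
  have habs : ∀ s : Set 𝒳, MeasurableSet s → μ ({ω | A ω = 0} ∩ X ⁻¹' s) = 0 →
      μ (X ⁻¹' s) = 0 := by
    intro s hs h0
    by_contra hne
    have hae : μ {ω | ¬ π (X ω) < 1} = 0 := by
      refine measure_mono_null ?_ (ae_iff.1 hπ01)
      intro ω hω
      simp only [Set.mem_setOf_eq] at hω ⊢
      tauto
    have hsub : X ⁻¹' s ⊆
        (⋃ N : ℕ, X ⁻¹' (s ∩ π ⁻¹' Set.Iic (1 - ((N : ℝ) + 1)⁻¹))) ∪ {ω | ¬ π (X ω) < 1} := by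
      intro ω hω
      by_cases hlt : π (X ω) < 1
      · left
        obtain ⟨N, hN⟩ := exists_nat_one_div_lt (sub_pos.2 hlt)
        refine Set.mem_iUnion.2 ⟨N, hω, ?_⟩
        simp only [Set.mem_preimage, Set.mem_Iic]
        rw [one_div] at hN
        linarith
      · right; exact hlt
    have hexN : ∃ N : ℕ, μ (X ⁻¹' (s ∩ π ⁻¹' Set.Iic (1 - ((N : ℝ) + 1)⁻¹))) ≠ 0 := by
      by_contra hall
      push_neg at hall
      have : μ (X ⁻¹' s) = 0 := by
        refine measure_mono_null hsub (measure_union_null (measure_iUnion_null hall) hae)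
      exact hne this
    obtain ⟨N, hN⟩ := hexN
    set t : Set 𝒳 := s ∩ π ⁻¹' Set.Iic (1 - ((N : ℝ) + 1)⁻¹) with htdef
    have htm : MeasurableSet t := hs.inter (hπmeas measurableSet_Iic)
    have hTfin : μ (X ⁻¹' t) ≠ ⊤ := measure_ne_top μ _
    have hTpos : 0 < (μ (X ⁻¹' t)).toReal := ENNReal.toReal_pos hN hTfin
    -- LHS : integral of A over X⁻¹ t
    have hAind : ∀ ω, A ω = Set.indicator {ω | A ω = 1} (fun _ => (1 : ℝ)) ω := by
      intro ω
      rcases hAbin ω with h | h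
      · have hnm : ω ∉ {ω | A ω = 1} := by
          simp only [Set.mem_setOf_eq, h]
          norm_num
        rw [Set.indicator_of_notMem hnm, h]
      · have hm : ω ∈ {ω | A ω = 1} := h
        rw [Set.indicator_of_mem hm]
        exact h
    have hLHS : ∫ ω in X ⁻¹' t, A ω ∂μ = (μ (X ⁻¹' t)).toReal := by
      calc ∫ ω in X ⁻¹' t, A ω ∂μ
          = ∫ ω in X ⁻¹' t, Set.indicator {ω | A ω = 1} (fun _ => (1 : ℝ)) ω ∂μ := by
            exact integral_congr_ae (ae_of_all _ fun ω => hAind ω)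
        _ = ∫ ω in X ⁻¹' t ∩ {ω | A ω = 1}, (1 : ℝ) ∂μ := setIntegral_indicator hE1m
        _ = (μ (X ⁻¹' t ∩ {ω | A ω = 1})).toReal := by simp [measureReal_def]
        _ = (μ (X ⁻¹' t)).toReal := by
            congr 1
            refine le_antisymm (measure_mono Set.inter_subset_left) ?_
            have h01 : X ⁻¹' t ⊆ (X ⁻¹' t ∩ {ω | A ω = 1}) ∪ ({ω | A ω = 0} ∩ X ⁻¹' s) := by
              intro ω hω
              rcases hAbin ω with h | h
              · exact Or.inr ⟨h, hω.1⟩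
              · exact Or.inl ⟨hω, h⟩
            calc μ (X ⁻¹' t) ≤ μ ((X ⁻¹' t ∩ {ω | A ω = 1}) ∪ ({ω | A ω = 0} ∩ X ⁻¹' s)) :=
                  measure_mono h01
              _ ≤ μ (X ⁻¹' t ∩ {ω | A ω = 1}) + μ ({ω | A ω = 0} ∩ X ⁻¹' s) := measure_union_le _ _
              _ = μ (X ⁻¹' t ∩ {ω | A ω = 1}) := by rw [h0, add_zero]
    -- RHS bound
    have hπint : IntegrableOn (fun ω => π (X ω)) (X ⁻¹' t) μ := by
      refine Integrable.mono' (integrable_const (1 : ℝ)) (hπmeas.comp hX).aestronglyMeasurable ?_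
      refine ae_restrict_of_ae ?_
      filter_upwards [hπ01] with ω hω
      rw [Real.norm_eq_abs, abs_le]
      constructor <;> linarith [hω.1, hω.2]
    have hRHS : ∫ ω in X ⁻¹' t, π (X ω) ∂μ
        ≤ (1 - ((N : ℝ) + 1)⁻¹) * (μ (X ⁻¹' t)).toReal := by
      have hb : ∫ ω in X ⁻¹' t, π (X ω) ∂μ ≤ ∫ _ω in X ⁻¹' t, (1 - ((N : ℝ) + 1)⁻¹) ∂μ := by
        refine setIntegral_mono_on hπint (integrable_const _) (hX htm) fun ω hω => hω.2
      rw [setIntegral_const, smul_eq_mul, mul_comm] at hb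
      exact hb
    have heqAt := hπeq t htm
    rw [Set.univ_inter] at heqAt
    rw [hLHS] at heqAt
    have hε : 0 < ((N : ℝ) + 1)⁻¹ := by positivity
    nlinarith [heqAt, hRHS, hTpos, mul_pos hε hTpos]
  -- Step 4 : conclude
  have hDm : MeasurableSet {x | m0 x ≠ mPT x} := by
    have : {x | m0 x ≠ mPT x} = {x | m0 x < mPT x} ∪ {x | mPT x < m0 x} := by
      ext x; exact ne_iff_lt_or_gt
    rw [this]
    exact (measurableSet_lt hm0meas hmPTmeas).union (measurableSet_lt hmPTmeas hm0meas)
  have hDnull : μ (X ⁻¹' {x | m0 x ≠ mPT x}) = 0 := habs _ hDm hD0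
  have h1 : ∫ ω in {ω | A ω = 1}, (Y10 ω - Y0 ω) ∂μ = ∫ ω in {ω | A ω = 1}, mPT (X ω) ∂μ := by
    have := hPT1eq Set.univ MeasurableSet.univ
    simpa using this
  have h2 : ∫ ω in {ω | A ω = 1}, mPT (X ω) ∂μ = ∫ ω in {ω | A ω = 1}, m0 (X ω) ∂μ := by
    have hae2 : ∀ᵐ ω ∂μ, mPT (X ω) = m0 (X ω) := by
      rw [ae_iff]
      refine measure_mono_null (fun ω hω => ?_) hDnull
      exact fun h => hω h.symm
    exact integral_congr_ae (ae_restrict_of_ae hae2)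
  rw [h1, h2]
end

section
/- Let φ(D; θ) be the efficient influence function under the outcome-independent MAR setting: φ(D;θ) = (A/E[A])·(Y1 - [μ0(X,1) + (R0/γ(X,1))(Y0 - μ0(X,1))] - μ1(X,0) + μ0(X,0)) - ((1-A)π(X)/((1-π(X))E[A]))·(Y1 - (R0/γ(X,0))(Y0 - μ0(X,0)) - μ1(X,0)) - (A/E[A])·θ, where the nuisance functions are at their true values. Then E[φ(D; θ*)] = 0, where θ* is the identified ATT. -/
open MeasureTheory

namespace EIFAux

variable {Ω 𝒳 : Type*} [MeasurableSpace Ω] [MeasurableSpace 𝒳]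
  {μ : Measure Ω} [IsFiniteMeasure μ] {X : Ω → 𝒳} {E : Set Ω} {Y : Ω → ℝ} {m : 𝒳 → ℝ}

lemma ofReal_add_ofReal_neg (a : ℝ) :
    (‖a‖₊ : ENNReal) = ENNReal.ofReal a + ENNReal.ofReal (-a) := by
  rcases le_total 0 a with h | h
  · rw [← enorm_eq_nnnorm]; simp [Real.enorm_eq_ofReal h, ENNReal.ofReal_of_nonpos (neg_nonpos.mpr h)]
  · rw [← enorm_eq_nnnorm]; simp [Real.enorm_eq_ofReal_abs, abs_of_nonpos h, ENNReal.ofReal_of_nonpos h]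

/-- half of the sign-trick integrability lemma -/
lemma lintegral_pos_part_le (hX : Measurable X) (hE : MeasurableSet E)
    (h : IsCondExpOn μ X E Y m) (hY : IntegrableOn Y E μ) :
    ∫⁻ ω, ENNReal.ofReal (m (X ω)) ∂(μ.restrict E) ≤
      ENNReal.ofReal (∫ ω in E, |Y ω| ∂μ) := by
  set ν := μ.restrict E with hν
  have hmX : Measurable fun ω => m (X ω) := h.1.comp hX
  set s : ℕ → Set 𝒳 := fun n => {x | 0 ≤ m x ∧ m x ≤ n} with hs
  have hsm : ∀ n, MeasurableSet (s n) :=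
    fun n => (measurableSet_le measurable_const h.1).inter (measurableSet_le h.1 measurable_const)
  have hgmono : Monotone (fun (n : ℕ) =>
      (X ⁻¹' (s n)).indicator (fun ω => ENNReal.ofReal (m (X ω)))) := by
    intro a b hab
    refine Set.indicator_le_indicator_of_subset ?_ (fun ω => zero_le)
    refine Set.preimage_mono fun x hx => ⟨hx.1, le_trans hx.2 ?_⟩
    exact_mod_cast Nat.cast_le.2 hab
  have hsup : (fun ω => ENNReal.ofReal (m (X ω))) = fun ω => ⨆ n,
      (X ⁻¹' (s n)).indicator (fun ω => ENNReal.ofReal (m (X ω))) ω := by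
    funext ω
    rcases le_or_gt 0 (m (X ω)) with hpos | hneg
    · obtain ⟨n, hn⟩ := exists_nat_ge (m (X ω))
      refine le_antisymm ?_ ?_
      · refine le_trans ?_ (le_iSup _ n)
        rw [Set.indicator_of_mem (show ω ∈ X ⁻¹' s n from ⟨hpos, hn⟩)]
      · refine iSup_le fun k => ?_
        by_cases hω : ω ∈ X ⁻¹' (s k)
        · rw [Set.indicator_of_mem hω]
        · rw [Set.indicator_of_notMem hω]; exact zero_le
    · have hz : ∀ n : ℕ, (X ⁻¹' (s n)).indicator
          (fun ω => ENNReal.ofReal (m (X ω))) ω = 0 := by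
        intro n
        by_cases hω : ω ∈ X ⁻¹' (s n)
        · exact absurd hω.1 (not_le.2 hneg)
        · rw [Set.indicator_of_notMem hω]
      simp [hz, ENNReal.ofReal_of_nonpos hneg.le]
  rw [hsup, lintegral_iSup (fun n => ((hmX.ennreal_ofReal)).indicator (hX (hsm _))) hgmono]
  refine iSup_le fun n => ?_
  have hint : IntegrableOn (fun ω => m (X ω)) (X ⁻¹' s n) ν := by
    refine Integrable.mono' (integrable_const (n : ℝ)) hmX.aestronglyMeasurable ?_
    refine (ae_restrict_iff' (hX (hsm n))).2 (ae_of_all _ fun ω hω => ?_)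
    rw [Real.norm_eq_abs, abs_of_nonneg hω.1]; exact hω.2
  have hnn : 0 ≤ᵐ[ν.restrict (X ⁻¹' s n)] fun ω => m (X ω) :=
    (ae_restrict_iff' (hX (hsm n))).2 (ae_of_all _ fun ω hω => hω.1)
  rw [lintegral_indicator (hX (hsm n)) _,
    ← ofReal_integral_eq_lintegral_ofReal hint hnn]
  refine ENNReal.ofReal_le_ofReal ?_
  have h1 : ∫ ω in X ⁻¹' s n, m (X ω) ∂ν = ∫ ω in E ∩ X ⁻¹' s n, m (X ω) ∂μ := by
    rw [hν, Measure.restrict_restrict (hX (hsm n)), Set.inter_comm]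
  rw [h1, ← h.2 (s n) (hsm n)]
  calc ∫ ω in E ∩ X ⁻¹' s n, Y ω ∂μ ≤ ∫ ω in E ∩ X ⁻¹' s n, |Y ω| ∂μ := by
        refine integral_mono_ae (hY.mono_set Set.inter_subset_left) ?_ ?_
        · exact (hY.mono_set Set.inter_subset_left).abs
        · exact ae_of_all _ fun ω => le_abs_self _
    _ ≤ ∫ ω in E, |Y ω| ∂μ := by
        refine setIntegral_mono_set hY.abs ?_ ?_
        · exact ae_of_all _ fun ω => abs_nonneg _
        · exact HasSubset.Subset.eventuallyLE Set.inter_subset_left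

/-- Sign-trick integrability: a version of a conditional expectation of an integrable
function is integrable. -/
lemma integrable_of_isCondExpOn (hX : Measurable X) (hE : MeasurableSet E)
    (h : IsCondExpOn μ X E Y m) (hY : IntegrableOn Y E μ) :
    IntegrableOn (fun ω => m (X ω)) E μ := by
  have hmX : Measurable fun ω => m (X ω) := h.1.comp hX
  refine ⟨hmX.aestronglyMeasurable, ?_⟩
  have hneg : IsCondExpOn μ X E (fun ω => - Y ω) (fun x => - m x) := by
    refine ⟨h.1.neg, fun t ht => ?_⟩
    rw [integral_neg, h.2 t ht, ← integral_neg]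
  have h2 := lintegral_pos_part_le hX hE hneg hY.neg
  have h1 := lintegral_pos_part_le hX hE h hY
  rw [HasFiniteIntegral]
  calc ∫⁻ ω, (‖m (X ω)‖₊ : ENNReal) ∂(μ.restrict E)
      = ∫⁻ ω, (ENNReal.ofReal (m (X ω)) + ENNReal.ofReal (- m (X ω))) ∂(μ.restrict E) := by
        congr 1; funext ω; exact ofReal_add_ofReal_neg _
    _ = (∫⁻ ω, ENNReal.ofReal (m (X ω)) ∂(μ.restrict E))
        + ∫⁻ ω, ENNReal.ofReal (- m (X ω)) ∂(μ.restrict E) := by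
        exact lintegral_add_left hmX.ennreal_ofReal _
    _ < ⊤ := by
        have hYabs : |∫ ω in E, |Y ω| ∂μ| < (⊤:ENNReal).toReal ∨ True := Or.inr trivial
        have e2 : ∫ ω in E, |(- Y ω)| ∂μ = ∫ ω in E, |Y ω| ∂μ := by
          congr 1; funext ω; exact abs_neg _
        rw [e2] at h2
        exact lt_of_le_of_lt (add_le_add h1 h2) (by simp [ENNReal.add_lt_top])

/-- identification with mathlib's condexp on the restricted measure -/
lemma ae_eq_condexp_of_isCondExpOn (hX : Measurable X) (hE : MeasurableSet E)
    (h : IsCondExpOn μ X E Y m) (hY : IntegrableOn Y E μ) :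
    (fun ω => m (X ω)) =ᵐ[μ.restrict E]
      (μ.restrict E)[Y | MeasurableSpace.comap X inferInstance] := by
  have hle : MeasurableSpace.comap X inferInstance ≤ (inferInstance : MeasurableSpace Ω) :=
    hX.comap_le
  refine ae_eq_condExp_of_forall_setIntegral_eq hle hY ?_ ?_ ?_
  · rintro t ⟨u, hu, rfl⟩ -
    exact (integrable_of_isCondExpOn hX hE h hY).integrableOn
  · rintro t ⟨u, hu, rfl⟩ -
    rw [Measure.restrict_restrict (hX hu), Set.inter_comm, ← h.2 u hu]
  · refine StronglyMeasurable.aestronglyMeasurable ?_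
    refine Measurable.stronglyMeasurable ?_
    exact fun t ht => ⟨m ⁻¹' t, h.1 ht, rfl⟩

/-- weighted set-integral identity: for bounded measurable `w`,
`∫_E w(X) Y = ∫_E w(X) m(X)`. -/
lemma weighted_integral_eq (hX : Measurable X) (hE : MeasurableSet E)
    (h : IsCondExpOn μ X E Y m) (hY : IntegrableOn Y E μ)
    (w : 𝒳 → ℝ) (hw : Measurable w) (C : ℝ) (hwb : ∀ x, |w x| ≤ C) :
    ∫ ω in E, w (X ω) * Y ω ∂μ = ∫ ω in E, w (X ω) * m (X ω) ∂μ := by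
  set ν := μ.restrict E with hν
  have hle : MeasurableSpace.comap X inferInstance ≤ (inferInstance : MeasurableSpace Ω) :=
    hX.comap_le
  have hwX : StronglyMeasurable[MeasurableSpace.comap X inferInstance] (fun ω => w (X ω)) := by
    refine Measurable.stronglyMeasurable ?_
    exact fun t ht => ⟨w ⁻¹' t, hw ht, rfl⟩
  have hwXb : ∀ ω, ‖w (X ω)‖ ≤ C := fun ω => by
    rw [Real.norm_eq_abs]; exact hwb _
  have hwY : Integrable (fun ω => w (X ω) * Y ω) ν := by
    refine Integrable.bdd_mul (c := C) hY ((hw.comp hX).aestronglyMeasurable) (ae_of_all _ fun ω => hwXb ω)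
  have hcond := ae_eq_condexp_of_isCondExpOn hX hE h hY
  have hpull : ν[(fun ω => w (X ω)) * Y | MeasurableSpace.comap X inferInstance] =ᵐ[ν]
      (fun ω => w (X ω)) * ν[Y | MeasurableSpace.comap X inferInstance] :=
    condExp_mul_of_stronglyMeasurable_left hwX hwY hY
  calc ∫ ω in E, w (X ω) * Y ω ∂μ
      = ∫ ω, ((fun ω => w (X ω)) * Y) ω ∂ν := by rfl
    _ = ∫ ω, (ν[(fun ω => w (X ω)) * Y | MeasurableSpace.comap X inferInstance]) ω ∂ν :=
        (integral_condExp hle).symm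
    _ = ∫ ω, ((fun ω => w (X ω)) * ν[Y | MeasurableSpace.comap X inferInstance]) ω ∂ν :=
        integral_congr_ae hpull
    _ = ∫ ω in E, w (X ω) * m (X ω) ∂μ := by
        refine integral_congr_ae ?_
        filter_upwards [hcond] with ω hω
        simp only [Pi.mul_apply]
        rw [hω]

end EIFAux

set_option maxHeartbeats 4000000 in
/-- **The observed-data efficient influence function has mean zero at the truth.**
Under conditional parallel trends, consistency, positivity and outcome-independent
MAR, the efficient influence function
`φ(D;θ) = (A/E[A])(Y1 - [μ0(X,1) + (R0/γ(X,1))(Y0 - μ0(X,1))] - μ1(X,0) + μ0(X,0))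
  - ((1-A)π(X)/((1-π(X))E[A]))(Y1 - (R0/γ(X,0))(Y0 - μ0(X,0)) - μ1(X,0)) - (A/E[A])θ`
with all nuisance functions at their true values satisfies `E[φ(D; θ*)] = 0`,
where `θ* = E[Y1(1) - Y1(0) ∣ A = 1]` is the identified ATT. -/
theorem observed_EIF_mean_zero
    {Ω 𝒳 : Type*} [MeasurableSpace Ω] [MeasurableSpace 𝒳]
    (μ : Measure Ω) [IsProbabilityMeasure μ]
    (X : Ω → 𝒳) (A R0 Y0 Y10 Y11 Y1 : Ω → ℝ)
    (hX : Measurable X) (hA : Measurable A) (hR0 : Measurable R0)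
    (hY0 : Measurable Y0) (hY10 : Measurable Y10) (hY11 : Measurable Y11)
    (hAbin : ∀ ω, A ω = 0 ∨ A ω = 1) (hR0bin : ∀ ω, R0 ω = 0 ∨ R0 ω = 1)
    (hY0int : Integrable Y0 μ) (hY10int : Integrable Y10 μ) (hY11int : Integrable Y11 μ)
    -- consistency
    (hcons : ∀ ω, Y1 ω = A ω * Y11 ω + (1 - A ω) * Y10 ω)
    -- positivity: π(X) ∈ (0,1) a.s. and P(A = 1) > 0
    (π : 𝒳 → ℝ)
    (hπ : IsCondExpOn μ X Set.univ A π)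
    (hA1pos : 0 < μ {ω | A ω = 1})
    (hπ01 : ∀ᵐ ω ∂μ, 0 < π (X ω) ∧ π (X ω) < 1)
    -- conditional parallel trends, via a common version mPT
    (mPT : 𝒳 → ℝ)
    (hPT1 : IsCondExpOn μ X {ω | A ω = 1} (fun ω => Y10 ω - Y0 ω) mPT)
    (hPT0 : IsCondExpOn μ X {ω | A ω = 0} (fun ω => Y10 ω - Y0 ω) mPT)
    -- true nuisance functions: μ0(·,a) = E[Y0 ∣ X, A=a], μ1(·,0) = E[Y1 ∣ X, A=0],
    -- γa = P(R0 = 1 ∣ X, A=a) ∈ (0,1) a.s.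
    (m01 m00 m10 γ1 γ0 : 𝒳 → ℝ)
    (hm01 : IsCondExpOn μ X {ω | A ω = 1} Y0 m01)
    (hm00 : IsCondExpOn μ X {ω | A ω = 0} Y0 m00)
    (hm10 : IsCondExpOn μ X {ω | A ω = 0} Y1 m10)
    (hγ1 : IsCondExpOn μ X {ω | A ω = 1} R0 γ1)
    (hγ0 : IsCondExpOn μ X {ω | A ω = 0} R0 γ0)
    (hγ1ol : ∀ᵐ ω ∂μ, 0 < γ1 (X ω) ∧ γ1 (X ω) < 1)
    (hγ0ol : ∀ᵐ ω ∂μ, 0 < γ0 (X ω) ∧ γ0 (X ω) < 1)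
    -- MAR: Y0 ⊥ R0 ∣ (X, A), via the conditional product rule in each arm
    (hCI1 : IsCondExpOn μ X {ω | A ω = 1} (fun ω => Y0 ω * R0 ω)
      (fun x => m01 x * γ1 x))
    (hCI0 : IsCondExpOn μ X {ω | A ω = 0} (fun ω => Y0 ω * R0 ω)
      (fun x => m00 x * γ0 x))
    -- the ATT
    (θ : ℝ)
    (hθ : θ = (∫ ω in {ω | A ω = 1}, (Y11 ω - Y10 ω) ∂μ) / (μ {ω | A ω = 1}).toReal)
    (EA : ℝ) (hEA : EA = ∫ ω, A ω ∂μ)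
    (hint : Integrable (fun ω =>
      A ω / EA * (Y1 ω - (m01 (X ω) + R0 ω / γ1 (X ω) * (Y0 ω - m01 (X ω)))
          - m10 (X ω) + m00 (X ω))
        - (1 - A ω) * π (X ω) / ((1 - π (X ω)) * EA)
            * (Y1 ω - R0 ω / γ0 (X ω) * (Y0 ω - m00 (X ω)) - m10 (X ω))
        - A ω / EA * θ) μ) :
    ∫ ω, (A ω / EA * (Y1 ω - (m01 (X ω) + R0 ω / γ1 (X ω) * (Y0 ω - m01 (X ω)))
          - m10 (X ω) + m00 (X ω))
        - (1 - A ω) * π (X ω) / ((1 - π (X ω)) * EA)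
            * (Y1 ω - R0 ω / γ0 (X ω) * (Y0 ω - m00 (X ω)) - m10 (X ω))
        - A ω / EA * θ) ∂μ = 0 := by
  classical
  set E1 : Set Ω := {ω | A ω = 1} with hE1def
  set E0 : Set Ω := {ω | A ω = 0} with hE0def
  have hE1 : MeasurableSet E1 := hA (measurableSet_singleton 1)
  have hE0 : MeasurableSet E0 := hA (measurableSet_singleton 0)
  have hE0c : E0 = E1ᶜ := by
    ext ω; rcases hAbin ω with h | h <;>
      simp [hE0def, hE1def, h]
  set φf : Ω → ℝ := fun ω =>
      A ω / EA * (Y1 ω - (m01 (X ω) + R0 ω / γ1 (X ω) * (Y0 ω - m01 (X ω)))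
          - m10 (X ω) + m00 (X ω))
        - (1 - A ω) * π (X ω) / ((1 - π (X ω)) * EA)
            * (Y1 ω - R0 ω / γ0 (X ω) * (Y0 ω - m00 (X ω)) - m10 (X ω))
        - A ω / EA * θ with hφf
  -- basic facts
  have hAb : ∀ ω, |A ω| ≤ 1 := by
    intro ω; rcases hAbin ω with h | h <;> simp [h]
  have hR0b : ∀ ω, |R0 ω| ≤ 1 := by
    intro ω; rcases hR0bin ω with h | h <;> simp [h]
  have hAint : Integrable A μ := by
    refine Integrable.mono' (integrable_const (1:ℝ)) hA.aestronglyMeasurable ?_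
    exact ae_of_all _ fun ω => by rw [Real.norm_eq_abs]; exact hAb ω
  have hR0int : Integrable R0 μ := by
    refine Integrable.mono' (integrable_const (1:ℝ)) hR0.aestronglyMeasurable ?_
    exact ae_of_all _ fun ω => by rw [Real.norm_eq_abs]; exact hR0b ω
  have hY1eq : ∀ ω, Y1 ω = A ω * Y11 ω + (1 - A ω) * Y10 ω := hcons
  have hY1m : Measurable Y1 := by
    have : Y1 = fun ω => A ω * Y11 ω + (1 - A ω) * Y10 ω := funext hcons
    rw [this]; exact ((hA.mul hY11).add ((measurable_const.sub hA).mul hY10))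
  have hY1int : Integrable Y1 μ := by
    have h1 : Integrable (fun ω => A ω * Y11 ω) μ :=
      hY11int.bdd_mul (c := 1) hA.aestronglyMeasurable (ae_of_all _ fun ω => by
        rw [Real.norm_eq_abs]; exact hAb ω)
    have h2 : Integrable (fun ω => (1 - A ω) * Y10 ω) μ :=
      hY10int.bdd_mul (c := 1) (measurable_const.sub hA).aestronglyMeasurable (ae_of_all _ fun ω => by
        rw [Real.norm_eq_abs]; rcases hAbin ω with h | h <;> simp [h])
    exact (h1.add h2).congr (ae_of_all _ fun ω => (hcons ω).symm)
  have hY0R0int : Integrable (fun ω => Y0 ω * R0 ω) μ := by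
    refine hY0int.bdd_mul (c := 1) hR0.aestronglyMeasurable ?_ |>.congr
      (ae_of_all _ fun ω => mul_comm _ _)
    exact ae_of_all _ fun ω => by rw [Real.norm_eq_abs]; exact hR0b ω
  have hAeq : ∀ ω, A ω = E1.indicator (fun _ => (1:ℝ)) ω := by
    intro ω
    rcases hAbin ω with h | h
    · rw [Set.indicator_of_notMem (by simp [hE1def, h]), h]
    · rw [Set.indicator_of_mem (by simpa [hE1def] using h), h]
  have hEA' : EA = (μ E1).toReal := by
    rw [hEA, integral_congr_ae (ae_of_all _ hAeq), integral_indicator hE1,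
      setIntegral_const, smul_eq_mul, mul_one, measureReal_def]
  have hEApos : 0 < EA := by
    rw [hEA']
    exact ENNReal.toReal_pos (ne_of_gt hA1pos) (measure_ne_top μ _)
  have hEAne : EA ≠ 0 := ne_of_gt hEApos
  -- transfer lemma: m10 - m00 = mPT a.e. under the X-marginal
  have hle : MeasurableSpace.comap X inferInstance ≤ (inferInstance : MeasurableSpace Ω) :=
    hX.comap_le
  have hm10i : IntegrableOn (fun ω => m10 (X ω)) E0 μ :=
    EIFAux.integrable_of_isCondExpOn hX hE0 hm10 hY1int.integrableOn
  have hm00i : IntegrableOn (fun ω => m00 (X ω)) E0 μ :=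
    EIFAux.integrable_of_isCondExpOn hX hE0 hm00 hY0int.integrableOn
  have hPTi : IntegrableOn (fun ω => mPT (X ω)) E0 μ :=
    EIFAux.integrable_of_isCondExpOn hX hE0 hPT0 ((hY10int.sub hY0int).integrableOn)
  have hkμ : ∀ᵐ ω ∂μ, m10 (X ω) - m00 (X ω) - mPT (X ω) = 0 := by
    have hf10 : Integrable (fun ω => Y1 ω - Y10 ω) (μ.restrict E0) :=
      (hY1int.sub hY10int).integrableOn
    have hk0 : (fun ω => m10 (X ω) - m00 (X ω) - mPT (X ω)) =ᵐ[μ.restrict E0]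
        (μ.restrict E0)[(fun ω => Y1 ω - Y10 ω) | MeasurableSpace.comap X inferInstance] := by
      refine ae_eq_condExp_of_forall_setIntegral_eq hle hf10 ?_ ?_ ?_
      · rintro t ⟨u, hu, rfl⟩ -
        exact ((hm10i.sub hm00i).sub hPTi).integrableOn
      · rintro t ⟨u, hu, rfl⟩ -
        rw [Measure.restrict_restrict (hX hu), Set.inter_comm]
        have e1 : ∫ ω in E0 ∩ X ⁻¹' u, (m10 (X ω) - m00 (X ω) - mPT (X ω)) ∂μ
            = (∫ ω in E0 ∩ X ⁻¹' u, m10 (X ω) ∂μ) - (∫ ω in E0 ∩ X ⁻¹' u, m00 (X ω) ∂μ)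
              - ∫ ω in E0 ∩ X ⁻¹' u, mPT (X ω) ∂μ := by
          have a1 : Integrable (fun ω => m10 (X ω) - m00 (X ω)) (μ.restrict (E0 ∩ X ⁻¹' u)) :=
            (hm10i.mono_set Set.inter_subset_left).sub (hm00i.mono_set Set.inter_subset_left)
          have a2 : Integrable (fun ω => mPT (X ω)) (μ.restrict (E0 ∩ X ⁻¹' u)) :=
            hPTi.mono_set Set.inter_subset_left
          have a3 : Integrable (fun ω => m10 (X ω)) (μ.restrict (E0 ∩ X ⁻¹' u)) :=
            hm10i.mono_set Set.inter_subset_left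
          have a4 : Integrable (fun ω => m00 (X ω)) (μ.restrict (E0 ∩ X ⁻¹' u)) :=
            hm00i.mono_set Set.inter_subset_left
          rw [integral_sub a1 a2, integral_sub a3 a4]
        have e2 : ∫ ω in E0 ∩ X ⁻¹' u, (Y10 ω - Y0 ω) ∂μ
            = (∫ ω in E0 ∩ X ⁻¹' u, Y10 ω ∂μ) - ∫ ω in E0 ∩ X ⁻¹' u, Y0 ω ∂μ :=
          integral_sub hY10int.integrableOn hY0int.integrableOn
        have e3 : ∫ ω in E0 ∩ X ⁻¹' u, (Y1 ω - Y10 ω) ∂μ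
            = (∫ ω in E0 ∩ X ⁻¹' u, Y1 ω ∂μ) - ∫ ω in E0 ∩ X ⁻¹' u, Y10 ω ∂μ :=
          integral_sub hY1int.integrableOn hY10int.integrableOn
        rw [e1, ← hm10.2 u hu, ← hm00.2 u hu, ← hPT0.2 u hu, e2, e3]
        ring
      · refine StronglyMeasurable.aestronglyMeasurable (Measurable.stronglyMeasurable ?_)
        intro t ht
        exact ⟨(fun x => m10 x - m00 x - mPT x) ⁻¹' t,
          ((hm10.1.sub hm00.1).sub hPT0.1) ht, rfl⟩
    have h0 : (fun ω => Y1 ω - Y10 ω) =ᵐ[μ.restrict E0] 0 := by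
      refine (ae_restrict_iff' hE0).2 (ae_of_all _ fun ω hω => ?_)
      have hω0 : A ω = 0 := hω
      simp [hcons ω, hω0]
    have hzero : (μ.restrict E0)[(fun ω => Y1 ω - Y10 ω) |
        MeasurableSpace.comap X inferInstance] =ᵐ[μ.restrict E0] 0 := by
      refine (condExp_congr_ae h0).trans ?_
      rw [condExp_zero]
    have hkE0 : (fun ω => m10 (X ω) - m00 (X ω) - mPT (X ω)) =ᵐ[μ.restrict E0] 0 :=
      hk0.trans hzero
    have hkm : Measurable (fun x => m10 x - m00 x - mPT x) := (hm10.1.sub hm00.1).sub hPT0.1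
    set N : Set 𝒳 := {x | m10 x - m00 x - mPT x ≠ 0} with hNdef
    have hNm : MeasurableSet N := (hkm (measurableSet_singleton 0)).compl
    have hSm : MeasurableSet (X ⁻¹' N) := hX hNm
    have hSE0 : μ (X ⁻¹' N ∩ E0) = 0 := by
      have h := ae_iff.1 hkE0
      rw [Measure.restrict_apply' hE0] at h
      convert h using 2
      rfl
    have hπXi : Integrable (fun ω => π (X ω)) μ := by
      have := EIFAux.integrable_of_isCondExpOn hX MeasurableSet.univ hπ hAint.integrableOn
      rwa [integrableOn_univ] at this
    have hμsplit : μ (X ⁻¹' N) = μ (X ⁻¹' N ∩ E1) := by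
      have hd := measure_inter_add_diff (μ := μ) (X ⁻¹' N) hE1
      have : X ⁻¹' N \ E1 = X ⁻¹' N ∩ E0 := by rw [Set.diff_eq, ← hE0c]
      rw [this, hSE0, add_zero] at hd
      exact hd.symm
    have h1 : ∫ ω in X ⁻¹' N, A ω ∂μ = ∫ ω in X ⁻¹' N, π (X ω) ∂μ := by
      have := hπ.2 N hNm
      simpa [Set.univ_inter] using this
    have h2 : ∫ ω in X ⁻¹' N, A ω ∂μ = (μ (E1 ∩ X ⁻¹' N)).toReal := by
      rw [integral_congr_ae (ae_of_all _ fun ω => hAeq ω), integral_indicator hE1,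
        Measure.restrict_restrict hE1, setIntegral_const, smul_eq_mul, mul_one, measureReal_def]
    have h3 : ∫ ω in X ⁻¹' N, (1:ℝ) ∂μ = (μ (X ⁻¹' N)).toReal := by
      rw [setIntegral_const, smul_eq_mul, mul_one, measureReal_def]
    have h4 : ∫ ω in X ⁻¹' N, (1 - π (X ω)) ∂μ = 0 := by
      rw [integral_sub (integrable_const 1).integrableOn hπXi.integrableOn, h3, ← h1, h2,
        Set.inter_comm, ← hμsplit, sub_self]
    have h5 : (fun ω => 1 - π (X ω)) =ᵐ[μ.restrict (X ⁻¹' N)] 0 := by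
      have hnn : 0 ≤ᵐ[μ.restrict (X ⁻¹' N)] fun ω => 1 - π (X ω) := by
        filter_upwards [ae_restrict_of_ae hπ01] with ω hω
        simp only [Pi.zero_apply]
        linarith [hω.2]
      have hi : Integrable (fun ω => 1 - π (X ω)) (μ.restrict (X ⁻¹' N)) :=
        ((integrable_const (1:ℝ)).sub hπXi).integrableOn
      exact (integral_eq_zero_iff_of_nonneg_ae hnn hi).1 h4
    have h6 : ∀ᵐ ω ∂(μ.restrict (X ⁻¹' N)), False := by
      filter_upwards [h5, ae_restrict_of_ae hπ01] with ω e1 e2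
      simp only [Pi.zero_apply] at e1
      linarith [e2.2]
    have h7 : μ (X ⁻¹' N) = 0 := by
      have h8 := ae_iff.1 h6
      rw [show {ω : Ω | ¬False} = Set.univ from by simp] at h8
      rwa [Measure.restrict_apply_univ] at h8
    refine ae_iff.2 ?_
    convert h7 using 2
    rfl
  -- Part B
  have hPartB : ∫ ω in E1, φf ω ∂μ = 0 := by
    set h1 : Ω → ℝ := fun ω => Y1 ω - m01 (X ω) - R0 ω / γ1 (X ω) * (Y0 ω - m01 (X ω))
        - m10 (X ω) + m00 (X ω) - θ with hh1def
    have hφE1 : ∀ ω ∈ E1, φf ω = EA⁻¹ * h1 ω := by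
      intro ω hω
      have hω1 : A ω = 1 := hω
      simp only [hφf, hh1def, hω1]
      ring
    have hφE1' : ∀ ω ∈ E1, h1 ω = EA * φf ω := by
      intro ω hω; rw [hφE1 ω hω]; field_simp
    have hh1int : IntegrableOn h1 E1 μ := by
      have hEφ : IntegrableOn (fun ω => EA * φf ω) E1 μ := hint.integrableOn.const_mul EA
      exact IntegrableOn.congr_fun hEφ (fun ω hω => (hφE1' ω hω).symm) hE1
    have hm01i : IntegrableOn (fun ω => m01 (X ω)) E1 μ :=
      EIFAux.integrable_of_isCondExpOn hX hE1 hm01 hY0int.integrableOn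
    have hPT1i : IntegrableOn (fun ω => mPT (X ω)) E1 μ :=
      EIFAux.integrable_of_isCondExpOn hX hE1 hPT1 ((hY10int.sub hY0int).integrableOn)
    set Q : Ω → ℝ := fun ω =>
      R0 ω / γ1 (X ω) * (Y0 ω - m01 (X ω)) + (m10 (X ω) - m00 (X ω)) with hQdef
    have hY1iE1 : IntegrableOn Y1 E1 μ := hY1int.integrableOn
    have hQint : IntegrableOn Q E1 μ := by
      have haux : IntegrableOn (fun ω => Y1 ω - m01 (X ω) - θ - h1 ω) E1 μ :=
        ((hY1iE1.sub hm01i).sub (integrable_const θ).integrableOn).sub hh1int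
      refine haux.congr (ae_of_all _ fun ω => ?_)
      simp only [hh1def, hQdef]
      ring
    set F : Ω → ℝ := fun ω => Q ω - mPT (X ω) with hFdef
    have hFint : IntegrableOn F E1 μ := hQint.sub hPT1i
    -- truncation sets
    set s : ℕ → Set 𝒳 := fun n => {x | ((n:ℝ)+1)⁻¹ ≤ γ1 x ∧ |m01 x| ≤ n} with hsdef
    have hsm : ∀ n, MeasurableSet (s n) := fun n =>
      (measurableSet_le measurable_const hγ1.1).inter
        (measurableSet_le hm01.1.abs measurable_const)
    set ind : ℕ → 𝒳 → ℝ := fun n => (s n).indicator (fun _ => (1:ℝ)) with hinddef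
    have hindm : ∀ n, Measurable (ind n) := fun n => measurable_const.indicator (hsm n)
    have hγpos : ∀ n x, x ∈ s n → (0:ℝ) < γ1 x := fun n x hx =>
      lt_of_lt_of_le (by positivity) hx.1
    have hγinv : ∀ n x, x ∈ s n → (γ1 x)⁻¹ ≤ (n:ℝ)+1 := by
      intro n x hx
      have hpos := hγpos n x hx
      have hn1 : (0:ℝ) < (n:ℝ)+1 := by positivity
      exact inv_le_of_inv_le₀ hn1 hx.1
    have hzero : ∀ n, ∫ ω in E1, ind n (X ω) * F ω ∂μ = 0 := by
      intro n
      set w1 : 𝒳 → ℝ := fun x => ind n x / γ1 x with hw1def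
      set w2 : 𝒳 → ℝ := fun x => ind n x * m01 x / γ1 x with hw2def
      have hw1m : Measurable w1 := (hindm n).div hγ1.1
      have hw2m : Measurable w2 := ((hindm n).mul hm01.1).div hγ1.1
      have hw1b : ∀ x, |w1 x| ≤ (n:ℝ)+1 := by
        intro x
        by_cases hx : x ∈ s n
        · have hpos := hγpos n x hx
          simp only [hw1def, hinddef, Set.indicator_of_mem hx]
          rw [abs_div, abs_one, abs_of_pos hpos, one_div]
          exact hγinv n x hx
        · simp only [hw1def, hinddef, Set.indicator_of_notMem hx, zero_div, abs_zero]
          positivity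
      have hw2b : ∀ x, |w2 x| ≤ ((n:ℝ)+1)*(n:ℝ) := by
        intro x
        by_cases hx : x ∈ s n
        · have hpos := hγpos n x hx
          simp only [hw2def, hinddef, Set.indicator_of_mem hx, one_mul]
          rw [abs_div, abs_of_pos hpos, div_le_iff₀ hpos]
          have h2 := hγinv n x hx
          have h3 := hx.2
          have h4 : (γ1 x)⁻¹ * γ1 x = 1 := inv_mul_cancel₀ hpos.ne'
          have h5 : 1 ≤ ((n:ℝ)+1) * γ1 x := by nlinarith
          have h6 : (n:ℝ) * 1 ≤ (n:ℝ) * (((n:ℝ)+1) * γ1 x) :=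
            mul_le_mul_of_nonneg_left h5 (Nat.cast_nonneg n)
          nlinarith [h3, h6]
        · simp only [hw2def, hinddef, Set.indicator_of_notMem hx, zero_mul, zero_div, abs_zero]
          positivity
      have c1 : IntegrableOn (fun ω => w1 (X ω) * (Y0 ω * R0 ω)) E1 μ :=
        hY0R0int.integrableOn.bdd_mul (c := (n:ℝ)+1) (hw1m.comp hX).aestronglyMeasurable
          (ae_of_all _ fun ω => by rw [Real.norm_eq_abs]; exact hw1b _)
      have c2 : IntegrableOn (fun ω => w2 (X ω) * R0 ω) E1 μ :=
        hR0int.integrableOn.bdd_mul (c := ((n:ℝ)+1)*(n:ℝ)) (hw2m.comp hX).aestronglyMeasurable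
          (ae_of_all _ fun ω => by rw [Real.norm_eq_abs]; exact hw2b _)
      have e1 : ∫ ω in E1, w1 (X ω) * (Y0 ω * R0 ω) ∂μ
          = ∫ ω in E1, w1 (X ω) * (m01 (X ω) * γ1 (X ω)) ∂μ :=
        EIFAux.weighted_integral_eq hX hE1 hCI1 hY0R0int.integrableOn w1 hw1m _ hw1b
      have e2 : ∫ ω in E1, w2 (X ω) * R0 ω ∂μ = ∫ ω in E1, w2 (X ω) * γ1 (X ω) ∂μ :=
        EIFAux.weighted_integral_eq hX hE1 hγ1 hR0int.integrableOn w2 hw2m _ hw2b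
      have e3 : ∫ ω in E1, w1 (X ω) * (m01 (X ω) * γ1 (X ω)) ∂μ
          = ∫ ω in E1, w2 (X ω) * γ1 (X ω) ∂μ := by
        refine integral_congr_ae (ae_of_all _ fun ω => ?_)
        simp only [hw1def, hw2def]
        ring
      have d1 : IntegrableOn
          (fun ω => w1 (X ω) * (Y0 ω * R0 ω) - w2 (X ω) * R0 ω) E1 μ := c1.sub c2
      have hp1 : ∫ ω in E1, (w1 (X ω) * (Y0 ω * R0 ω) - w2 (X ω) * R0 ω) ∂μ = 0 := by
        rw [integral_sub c1 c2, e1, e2, e3, sub_self]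
      have c3 : IntegrableOn
          (fun ω => ind n (X ω) * (m10 (X ω) - m00 (X ω) - mPT (X ω))) E1 μ := by
        refine (integrable_zero _ _ _).congr ?_
        filter_upwards [ae_restrict_of_ae hkμ] with ω hω
        rw [hω, mul_zero]
        rfl
      have hp2 : ∫ ω in E1, ind n (X ω) * (m10 (X ω) - m00 (X ω) - mPT (X ω)) ∂μ = 0 := by
        have heq : (fun ω => ind n (X ω) * (m10 (X ω) - m00 (X ω) - mPT (X ω)))
            =ᵐ[μ.restrict E1] (fun _ => (0:ℝ)) := by
          filter_upwards [ae_restrict_of_ae hkμ] with ω hω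
          rw [hω, mul_zero]
        rw [integral_congr_ae heq, integral_zero]
      have hdecomp : ∀ ω, ind n (X ω) * F ω =
          (w1 (X ω) * (Y0 ω * R0 ω) - w2 (X ω) * R0 ω)
            + ind n (X ω) * (m10 (X ω) - m00 (X ω) - mPT (X ω)) := by
        intro ω
        simp only [hFdef, hQdef, hw1def, hw2def]
        ring
      rw [integral_congr_ae (ae_of_all _ hdecomp), integral_add d1 c3, hp1, hp2, add_zero]
    have hFmeas : AEStronglyMeasurable F (μ.restrict E1) := hFint.1
    have hconv : Filter.Tendsto (fun n => ∫ ω in E1, ind n (X ω) * F ω ∂μ)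
        Filter.atTop (nhds (∫ ω in E1, F ω ∂μ)) := by
      refine tendsto_integral_of_dominated_convergence (fun ω => |F ω|)
        (fun n => (((hindm n).comp hX).aestronglyMeasurable).mul hFmeas)
        hFint.abs ?_ ?_
      · intro n
        refine ae_of_all _ fun ω => ?_
        rw [Real.norm_eq_abs, abs_mul]
        refine mul_le_of_le_one_left (abs_nonneg _) ?_
        by_cases hx : X ω ∈ s n
        · simp [hinddef, Set.indicator_of_mem hx]
        · simp [hinddef, Set.indicator_of_notMem hx]
      · filter_upwards [ae_restrict_of_ae hγ1ol] with ω hω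
        obtain ⟨N1, hN1⟩ := exists_nat_ge (γ1 (X ω))⁻¹
        obtain ⟨N2, hN2⟩ := exists_nat_ge (|m01 (X ω)|)
        have hev : ∀ n ≥ max N1 N2, ind n (X ω) * F ω = F ω := by
          intro n hn
          have hmem : X ω ∈ s n := by
            constructor
            · have hpos : (0:ℝ) < γ1 (X ω) := hω.1
              have h1 : (γ1 (X ω))⁻¹ ≤ (n:ℝ)+1 := by
                refine le_trans hN1 ?_
                have h2 : (N1:ℝ) ≤ (n:ℝ) := by
                  exact_mod_cast le_trans (le_max_left N1 N2) hn
                linarith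
              exact inv_le_of_inv_le₀ hpos h1
            · refine le_trans hN2 ?_
              exact_mod_cast le_trans (le_max_right N1 N2) hn
          rw [hinddef]
          simp [Set.indicator_of_mem hmem]
        exact tendsto_atTop_of_eventually_const hev
    simp only [hzero] at hconv
    have hF0 : ∫ ω in E1, F ω ∂μ = 0 := tendsto_nhds_unique hconv tendsto_const_nhds
    have hQcore : ∫ ω in E1, Q ω ∂μ = ∫ ω in E1, mPT (X ω) ∂μ := by
      have := integral_sub hQint hPT1i
      rw [show (∫ ω in E1, (Q ω - mPT (X ω)) ∂μ) = 0 from hF0] at this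
      linarith [this]
    -- assembly
    have iY1 : ∫ ω in E1, Y1 ω ∂μ = ∫ ω in E1, Y11 ω ∂μ := by
      refine setIntegral_congr_fun hE1 fun ω hω => ?_
      have hω1 : A ω = 1 := hω
      rw [hcons ω, hω1]; ring
    have im01 : ∫ ω in E1, m01 (X ω) ∂μ = ∫ ω in E1, Y0 ω ∂μ := by
      have := hm01.2 Set.univ MeasurableSet.univ
      simpa using this.symm
    have iPT : ∫ ω in E1, mPT (X ω) ∂μ
        = (∫ ω in E1, Y10 ω ∂μ) - ∫ ω in E1, Y0 ω ∂μ := by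
      have h := hPT1.2 Set.univ MeasurableSet.univ
      simp only [Set.preimage_univ, Set.inter_univ] at h
      rw [← h, integral_sub hY10int.integrableOn hY0int.integrableOn]
    have hc : (μ E1).toReal ≠ 0 := by rw [← hEA']; exact hEAne
    have iθ : ∫ ω in E1, (θ:ℝ) ∂μ = (∫ ω in E1, Y11 ω ∂μ) - ∫ ω in E1, Y10 ω ∂μ := by
      rw [setIntegral_const, smul_eq_mul, measureReal_def, hθ, mul_comm, div_mul_cancel₀ _ hc,
        integral_sub hY11int.integrableOn hY10int.integrableOn]
    have b1 : IntegrableOn (fun ω => Y1 ω - m01 (X ω)) E1 μ := hY1iE1.sub hm01i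
    have b2 : IntegrableOn (fun ω => Y1 ω - m01 (X ω) - Q ω) E1 μ := b1.sub hQint
    have hsplit1 : ∫ ω in E1, h1 ω ∂μ =
        ((∫ ω in E1, Y1 ω ∂μ) - (∫ ω in E1, m01 (X ω) ∂μ) - (∫ ω in E1, Q ω ∂μ))
          - ∫ ω in E1, (θ:ℝ) ∂μ := by
      rw [show (∫ ω in E1, h1 ω ∂μ)
          = ∫ ω in E1, ((Y1 ω - m01 (X ω) - Q ω) - θ) ∂μ from
        integral_congr_ae (ae_of_all _ fun ω => by simp only [hh1def, hQdef]; ring),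
        integral_sub b2 (integrable_const θ).integrableOn,
        integral_sub b1 hQint, integral_sub hY1iE1 hm01i]
    rw [setIntegral_congr_fun hE1 (fun ω hω => hφE1 ω hω), integral_const_mul, hsplit1,
      iY1, im01, iθ, hQcore, iPT]
    ring
  -- Part A
  have hPartA : ∫ ω in E0, φf ω ∂μ = 0 := by
    set g : 𝒳 → ℝ := fun x => π x / (1 - π x) with hgdef
    have hgm : Measurable g := hπ.1.div (measurable_const.sub hπ.1)
    set K : Ω → ℝ := fun ω =>
      Y1 ω - R0 ω / γ0 (X ω) * (Y0 ω - m00 (X ω)) - m10 (X ω) with hKdef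
    set G : Ω → ℝ := fun ω => g (X ω) * K ω with hGdef
    have hφE0 : ∀ ω ∈ E0, φf ω = -(EA⁻¹ * G ω) := by
      intro ω hω
      have hω0 : A ω = 0 := hω
      simp only [hφf, hGdef, hKdef, hgdef, hω0, div_mul_eq_div_div]
      ring
    have hGint : IntegrableOn G E0 μ := by
      have hEφ : IntegrableOn (fun ω => (-EA) * φf ω) E0 μ := hint.integrableOn.const_mul _
      refine IntegrableOn.congr_fun hEφ (fun ω hω => ?_) hE0
      rw [hφE0 ω hω, show -EA * -(EA⁻¹ * G ω) = (EA * EA⁻¹) * G ω from by ring,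
        mul_inv_cancel₀ hEAne, one_mul]
    set s0 : ℕ → Set 𝒳 := fun n =>
      {x | ((n:ℝ)+1)⁻¹ ≤ γ0 x ∧ |m00 x| ≤ n ∧ |g x| ≤ n} with hs0def
    have hs0m : ∀ n, MeasurableSet (s0 n) := fun n =>
      (measurableSet_le measurable_const hγ0.1).inter
        ((measurableSet_le hm00.1.abs measurable_const).inter
          (measurableSet_le hgm.abs measurable_const))
    set ind0 : ℕ → 𝒳 → ℝ := fun n => (s0 n).indicator (fun _ => (1:ℝ)) with hind0def
    have hind0m : ∀ n, Measurable (ind0 n) := fun n => measurable_const.indicator (hs0m n)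
    have hγ0pos : ∀ n x, x ∈ s0 n → (0:ℝ) < γ0 x := fun n x hx =>
      lt_of_lt_of_le (by positivity) hx.1
    have hγ0inv : ∀ n x, x ∈ s0 n → (γ0 x)⁻¹ ≤ (n:ℝ)+1 := fun n x hx =>
      inv_le_of_inv_le₀ (by positivity) hx.1
    have hzero0 : ∀ n, ∫ ω in E0, ind0 n (X ω) * G ω ∂μ = 0 := by
      intro n
      set wA : 𝒳 → ℝ := fun x => ind0 n x * g x with hwAdef
      set wB : 𝒳 → ℝ := fun x => ind0 n x * g x / γ0 x with hwBdef
      set wC : 𝒳 → ℝ := fun x => ind0 n x * g x * m00 x / γ0 x with hwCdef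
      have hwAm : Measurable wA := (hind0m n).mul hgm
      have hwBm : Measurable wB := ((hind0m n).mul hgm).div hγ0.1
      have hwCm : Measurable wC := (((hind0m n).mul hgm).mul hm00.1).div hγ0.1
      have hwAb : ∀ x, |wA x| ≤ (n:ℝ) := by
        intro x
        by_cases hx : x ∈ s0 n
        · simp only [hwAdef, hind0def, Set.indicator_of_mem hx, one_mul]
          exact hx.2.2
        · simp only [hwAdef, hind0def, Set.indicator_of_notMem hx, zero_mul, abs_zero]
          positivity
      have hwBb : ∀ x, |wB x| ≤ (n:ℝ) * ((n:ℝ)+1) := by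
        intro x
        by_cases hx : x ∈ s0 n
        · have hpos := hγ0pos n x hx
          simp only [hwBdef, hind0def, Set.indicator_of_mem hx, one_mul]
          rw [abs_div, abs_of_pos hpos, div_le_iff₀ hpos]
          have h2 := hγ0inv n x hx
          have h4 : (γ0 x)⁻¹ * γ0 x = 1 := inv_mul_cancel₀ hpos.ne'
          have h5 : 1 ≤ ((n:ℝ)+1) * γ0 x := by nlinarith
          have h6 : (n:ℝ) * 1 ≤ (n:ℝ) * (((n:ℝ)+1) * γ0 x) :=
            mul_le_mul_of_nonneg_left h5 (Nat.cast_nonneg n)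
          nlinarith [hx.2.2]
        · simp only [hwBdef, hind0def, Set.indicator_of_notMem hx, zero_mul, zero_div, abs_zero]
          positivity
      have hwCb : ∀ x, |wC x| ≤ (n:ℝ) * (n:ℝ) * ((n:ℝ)+1) := by
        intro x
        by_cases hx : x ∈ s0 n
        · have hpos := hγ0pos n x hx
          simp only [hwCdef, hind0def, Set.indicator_of_mem hx, one_mul]
          rw [abs_div, abs_of_pos hpos, div_le_iff₀ hpos, abs_mul]
          have h2 := hγ0inv n x hx
          have h4 : (γ0 x)⁻¹ * γ0 x = 1 := inv_mul_cancel₀ hpos.ne'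
          have h5 : 1 ≤ ((n:ℝ)+1) * γ0 x := by nlinarith
          have h7 : |g x| * |m00 x| ≤ (n:ℝ) * (n:ℝ) := by
            have := hx.2.1
            have := hx.2.2
            exact mul_le_mul hx.2.2 hx.2.1 (abs_nonneg _) (Nat.cast_nonneg n)
          have h8 : (n:ℝ) * (n:ℝ) * 1 ≤ (n:ℝ) * (n:ℝ) * (((n:ℝ)+1) * γ0 x) :=
            mul_le_mul_of_nonneg_left h5 (by positivity)
          nlinarith
        · simp only [hwCdef, hind0def, Set.indicator_of_notMem hx, zero_mul, zero_div, abs_zero]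
          positivity
      have cA1 : IntegrableOn (fun ω => wA (X ω) * Y1 ω) E0 μ :=
        hY1int.integrableOn.bdd_mul (c := (n:ℝ)) (hwAm.comp hX).aestronglyMeasurable
          (ae_of_all _ fun ω => by rw [Real.norm_eq_abs]; exact hwAb _)
      have cA2 : IntegrableOn (fun ω => wA (X ω) * m10 (X ω)) E0 μ :=
        hm10i.bdd_mul (c := (n:ℝ)) (hwAm.comp hX).aestronglyMeasurable
          (ae_of_all _ fun ω => by rw [Real.norm_eq_abs]; exact hwAb _)
      have cB : IntegrableOn (fun ω => wB (X ω) * (Y0 ω * R0 ω)) E0 μ :=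
        hY0R0int.integrableOn.bdd_mul (c := (n:ℝ) * ((n:ℝ)+1)) (hwBm.comp hX).aestronglyMeasurable
          (ae_of_all _ fun ω => by rw [Real.norm_eq_abs]; exact hwBb _)
      have cC : IntegrableOn (fun ω => wC (X ω) * R0 ω) E0 μ :=
        hR0int.integrableOn.bdd_mul (c := (n:ℝ) * (n:ℝ) * ((n:ℝ)+1)) (hwCm.comp hX).aestronglyMeasurable
          (ae_of_all _ fun ω => by rw [Real.norm_eq_abs]; exact hwCb _)
      have eA : ∫ ω in E0, wA (X ω) * Y1 ω ∂μ = ∫ ω in E0, wA (X ω) * m10 (X ω) ∂μ :=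
        EIFAux.weighted_integral_eq hX hE0 hm10 hY1int.integrableOn wA hwAm _ hwAb
      have eB : ∫ ω in E0, wB (X ω) * (Y0 ω * R0 ω) ∂μ
          = ∫ ω in E0, wB (X ω) * (m00 (X ω) * γ0 (X ω)) ∂μ :=
        EIFAux.weighted_integral_eq hX hE0 hCI0 hY0R0int.integrableOn wB hwBm _ hwBb
      have eC : ∫ ω in E0, wC (X ω) * R0 ω ∂μ = ∫ ω in E0, wC (X ω) * γ0 (X ω) ∂μ :=
        EIFAux.weighted_integral_eq hX hE0 hγ0 hR0int.integrableOn wC hwCm _ hwCb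
      have eD : ∫ ω in E0, wB (X ω) * (m00 (X ω) * γ0 (X ω)) ∂μ
          = ∫ ω in E0, wC (X ω) * γ0 (X ω) ∂μ := by
        refine integral_congr_ae (ae_of_all _ fun ω => ?_)
        simp only [hwBdef, hwCdef]
        ring
      have hdecomp : ∀ ω, ind0 n (X ω) * G ω =
          ((wA (X ω) * Y1 ω - wA (X ω) * m10 (X ω)) - wB (X ω) * (Y0 ω * R0 ω))
            + wC (X ω) * R0 ω := by
        intro ω
        simp only [hGdef, hKdef, hwAdef, hwBdef, hwCdef]
        ring
      have dA1 : IntegrableOn (fun ω => wA (X ω) * Y1 ω - wA (X ω) * m10 (X ω)) E0 μ :=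
        cA1.sub cA2
      have dA2 : IntegrableOn (fun ω =>
          (wA (X ω) * Y1 ω - wA (X ω) * m10 (X ω)) - wB (X ω) * (Y0 ω * R0 ω)) E0 μ :=
        dA1.sub cB
      rw [integral_congr_ae (ae_of_all _ hdecomp), integral_add dA2 cC,
        integral_sub dA1 cB, integral_sub cA1 cA2, eA, eB, eC, eD]
      ring
    have hGmeas : AEStronglyMeasurable G (μ.restrict E0) := hGint.1
    have hconv0 : Filter.Tendsto (fun n => ∫ ω in E0, ind0 n (X ω) * G ω ∂μ)
        Filter.atTop (nhds (∫ ω in E0, G ω ∂μ)) := by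
      refine tendsto_integral_of_dominated_convergence (fun ω => |G ω|)
        (fun n => (((hind0m n).comp hX).aestronglyMeasurable).mul hGmeas)
        hGint.abs ?_ ?_
      · intro n
        refine ae_of_all _ fun ω => ?_
        rw [Real.norm_eq_abs, abs_mul]
        refine mul_le_of_le_one_left (abs_nonneg _) ?_
        by_cases hx : X ω ∈ s0 n
        · simp [hind0def, Set.indicator_of_mem hx]
        · simp [hind0def, Set.indicator_of_notMem hx]
      · filter_upwards [ae_restrict_of_ae hγ0ol] with ω hω
        obtain ⟨N1, hN1⟩ := exists_nat_ge (γ0 (X ω))⁻¹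
        obtain ⟨N2, hN2⟩ := exists_nat_ge (|m00 (X ω)|)
        obtain ⟨N3, hN3⟩ := exists_nat_ge (|g (X ω)|)
        have hev : ∀ n ≥ max (max N1 N2) N3, ind0 n (X ω) * G ω = G ω := by
          intro n hn
          have hn1 : (N1:ℝ) ≤ (n:ℝ) := by
            exact_mod_cast le_trans (le_trans (le_max_left N1 N2) (le_max_left _ N3)) hn
          have hn2 : (N2:ℝ) ≤ (n:ℝ) := by
            exact_mod_cast le_trans (le_trans (le_max_right N1 N2) (le_max_left _ N3)) hn
          have hn3 : (N3:ℝ) ≤ (n:ℝ) := by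
            exact_mod_cast le_trans (le_max_right (max N1 N2) N3) hn
          have hmem : X ω ∈ s0 n := by
            refine ⟨?_, ?_, ?_⟩
            · have hpos : (0:ℝ) < γ0 (X ω) := hω.1
              have h1 : (γ0 (X ω))⁻¹ ≤ (n:ℝ)+1 := by linarith [hN1]
              exact inv_le_of_inv_le₀ hpos h1
            · linarith [hN2]
            · linarith [hN3]
          rw [hind0def]
          simp [Set.indicator_of_mem hmem]
        exact tendsto_atTop_of_eventually_const hev
    simp only [hzero0] at hconv0
    have hG0 : ∫ ω in E0, G ω ∂μ = 0 := tendsto_nhds_unique hconv0 tendsto_const_nhds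
    rw [setIntegral_congr_fun hE0 (fun ω hω => hφE0 ω hω)]
    rw [show (∫ ω in E0, -(EA⁻¹ * G ω) ∂μ) = ∫ ω in E0, (-EA⁻¹) * G ω ∂μ from
      integral_congr_ae (ae_of_all _ fun ω => by ring), integral_const_mul, hG0, mul_zero]
  have := integral_add_compl hE1 hint
  rw [show ∀ f : Ω → ℝ, (∫ ω in E1ᶜ, f ω ∂μ) = ∫ ω in E0, f ω ∂μ from
    fun f => by rw [hE0c], hPartA, hPartB] at this
  simpa using this.symm
end

section
/- Under the outcome-dependent MAR assumption Y0 ⊥ R0 | (X, Y1, A) with γ(X,Y1,A) = P(R0=1 | X, Y1, A) > 0 a.s., the conditional bias of the augmented pseudo-outcome satisfies: E[ μ̂0(X,Y1,0) + (R0/γ̂(X,Y1,0))·(Y0 - μ̂0(X,Y1,0)) | X, Y1, A=0 ] - μ0(X,Y1,0) = (μ̂0(X,Y1,0) - μ0(X,Y1,0))·(γ̂(X,Y1,0) - γ(X,Y1,0))/γ̂(X,Y1,0), where μ0(X,Y1,0) = E[Y0 | X, Y1, A=0]. -/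
open MeasureTheory

lemma isCondExp_aux {Ω : Type*} (m : MeasurableSpace Ω) [inst : MeasurableSpace Ω]
    (hle : m ≤ inst) (ν : Measure Ω) [IsFiniteMeasure ν]
    (Y : Ω → ℝ) (hYint : Integrable Y ν) (G : Ω → ℝ) (hG : Measurable[m] G)
    (Heq : ∀ t : Set Ω, MeasurableSet[m] t →
      ∫ ω in t, Y ω ∂ν = ∫ ω in t, G ω ∂ν) :
    G =ᵐ[ν] ν[Y | m] := by
  haveI : SigmaFinite (ν.trim hle) := inferInstance
  have hh_sm : StronglyMeasurable[m] (ν[Y | m]) := stronglyMeasurable_condExp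
  have hh_meas : Measurable[m] (ν[Y | m]) := hh_sm.measurable
  have Heq' : ∀ t : Set Ω, MeasurableSet[m] t →
      ∫ ω in t, G ω ∂ν = ∫ ω in t, (ν[Y | m]) ω ∂ν := by
    intro t ht
    rw [setIntegral_condExp hle hYint ht, ← Heq t ht]
  have hSmeas : ∀ n : ℕ, MeasurableSet[m] {ω | |G ω| ≤ (n : ℝ) ∧ |(ν[Y | m]) ω| ≤ (n : ℝ)} := by
    intro n
    exact MeasurableSet.inter (hG (measurable_abs measurableSet_Iic)) (hh_meas (measurable_abs measurableSet_Iic))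
  have hSmeas0 : ∀ n : ℕ, MeasurableSet[inst] {ω | |G ω| ≤ (n : ℝ) ∧ |(ν[Y | m]) ω| ≤ (n : ℝ)} :=
    fun n => hle _ (hSmeas n)
  have key : ∀ n : ℕ,
      G =ᵐ[ν.restrict {ω | |G ω| ≤ (n : ℝ) ∧ |(ν[Y | m]) ω| ≤ (n : ℝ)}] (ν[Y | m]) := by
    intro n
    refine ae_eq_of_forall_setIntegral_eq_of_sigmaFinite' hle ?_ ?_ ?_ ?_ ?_
    · intro t ht _
      refine Integrable.integrableOn ?_
      refine Integrable.mono' (integrable_const (n : ℝ))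
        ((hG.stronglyMeasurable.mono hle).aestronglyMeasurable) ?_
      refine (ae_restrict_iff' (hSmeas0 n)).2 (ae_of_all _ fun ω hω => ?_)
      simpa [Real.norm_eq_abs] using hω.1
    · intro t ht _
      refine Integrable.integrableOn ?_
      refine Integrable.mono' (integrable_const (n : ℝ))
        ((hh_sm.mono hle).aestronglyMeasurable) ?_
      refine (ae_restrict_iff' (hSmeas0 n)).2 (ae_of_all _ fun ω hω => ?_)
      simpa [Real.norm_eq_abs] using hω.2
    · intro t ht _
      rw [Measure.restrict_restrict (hle _ ht)]
      exact Heq' _ (ht.inter (hSmeas n))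
    · exact StronglyMeasurable.aestronglyMeasurable hG.stronglyMeasurable
    · exact StronglyMeasurable.aestronglyMeasurable hh_sm
  have all : ∀ᵐ ω ∂ν, ∀ n : ℕ,
      ω ∈ {ω | |G ω| ≤ (n : ℝ) ∧ |(ν[Y | m]) ω| ≤ (n : ℝ)} → G ω = (ν[Y | m]) ω :=
    ae_all_iff.2 fun n => (ae_restrict_iff' (hSmeas0 n)).1 (key n)
  filter_upwards [all] with ω hω
  obtain ⟨n, hn⟩ := exists_nat_ge (max |G ω| |(ν[Y | m]) ω|)
  exact hω n ⟨le_trans (le_max_left _ _) hn, le_trans (le_max_right _ _) hn⟩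

lemma condexp_pseudo {Ω 𝒳' : Type*} (mW : MeasurableSpace Ω) [inst : MeasurableSpace Ω]
    [MeasurableSpace 𝒳'] (hle : mW ≤ inst)
    (ν : Measure Ω) [IsFiniteMeasure ν] (W : Ω → 𝒳') (hWm : Measurable[mW] W)
    (R0 Y0 : Ω → ℝ) (hR0 : Measurable R0) (hY0 : Measurable Y0)
    (hR0bd : ∀ ω, |R0 ω| ≤ 1)
    (hR0int : Integrable R0 ν) (hY0R0int : Integrable (fun ω => Y0 ω * R0 ω) ν)
    (m γ mhat γhat : 𝒳' → ℝ) (hmhat : Measurable mhat) (hγhat : Measurable γhat)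
    (ε : ℝ) (hε : 0 < ε) (hγhatε : ∀ w, ε ≤ γhat w)
    (hγ' : (fun ω => γ (W ω)) =ᵐ[ν] ν[R0 | mW])
    (hCI' : (fun ω => m (W ω) * γ (W ω)) =ᵐ[ν] ν[(fun ω => Y0 ω * R0 ω) | mW])
    (hFint : Integrable (fun ω => mhat (W ω) + R0 ω / γhat (W ω) * (Y0 ω - mhat (W ω))) ν) :
    ν[(fun ω => mhat (W ω) + R0 ω / γhat (W ω) * (Y0 ω - mhat (W ω))) | mW]
      =ᵐ[ν] fun ω =>
        m (W ω) + (mhat (W ω) - m (W ω)) * (γhat (W ω) - γ (W ω)) / γhat (W ω) := by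
  have hγhat0 : ∀ w, (0:ℝ) < γhat w := fun w => lt_of_lt_of_le hε (hγhatε w)
  have hinvbd : ∀ w, (γhat w)⁻¹ ≤ ε⁻¹ := fun w => inv_anti₀ hε (hγhatε w)
  have hinvpos : ∀ w, (0:ℝ) < (γhat w)⁻¹ := fun w => inv_pos.2 (hγhat0 w)
  have hγhatWm : Measurable[mW] fun ω => (γhat (W ω))⁻¹ := (hγhat.comp hWm).inv
  have hmhatWm : Measurable[mW] fun ω => mhat (W ω) := hmhat.comp hWm
  have sminv : StronglyMeasurable[mW] fun ω => (γhat (W ω))⁻¹ := hγhatWm.stronglyMeasurable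
  have smmhat : StronglyMeasurable[mW] fun ω => mhat (W ω) := hmhatWm.stronglyMeasurable
  have hinvsm : AEStronglyMeasurable (fun ω => (γhat (W ω))⁻¹) ν :=
    (sminv.mono hle).aestronglyMeasurable
  have hg1int : Integrable ((fun ω => (γhat (W ω))⁻¹) * R0) ν := by
    refine Integrable.mono' (integrable_const (ε⁻¹ : ℝ))
      (hinvsm.mul hR0.aestronglyMeasurable) (ae_of_all _ fun ω => ?_)
    rw [Pi.mul_apply, Real.norm_eq_abs, abs_mul, abs_of_pos (hinvpos _)]
    calc (γhat (W ω))⁻¹ * |R0 ω| ≤ ε⁻¹ * 1 :=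
          mul_le_mul (hinvbd _) (hR0bd ω) (abs_nonneg _) (inv_pos.2 hε).le
      _ = ε⁻¹ := mul_one _
  have hf2int : Integrable ((fun ω => (γhat (W ω))⁻¹) * (fun ω => Y0 ω * R0 ω)) ν := by
    refine Integrable.mono' (hY0R0int.norm.const_mul ε⁻¹)
      (hinvsm.mul (hY0.mul hR0).aestronglyMeasurable) (ae_of_all _ fun ω => ?_)
    rw [Pi.mul_apply, Real.norm_eq_abs, abs_mul, abs_of_pos (hinvpos _), Real.norm_eq_abs]
    exact mul_le_mul_of_nonneg_right (hinvbd _) (abs_nonneg _)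
  have h1 : Integrable ((fun _ : Ω => (1:ℝ)) - (fun ω => (γhat (W ω))⁻¹) * R0) ν :=
    (integrable_const 1).sub hg1int
  have hf1int : Integrable
      ((fun ω => mhat (W ω)) * ((fun _ : Ω => (1:ℝ)) - (fun ω => (γhat (W ω))⁻¹) * R0)) ν := by
    refine (hFint.sub hf2int).congr (ae_of_all _ fun ω => ?_)
    simp only [Pi.sub_apply, Pi.mul_apply]
    ring
  have hFdec : (fun ω => mhat (W ω) + R0 ω / γhat (W ω) * (Y0 ω - mhat (W ω)))
      = (fun ω => mhat (W ω)) * ((fun _ : Ω => (1:ℝ)) - (fun ω => (γhat (W ω))⁻¹) * R0)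
        + (fun ω => (γhat (W ω))⁻¹) * (fun ω => Y0 ω * R0 ω) := by
    funext ω; simp only [Pi.add_apply, Pi.mul_apply, Pi.sub_apply]; ring
  have cg1 : ν[(fun ω => (γhat (W ω))⁻¹) * R0 | mW]
      =ᵐ[ν] (fun ω => (γhat (W ω))⁻¹) * (fun ω => γ (W ω)) :=
    (condExp_mul_of_stronglyMeasurable_left sminv hg1int hR0int).trans
      (Filter.EventuallyEq.mul (Filter.EventuallyEq.refl _ _) hγ'.symm)
  have c1sub : ν[(fun _ : Ω => (1:ℝ)) - (fun ω => (γhat (W ω))⁻¹) * R0 | mW]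
      =ᵐ[ν] (fun _ : Ω => (1:ℝ)) - (fun ω => (γhat (W ω))⁻¹) * (fun ω => γ (W ω)) :=
    (condExp_sub (integrable_const 1) hg1int _).trans
      (Filter.EventuallyEq.sub (ae_of_all _ fun ω => congrFun (condExp_const (μ := ν) hle (1:ℝ)) ω) cg1)
  have c1 : ν[(fun ω => mhat (W ω)) * ((fun _ : Ω => (1:ℝ)) - (fun ω => (γhat (W ω))⁻¹) * R0) | mW]
      =ᵐ[ν] (fun ω => mhat (W ω))
        * ((fun _ : Ω => (1:ℝ)) - (fun ω => (γhat (W ω))⁻¹) * (fun ω => γ (W ω))) :=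
    (condExp_mul_of_stronglyMeasurable_left smmhat hf1int h1).trans
      (Filter.EventuallyEq.mul (Filter.EventuallyEq.refl _ _) c1sub)
  have c2 : ν[(fun ω => (γhat (W ω))⁻¹) * (fun ω => Y0 ω * R0 ω) | mW]
      =ᵐ[ν] (fun ω => (γhat (W ω))⁻¹) * (fun ω => m (W ω) * γ (W ω)) :=
    (condExp_mul_of_stronglyMeasurable_left sminv hf2int hY0R0int).trans
      (Filter.EventuallyEq.mul (Filter.EventuallyEq.refl _ _) hCI'.symm)
  rw [hFdec]
  calc ν[(fun ω => mhat (W ω)) * ((fun _ : Ω => (1:ℝ)) - (fun ω => (γhat (W ω))⁻¹) * R0)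
        + (fun ω => (γhat (W ω))⁻¹) * (fun ω => Y0 ω * R0 ω) | mW]
      =ᵐ[ν] ν[(fun ω => mhat (W ω)) * ((fun _ : Ω => (1:ℝ)) - (fun ω => (γhat (W ω))⁻¹) * R0) | mW]
        + ν[(fun ω => (γhat (W ω))⁻¹) * (fun ω => Y0 ω * R0 ω) | mW] :=
      condExp_add hf1int hf2int _
    _ =ᵐ[ν] (fun ω => mhat (W ω))
          * ((fun _ : Ω => (1:ℝ)) - (fun ω => (γhat (W ω))⁻¹) * (fun ω => γ (W ω)))
        + (fun ω => (γhat (W ω))⁻¹) * (fun ω => m (W ω) * γ (W ω)) :=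
      Filter.EventuallyEq.add c1 c2
    _ =ᵐ[ν] fun ω =>
        m (W ω) + (mhat (W ω) - m (W ω)) * (γhat (W ω) - γ (W ω)) / γhat (W ω) := by
      refine ae_of_all _ fun ω => ?_
      simp only [Pi.add_apply, Pi.mul_apply, Pi.sub_apply]
      field_simp [ne_of_gt (hγhat0 (W ω))]
      ring

/-- **Conditional bias of the augmented pseudo-outcome under outcome-dependent MAR.**
Under `Y0 ⊥ R0 ∣ (X, Y1, A)` with `γ(X, Y1, 0) = P(R0=1 ∣ X, Y1, A=0) ∈ (0,1)` a.s.,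
for fixed measurable candidates `μ̂0, γ̂` with `γ̂ ≥ ε > 0`, the conditional bias of the
augmented pseudo-outcome satisfies
`E[μ̂0 + (R0/γ̂)(Y0 - μ̂0) ∣ X, Y1, A=0] - μ0 = (μ̂0 - μ0)·(γ̂ - γ)/γ̂`,
where `μ0(X, Y1, 0) = E[Y0 ∣ X, Y1, A=0]`. -/
theorem augmented_pseudo_outcome_conditional_bias
    {Ω 𝒳 : Type*} [MeasurableSpace Ω] [MeasurableSpace 𝒳]
    (μ : Measure Ω) [IsProbabilityMeasure μ]
    (X : Ω → 𝒳) (A R0 Y0 Y1 : Ω → ℝ)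
    (hX : Measurable X) (hA : Measurable A) (hR0 : Measurable R0)
    (hY0 : Measurable Y0) (hY1 : Measurable Y1)
    (hAbin : ∀ ω, A ω = 0 ∨ A ω = 1) (hR0bin : ∀ ω, R0 ω = 0 ∨ R0 ω = 1)
    (hY0int : Integrable Y0 μ) (hY1int : Integrable Y1 μ)
    (m γ : 𝒳 × ℝ → ℝ)
    -- m is a version of μ0(X, Y1, 0) = E[Y0 ∣ X, Y1, A=0]
    (hm : IsCondExpOn μ (fun ω => (X ω, Y1 ω)) {ω | A ω = 0} Y0 m)
    -- γ is a version of P(R0 = 1 ∣ X, Y1, A=0), lying in (0,1) a.s.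
    (hγ : IsCondExpOn μ (fun ω => (X ω, Y1 ω)) {ω | A ω = 0} R0 γ)
    (hγ01 : ∀ᵐ ω ∂μ, 0 < γ (X ω, Y1 ω) ∧ γ (X ω, Y1 ω) < 1)
    -- outcome-dependent MAR product rule: E[Y0·R0 ∣ X, Y1, A=0] = m·γ
    (hCI : IsCondExpOn μ (fun ω => (X ω, Y1 ω)) {ω | A ω = 0}
      (fun ω => Y0 ω * R0 ω) (fun w => m w * γ w))
    -- candidate nuisance functions with γ̂ bounded away from 0
    (mhat γhat : 𝒳 × ℝ → ℝ) (hmhat : Measurable mhat) (hγhat : Measurable γhat)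
    (ε : ℝ) (hε : 0 < ε) (hγhatε : ∀ w, ε ≤ γhat w)
    (hint : Integrable (fun ω =>
      mhat (X ω, Y1 ω) + R0 ω / γhat (X ω, Y1 ω) * (Y0 ω - mhat (X ω, Y1 ω))) μ) :
    IsCondExpOn μ (fun ω => (X ω, Y1 ω)) {ω | A ω = 0}
      (fun ω => mhat (X ω, Y1 ω) + R0 ω / γhat (X ω, Y1 ω) * (Y0 ω - mhat (X ω, Y1 ω)))
      (fun w => m w + (mhat w - m w) * (γhat w - γ w) / γhat w) := by
  have hW : Measurable fun ω => (X ω, Y1 ω) := hX.prodMk hY1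
  have hE : MeasurableSet {ω | A ω = 0} := hA (measurableSet_singleton 0)
  refine ⟨hm.1.add (((hmhat.sub hm.1).mul (hγhat.sub hγ.1)).div hγhat), ?_⟩
  intro s hs
  have conv : ∀ (f : Ω → ℝ) (s : Set (𝒳 × ℝ)), MeasurableSet s →
      ∫ ω in (fun ω => (X ω, Y1 ω)) ⁻¹' s, f ω ∂(μ.restrict {ω | A ω = 0})
        = ∫ ω in {ω | A ω = 0} ∩ (fun ω => (X ω, Y1 ω)) ⁻¹' s, f ω ∂μ := by
    intro f s hs
    rw [Measure.restrict_restrict (hW hs), Set.inter_comm]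
  have hle : MeasurableSpace.comap (fun ω => (X ω, Y1 ω)) inferInstance
      ≤ (inferInstance : MeasurableSpace Ω) := hW.comap_le
  have hWm : Measurable[MeasurableSpace.comap (fun ω => (X ω, Y1 ω)) inferInstance]
      fun ω => (X ω, Y1 ω) := Measurable.of_comap_le le_rfl
  have hR0bd : ∀ ω, |R0 ω| ≤ 1 := by
    intro ω; rcases hR0bin ω with h | h <;> rw [h] <;> norm_num
  have hR0int : Integrable R0 (μ.restrict {ω | A ω = 0}) := by
    refine Integrable.restrict ?_
    refine Integrable.mono' (integrable_const (1:ℝ)) hR0.aestronglyMeasurable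
      (ae_of_all _ fun ω => ?_)
    rw [Real.norm_eq_abs]; exact hR0bd ω
  have hY0R0int : Integrable (fun ω => Y0 ω * R0 ω) (μ.restrict {ω | A ω = 0}) := by
    refine Integrable.restrict ?_
    refine Integrable.mono' hY0int.norm (hY0.mul hR0).aestronglyMeasurable
      (ae_of_all _ fun ω => ?_)
    rw [Real.norm_eq_abs, Real.norm_eq_abs, abs_mul]
    calc |Y0 ω| * |R0 ω| ≤ |Y0 ω| * 1 :=
          mul_le_mul_of_nonneg_left (hR0bd ω) (abs_nonneg _)
      _ = |Y0 ω| := mul_one _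
  have hγ' : (fun ω => γ (X ω, Y1 ω)) =ᵐ[μ.restrict {ω | A ω = 0}]
      (μ.restrict {ω | A ω = 0})[R0 | MeasurableSpace.comap (fun ω => (X ω, Y1 ω)) inferInstance] := by
    refine isCondExp_aux _ hle _ R0 hR0int _ (hγ.1.comp hWm) ?_
    rintro t ⟨s', hs', rfl⟩
    rw [conv R0 s' hs', conv _ s' hs']
    exact hγ.2 s' hs'
  have hCI' : (fun ω => m (X ω, Y1 ω) * γ (X ω, Y1 ω)) =ᵐ[μ.restrict {ω | A ω = 0}]
      (μ.restrict {ω | A ω = 0})[(fun ω => Y0 ω * R0 ω) |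
        MeasurableSpace.comap (fun ω => (X ω, Y1 ω)) inferInstance] := by
    refine isCondExp_aux _ hle _ _ hY0R0int _ ((hm.1.mul hγ.1).comp hWm) ?_
    rintro t ⟨s', hs', rfl⟩
    rw [conv _ s' hs', conv _ s' hs']
    exact hCI.2 s' hs'
  have key := condexp_pseudo _ hle (μ.restrict {ω | A ω = 0}) _ hWm R0 Y0 hR0 hY0 hR0bd
    hR0int hY0R0int m γ mhat γhat hmhat hγhat ε hε hγhatε hγ' hCI' hint.restrict
  calc ∫ ω in {ω | A ω = 0} ∩ (fun ω => (X ω, Y1 ω)) ⁻¹' s,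
        mhat (X ω, Y1 ω) + R0 ω / γhat (X ω, Y1 ω) * (Y0 ω - mhat (X ω, Y1 ω)) ∂μ
      = ∫ ω in (fun ω => (X ω, Y1 ω)) ⁻¹' s,
          mhat (X ω, Y1 ω) + R0 ω / γhat (X ω, Y1 ω) * (Y0 ω - mhat (X ω, Y1 ω))
          ∂(μ.restrict {ω | A ω = 0}) := (conv _ s hs).symm
    _ = ∫ ω in (fun ω => (X ω, Y1 ω)) ⁻¹' s,
          ((μ.restrict {ω | A ω = 0})[(fun ω =>
            mhat (X ω, Y1 ω) + R0 ω / γhat (X ω, Y1 ω) * (Y0 ω - mhat (X ω, Y1 ω))) |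
            MeasurableSpace.comap (fun ω => (X ω, Y1 ω)) inferInstance]) ω
          ∂(μ.restrict {ω | A ω = 0}) :=
        (setIntegral_condExp hle hint.restrict ⟨s, hs, rfl⟩).symm
    _ = ∫ ω in (fun ω => (X ω, Y1 ω)) ⁻¹' s,
          (m (X ω, Y1 ω) + (mhat (X ω, Y1 ω) - m (X ω, Y1 ω))
            * (γhat (X ω, Y1 ω) - γ (X ω, Y1 ω)) / γhat (X ω, Y1 ω))
          ∂(μ.restrict {ω | A ω = 0}) :=
        integral_congr_ae (ae_restrict_of_ae key)
    _ = ∫ ω in {ω | A ω = 0} ∩ (fun ω => (X ω, Y1 ω)) ⁻¹' s,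
          (m (X ω, Y1 ω) + (mhat (X ω, Y1 ω) - m (X ω, Y1 ω))
            * (γhat (X ω, Y1 ω) - γ (X ω, Y1 ω)) / γhat (X ω, Y1 ω)) ∂μ := conv _ s hs
end

section
/- Let φ_F(D) = (A/E[A])·(Y1 - Y0 - μ1(X,0) + μ0(X,0)) - ((1-A)π(X)/((1-π(X))E[A]))·(Y1 - Y0 - μ1(X,0) + μ0(X,0)) - (A/E[A])·θ* be the full-data efficient influence function. Under conditional parallel trends, consistency, and positivity, E[φ_F(D)] = 0. -/
open MeasureTheory

open Filter

section AuxEIF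

theorem aux_pullout {Ω : Type*} {m' : MeasurableSpace Ω} [mΩ : MeasurableSpace Ω] (hm : m' ≤ mΩ)
    (μ : Measure Ω) [IsProbabilityMeasure μ] {F g : Ω → ℝ}
    (hF : StronglyMeasurable[m'] F) (hg : Integrable g μ)
    (hFg : Integrable (fun ω => F ω * g ω) μ) :
    ∫ ω, F ω * g ω ∂μ = ∫ ω, F ω * (μ[g|m']) ω ∂μ := by
  have h := condExp_mul_of_stronglyMeasurable_left hF (by exact hFg) hg
  have h1 : ∫ ω, (F * g) ω ∂μ = ∫ ω, (μ[F * g|m']) ω ∂μ :=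
    (integral_condExp (f := F * g) (μ := μ) hm).symm
  have h2 : ∫ ω, (μ[F * g|m']) ω ∂μ = ∫ ω, F ω * (μ[g|m']) ω ∂μ := integral_congr_ae h
  exact h1.trans h2

theorem aux_pi_condexp {Ω 𝒳 : Type*} [mΩ : MeasurableSpace Ω] [m𝒳 : MeasurableSpace 𝒳]
    (μ : Measure Ω) [IsProbabilityMeasure μ] {X : Ω → 𝒳} (hX : Measurable X)
    {A : Ω → ℝ} (hAint : Integrable A μ) {π : 𝒳 → ℝ} (hπm : Measurable π)
    (hπb : ∀ᵐ ω ∂μ, |π (X ω)| ≤ 1)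
    (hπ : IsCondExpOn μ X Set.univ A π) :
    (fun ω => π (X ω)) =ᵐ[μ] μ[A|m𝒳.comap X] := by
  have hπXint : Integrable (fun ω => π (X ω)) μ :=
    (integrable_const (1:ℝ)).mono' ((hπm.comp hX).aestronglyMeasurable)
      (by filter_upwards [hπb] with ω h using by simpa [Real.norm_eq_abs] using h)
  refine ae_eq_condExp_of_forall_setIntegral_eq hX.comap_le hAint
    (fun t _ _ => hπXint.integrableOn) ?_ ?_
  · rintro t ⟨u, hu, rfl⟩ _
    have h := hπ.2 u hu
    simpa [Set.univ_inter] using h.symm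
  · exact ((hπm.comp (comap_measurable X)).stronglyMeasurable).aestronglyMeasurable

theorem aux_loc {Ω 𝒳 : Type*} [mΩ : MeasurableSpace Ω] [m𝒳 : MeasurableSpace 𝒳]
    (μ : Measure Ω) [IsProbabilityMeasure μ] {X : Ω → 𝒳} (hX : Measurable X)
    {E : Set Ω} (hE : MeasurableSet E) {B : Ω → ℝ}
    (hBdef : B = E.indicator (fun _ => (1:ℝ)))
    {Yf : Ω → ℝ} (hYf : Integrable Yf μ) {c : 𝒳 → ℝ}
    (hC : IsCondExpOn μ X E Yf c) :
    μ[fun ω => B ω * Yf ω | m𝒳.comap X] =ᵐ[μ]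
      fun ω => c (X ω) * (μ[B | m𝒳.comap X]) ω := by
  have hm : m𝒳.comap X ≤ mΩ := hX.comap_le
  have hcm : Measurable c := hC.1
  have hBmeas : Measurable B := by rw [hBdef]; exact measurable_const.indicator hE
  have hBint : Integrable B μ := by rw [hBdef]; exact (integrable_const 1).indicator hE
  have hBabs : ∀ ω, |B ω| ≤ 1 := by
    intro ω; rw [hBdef]; by_cases h : ω ∈ E <;> simp [Set.indicator, h]
  have hBYf : Integrable (fun ω => B ω * Yf ω) μ :=
    hYf.bdd_mul hBmeas.aestronglyMeasurable
      (Filter.Eventually.of_forall fun ω => by simpa [Real.norm_eq_abs] using hBabs ω)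
  have key : ∀ n : ℕ,
      (fun ω => (X ⁻¹' {x | |c x| ≤ (n:ℝ)}).indicator (fun _ => (1:ℝ)) ω
          * (μ[fun ω' => B ω' * Yf ω'|m𝒳.comap X]) ω)
        =ᵐ[μ]
      (fun ω => ({x | |c x| ≤ (n:ℝ)}).indicator c (X ω) * (μ[B|m𝒳.comap X]) ω) := by
    intro n
    have hs : MeasurableSet {x | |c x| ≤ (n:ℝ)} := measurableSet_le hcm.abs measurable_const
    set s : Set 𝒳 := {x | |c x| ≤ (n:ℝ)} with hsdef
    set cn : 𝒳 → ℝ := s.indicator c with hcndef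
    have hcn : Measurable cn := hcm.indicator hs
    have hcnb : ∀ x, |cn x| ≤ (n:ℝ) := by
      intro x; by_cases h : x ∈ s
      · rw [hcndef, Set.indicator_of_mem h]; exact h
      · rw [hcndef, Set.indicator_of_notMem h, abs_zero]; exact Nat.cast_nonneg n
    have hFn : StronglyMeasurable[m𝒳.comap X] (fun ω => cn (X ω)) :=
      (hcn.comp (comap_measurable X)).stronglyMeasurable
    have hFnB : Integrable (fun ω => cn (X ω) * B ω) μ :=
      hBint.bdd_mul ((hcn.comp hX).aestronglyMeasurable)
        (Filter.Eventually.of_forall fun ω => by simpa [Real.norm_eq_abs] using hcnb (X ω))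
    have h1 : μ[(fun ω => cn (X ω)) * B|m𝒳.comap X]
        =ᵐ[μ] (fun ω => cn (X ω)) * μ[B|m𝒳.comap X] :=
      condExp_mul_of_stronglyMeasurable_left hFn (by exact hFnB) hBint
    have hsX : MeasurableSet[m𝒳.comap X] (X ⁻¹' s) := ⟨s, hs, rfl⟩
    have hGnsm : StronglyMeasurable[m𝒳.comap X]
        (fun ω => (X ⁻¹' s).indicator (fun _ => (1:ℝ)) ω) := by
      exact ((@measurable_const ℝ Ω _ (m𝒳.comap X) 1).indicator hsX).stronglyMeasurable
    have hGnb : ∀ ω, |(X ⁻¹' s).indicator (fun _ => (1:ℝ)) ω| ≤ 1 := by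
      intro ω; by_cases h : ω ∈ X ⁻¹' s <;> simp [Set.indicator, h]
    have hGnBYf : Integrable
        (fun ω => (X ⁻¹' s).indicator (fun _ => (1:ℝ)) ω * (B ω * Yf ω)) μ :=
      hBYf.bdd_mul ((measurable_const.indicator (hX hs)).aestronglyMeasurable)
        (Filter.Eventually.of_forall fun ω => by simpa [Real.norm_eq_abs] using hGnb ω)
    have h2 : μ[(fun ω => (X ⁻¹' s).indicator (fun _ => (1:ℝ)) ω) * (fun ω => B ω * Yf ω)|m𝒳.comap X] =ᵐ[μ] (fun ω => (X ⁻¹' s).indicator (fun _ => (1:ℝ)) ω) * μ[fun ω => B ω * Yf ω|m𝒳.comap X] :=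
      condExp_mul_of_stronglyMeasurable_left hGnsm (by exact hGnBYf) hBYf
    -- set-integral equality
    have heq : ∀ t : Set Ω, MeasurableSet[m𝒳.comap X] t → μ t < ⊤ →
        ∫ ω in t, cn (X ω) * B ω ∂μ
          = ∫ ω in t, (X ⁻¹' s).indicator (fun _ => (1:ℝ)) ω * (B ω * Yf ω) ∂μ := by
      rintro t ⟨u, hu, rfl⟩ -
      have lhs1 : (fun ω => cn (X ω) * B ω) = E.indicator (fun ω => cn (X ω)) := by
        funext ω; rw [hBdef]; by_cases h : ω ∈ E <;> simp [Set.indicator, h]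
      have lhs2 : (fun ω => cn (X ω)) = fun ω => (X ⁻¹' s).indicator (fun ω => c (X ω)) ω := by
        funext ω; by_cases h : X ω ∈ s <;>
          simp [hcndef, Set.indicator, h, Set.mem_preimage]
      have rhs1 : (fun ω => (X ⁻¹' s).indicator (fun _ => (1:ℝ)) ω * (B ω * Yf ω))
          = (X ⁻¹' s).indicator (fun ω => B ω * Yf ω) := by
        funext ω; by_cases h : ω ∈ X ⁻¹' s <;> simp [Set.indicator, h]
      have rhs2 : (fun ω => B ω * Yf ω) = E.indicator Yf := by
        funext ω; rw [hBdef]; by_cases h : ω ∈ E <;> simp [Set.indicator, h]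
      have hset1 : (X ⁻¹' u ∩ E) ∩ X ⁻¹' s = E ∩ X ⁻¹' (u ∩ s) := by
        rw [Set.preimage_inter]; ext ω; simp only [Set.mem_inter_iff]; tauto
      have hset2 : (X ⁻¹' u ∩ X ⁻¹' s) ∩ E = E ∩ X ⁻¹' (u ∩ s) := by
        rw [Set.preimage_inter]; ext ω; simp only [Set.mem_inter_iff]; tauto
      calc ∫ ω in X ⁻¹' u, cn (X ω) * B ω ∂μ
          = ∫ ω in X ⁻¹' u, E.indicator (fun ω => cn (X ω)) ω ∂μ := by rw [lhs1]
        _ = ∫ ω in X ⁻¹' u ∩ E, cn (X ω) ∂μ := setIntegral_indicator hE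
        _ = ∫ ω in X ⁻¹' u ∩ E, (X ⁻¹' s).indicator (fun ω => c (X ω)) ω ∂μ := by rw [← lhs2]
        _ = ∫ ω in (X ⁻¹' u ∩ E) ∩ X ⁻¹' s, c (X ω) ∂μ := setIntegral_indicator (hX hs)
        _ = ∫ ω in E ∩ X ⁻¹' (u ∩ s), c (X ω) ∂μ := by rw [hset1]
        _ = ∫ ω in E ∩ X ⁻¹' (u ∩ s), Yf ω ∂μ := (hC.2 (u ∩ s) (hu.inter hs)).symm
        _ = ∫ ω in (X ⁻¹' u ∩ X ⁻¹' s) ∩ E, Yf ω ∂μ := by rw [hset2]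
        _ = ∫ ω in X ⁻¹' u ∩ X ⁻¹' s, E.indicator Yf ω ∂μ := (setIntegral_indicator hE).symm
        _ = ∫ ω in X ⁻¹' u, (X ⁻¹' s).indicator (E.indicator Yf) ω ∂μ :=
            (setIntegral_indicator (hX hs)).symm
        _ = ∫ ω in X ⁻¹' u, (X ⁻¹' s).indicator (fun _ => (1:ℝ)) ω * (B ω * Yf ω) ∂μ := by
            rw [rhs1, rhs2]
    have h3 : (fun ω => cn (X ω) * (μ[B|m𝒳.comap X]) ω)
        =ᵐ[μ] μ[fun ω => (X ⁻¹' s).indicator (fun _ => (1:ℝ)) ω * (B ω * Yf ω)|m𝒳.comap X] := by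
      refine ae_eq_condExp_of_forall_setIntegral_eq hm (by exact hGnBYf)
        (fun t _ _ => (integrable_condExp.bdd_mul ((hcn.comp hX).aestronglyMeasurable)
          (Filter.Eventually.of_forall fun ω => by
            simpa [Real.norm_eq_abs] using hcnb (X ω))).integrableOn) ?_ ?_
      · intro t ht hμt
        have e1 : ∫ ω in t, cn (X ω) * (μ[B|m𝒳.comap X]) ω ∂μ
            = ∫ ω in t, (μ[(fun ω => cn (X ω)) * B|m𝒳.comap X]) ω ∂μ := by
          refine (setIntegral_congr_ae (hm t ht) ?_).symm
          filter_upwards [h1] with ω h _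
          simpa [Pi.mul_apply] using h
        have e2 : ∫ ω in t, (μ[(fun ω => cn (X ω)) * B|m𝒳.comap X]) ω ∂μ
            = ∫ ω in t, cn (X ω) * B ω ∂μ := setIntegral_condExp hm (by exact hFnB) ht
        rw [e1, e2]; exact heq t ht hμt
      · exact (hFn.mul stronglyMeasurable_condExp).aestronglyMeasurable
    calc (fun ω => (X ⁻¹' s).indicator (fun _ => (1:ℝ)) ω
            * (μ[fun ω' => B ω' * Yf ω'|m𝒳.comap X]) ω)
        =ᵐ[μ] μ[(fun ω => (X ⁻¹' s).indicator (fun _ => (1:ℝ)) ω)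
            * (fun ω => B ω * Yf ω)|m𝒳.comap X] := h2.symm
      _ =ᵐ[μ] (fun ω => cn (X ω) * (μ[B|m𝒳.comap X]) ω) := h3.symm
  have hall : ∀ᵐ ω ∂μ, ∀ n : ℕ,
      (X ⁻¹' {x | |c x| ≤ (n:ℝ)}).indicator (fun _ => (1:ℝ)) ω
          * (μ[fun ω' => B ω' * Yf ω'|m𝒳.comap X]) ω
        = ({x | |c x| ≤ (n:ℝ)}).indicator c (X ω) * (μ[B|m𝒳.comap X]) ω :=
    ae_all_iff.2 key
  filter_upwards [hall] with ω hω
  obtain ⟨n, hn⟩ := exists_nat_ge |c (X ω)|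
  have hmem : X ω ∈ {x | |c x| ≤ (n:ℝ)} := hn
  have h := hω n
  rw [Set.indicator_of_mem (by exact hmem), Set.indicator_of_mem hmem] at h
  simpa using h

/-- Bounded pull-out: for bounded measurable `f`, `∫ f(X)·g = ∫ f(X)·m(X)` when
`m∘X` is a version of `μ[g|σ(X)]`. -/
theorem aux_pull_bdd {Ω 𝒳 : Type*} [mΩ : MeasurableSpace Ω] [m𝒳 : MeasurableSpace 𝒳]
    (μ : Measure Ω) [IsProbabilityMeasure μ] {X : Ω → 𝒳} (hX : Measurable X)
    {g : Ω → ℝ} (hg : Integrable g μ) {p : 𝒳 → ℝ}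
    (hp : (fun ω => p (X ω)) =ᵐ[μ] μ[g|m𝒳.comap X])
    {f : 𝒳 → ℝ} (hf : Measurable f) {C : ℝ} (hC : ∀ x, |f x| ≤ C) :
    ∫ ω, f (X ω) * g ω ∂μ = ∫ ω, f (X ω) * p (X ω) ∂μ := by
  have hFsm : StronglyMeasurable[m𝒳.comap X] (fun ω => f (X ω)) :=
    (hf.comp (comap_measurable X)).stronglyMeasurable
  have hI : Integrable (fun ω => f (X ω) * g ω) μ :=
    hg.bdd_mul ((hf.comp hX).aestronglyMeasurable)
      (Eventually.of_forall fun ω => by simpa [Real.norm_eq_abs] using hC (X ω))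
  rw [aux_pullout hX.comap_le μ hFsm hg hI]
  refine integral_congr_ae ?_
  filter_upwards [hp] with ω h
  rw [← h]

theorem aux_lemA {Ω 𝒳 : Type*} [mΩ : MeasurableSpace Ω] [m𝒳 : MeasurableSpace 𝒳]
    (μ : Measure Ω) [IsProbabilityMeasure μ] {X : Ω → 𝒳} (hX : Measurable X)
    {A : Ω → ℝ} (hA : Measurable A) (hAbin : ∀ ω, A ω = 0 ∨ A ω = 1)
    {π : 𝒳 → ℝ} (hπm : Measurable π)
    (hπ01 : ∀ᵐ ω ∂μ, 0 < π (X ω) ∧ π (X ω) < 1)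
    (hπ : IsCondExpOn μ X Set.univ A π)
    {v : 𝒳 → ℝ} (hv : Measurable v)
    (hAv : Integrable (fun ω => A ω * v (X ω)) μ) :
    Integrable (fun ω => (1 - A ω) * (π (X ω) / (1 - π (X ω)) * v (X ω))) μ ∧
    ∫ ω, (1 - A ω) * (π (X ω) / (1 - π (X ω)) * v (X ω)) ∂μ
      = ∫ ω, A ω * v (X ω) ∂μ := by
  have hA01 : ∀ ω, 0 ≤ A ω ∧ A ω ≤ 1 := fun ω => by rcases hAbin ω with h | h <;> rw [h] <;> norm_num
  have hAint : Integrable A μ :=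
    (integrable_const (1:ℝ)).mono' hA.aestronglyMeasurable
      (Eventually.of_forall fun ω => by
        rw [Real.norm_eq_abs, abs_of_nonneg (hA01 ω).1]; exact (hA01 ω).2)
  have h1Aint : Integrable (fun ω => 1 - A ω) μ := (integrable_const 1).sub hAint
  have hπb : ∀ᵐ ω ∂μ, |π (X ω)| ≤ 1 := by
    filter_upwards [hπ01] with ω h
    rw [abs_of_pos h.1]; exact h.2.le
  have hπcond : (fun ω => π (X ω)) =ᵐ[μ] μ[A|m𝒳.comap X] :=
    aux_pi_condexp μ hX hAint hπm hπb hπ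
  have h1A : (fun ω => 1 - π (X ω)) =ᵐ[μ] μ[fun ω => 1 - A ω|m𝒳.comap X] := by
    have h := condExp_sub (μ := μ) (m := m𝒳.comap X) (integrable_const (1:ℝ)) hAint
    rw [condExp_const hX.comap_le] at h
    have hfe : (fun ω => 1 - A ω) = ((fun _ => (1:ℝ)) - A) := rfl
    rw [hfe]
    filter_upwards [h, hπcond] with ω h1 h2
    have h1' : (μ[(fun _ => (1:ℝ)) - A|m𝒳.comap X]) ω = 1 - (μ[A|m𝒳.comap X]) ω := by
      simpa [Pi.sub_apply] using h1
    rw [h1', ← h2]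
  -- truncations of v
  set tv : ℕ → 𝒳 → ℝ := fun n x => if |v x| ≤ (n:ℝ) then v x else 0 with htvdef
  have htvm : ∀ n, Measurable (tv n) := fun n =>
    Measurable.ite (measurableSet_le hv.abs measurable_const) hv measurable_const
  have htvb : ∀ n x, |tv n x| ≤ (n:ℝ) := by
    intro n x; rw [htvdef]; dsimp only
    split
    · assumption
    · simp
  have htvle : ∀ n x, |tv n x| ≤ |v x| := by
    intro n x; rw [htvdef]; dsimp only
    split
    · exact le_rfl
    · simp
  have htvlim : ∀ x, Tendsto (fun n => tv n x) atTop (nhds (v x)) := by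
    intro x
    obtain ⟨N, hN⟩ := exists_nat_ge |v x|
    refine tendsto_const_nhds.congr' ?_
    filter_upwards [eventually_ge_atTop N] with n hn
    rw [htvdef]; dsimp only
    rw [if_pos (hN.trans (by exact_mod_cast hn))]
  -- |A v(X)| rewritten
  have hAvabs : Integrable (fun ω => |v (X ω)| * A ω) μ := by
    refine hAv.abs.congr (Eventually.of_forall fun ω => ?_)
    show |A ω * v (X ω)| = |v (X ω)| * A ω
    rw [abs_mul, abs_of_nonneg (hA01 ω).1, mul_comm]
  -- Integrability of |v(X)| π(X)
  have hπvabsint : Integrable (fun ω => |v (X ω)| * π (X ω)) μ := by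
    have hnn : 0 ≤ᵐ[μ] fun ω => |v (X ω)| * π (X ω) := by
      filter_upwards [hπ01] with ω h
      exact mul_nonneg (abs_nonneg _) h.1.le
    have hmeas : Measurable fun ω => |v (X ω)| * π (X ω) :=
      ((hv.comp hX).abs).mul (hπm.comp hX)
    refine ⟨hmeas.aestronglyMeasurable, ?_⟩
    rw [hasFiniteIntegral_iff_ofReal hnn]
    have hle : ∀ n : ℕ, ∫ ω, |tv n (X ω)| * π (X ω) ∂μ ≤ ∫ ω, |v (X ω)| * A ω ∂μ := by
      intro n
      have hfm : Measurable fun x => |tv n x| := (htvm n).abs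
      have hpull := aux_pull_bdd (C := (n:ℝ)) μ hX hAint hπcond hfm
        (fun x => by rw [abs_abs]; exact htvb n x)
      rw [← hpull]
      refine integral_mono ?_ hAvabs fun ω => ?_
      · exact hAint.bdd_mul (((htvm n).abs.comp hX).aestronglyMeasurable)
          (Eventually.of_forall fun ω => by
            simpa [Real.norm_eq_abs, abs_abs] using htvb n (X ω))
      · exact mul_le_mul_of_nonneg_right (htvle n (X ω)) (hA01 ω).1
    have hint : ∀ n : ℕ, Integrable (fun ω => |tv n (X ω)| * π (X ω)) μ := by
      intro n
      refine Integrable.bdd_mul (c := (n:ℝ))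
        ((integrable_const (1:ℝ)).mono' ((hπm.comp hX).aestronglyMeasurable)
          (by filter_upwards [hπb] with ω h using by simpa [Real.norm_eq_abs] using h))
        (((htvm n).abs.comp hX).aestronglyMeasurable) ?_
      exact Eventually.of_forall fun ω => by
        simpa [Real.norm_eq_abs, abs_abs] using htvb n (X ω)
    have hnn' : ∀ n : ℕ, 0 ≤ᵐ[μ] fun ω => |tv n (X ω)| * π (X ω) := by
      intro n
      filter_upwards [hπ01] with ω h
      exact mul_nonneg (abs_nonneg _) h.1.le
    calc ∫⁻ ω, ENNReal.ofReal (|v (X ω)| * π (X ω)) ∂μ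
        = ∫⁻ ω, ⨆ n : ℕ, ENNReal.ofReal (|tv n (X ω)| * π (X ω)) ∂μ := by
          refine lintegral_congr_ae ?_
          filter_upwards [hπ01] with ω h
          refine le_antisymm ?_ ?_
          · obtain ⟨N, hN⟩ := exists_nat_ge |v (X ω)|
            refine le_iSup_of_le N (le_of_eq ?_)
            congr 1
            rw [htvdef]; dsimp only
            rw [if_pos hN]
          · refine iSup_le fun n => ENNReal.ofReal_le_ofReal ?_
            exact mul_le_mul_of_nonneg_right (htvle n (X ω)) h.1.le
      _ = ⨆ n : ℕ, ∫⁻ ω, ENNReal.ofReal (|tv n (X ω)| * π (X ω)) ∂μ := by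
          refine lintegral_iSup' (fun n => ?_) ?_
          · exact (ENNReal.measurable_ofReal.comp
              (((htvm n).abs.comp hX).mul (hπm.comp hX))).aemeasurable
          · filter_upwards [hπ01] with ω h
            intro n m hnm
            refine ENNReal.ofReal_le_ofReal (mul_le_mul_of_nonneg_right ?_ h.1.le)
            rw [htvdef]; dsimp only
            split
            · rename_i h1
              rw [if_pos (h1.trans (by exact_mod_cast hnm))]
            · simp
      _ ≤ ENNReal.ofReal (∫ ω, |v (X ω)| * A ω ∂μ) := by
          refine iSup_le fun n => ?_
          rw [← ofReal_integral_eq_lintegral_ofReal (hint n) (hnn' n)]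
          exact ENNReal.ofReal_le_ofReal (hle n)
      _ < ⊤ := ENNReal.ofReal_lt_top
  have hπvint : Integrable (fun ω => v (X ω) * π (X ω)) μ := by
    refine hπvabsint.mono' (((hv.comp hX)).mul (hπm.comp hX)).aestronglyMeasurable ?_
    filter_upwards [hπ01] with ω h
    rw [Real.norm_eq_abs, abs_mul, abs_of_pos h.1]
  -- eq1 : ∫ v(X) A = ∫ v(X) π(X)
  have eq1 : ∫ ω, v (X ω) * A ω ∂μ = ∫ ω, v (X ω) * π (X ω) ∂μ := by
    have hl : Tendsto (fun n => ∫ ω, tv n (X ω) * A ω ∂μ) atTop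
        (nhds (∫ ω, v (X ω) * A ω ∂μ)) := by
      refine tendsto_integral_of_dominated_convergence (fun ω => |v (X ω)| * A ω)
        (fun n => (((htvm n).comp hX).mul hA).aestronglyMeasurable) hAvabs
        (fun n => Eventually.of_forall fun ω => ?_) (Eventually.of_forall fun ω => ?_)
      · rw [Real.norm_eq_abs, abs_mul, abs_of_nonneg (hA01 ω).1]
        exact mul_le_mul_of_nonneg_right (htvle n (X ω)) (hA01 ω).1
      · exact (htvlim (X ω)).mul_const (A ω)
    have hr : Tendsto (fun n => ∫ ω, tv n (X ω) * π (X ω) ∂μ) atTop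
        (nhds (∫ ω, v (X ω) * π (X ω) ∂μ)) := by
      refine tendsto_integral_of_dominated_convergence (fun ω => |v (X ω)| * π (X ω))
        (fun n => (((htvm n).comp hX).mul (hπm.comp hX)).aestronglyMeasurable) hπvabsint
        (fun n => ?_) (Eventually.of_forall fun ω => (htvlim (X ω)).mul_const _)
      filter_upwards [hπ01] with ω h
      rw [Real.norm_eq_abs, abs_mul, abs_of_pos h.1]
      exact mul_le_mul_of_nonneg_right (htvle n (X ω)) h.1.le
    have heq : (fun n : ℕ => ∫ ω, tv n (X ω) * A ω ∂μ)
        = fun n : ℕ => ∫ ω, tv n (X ω) * π (X ω) ∂μ := by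
      funext n
      exact aux_pull_bdd μ hX hAint hπcond (htvm n) (htvb n)
    rw [heq] at hl
    exact tendsto_nhds_unique hl hr
  -- the weighted function w
  set w : 𝒳 → ℝ := fun x => π x / (1 - π x) * v x with hwdef
  have hwm : Measurable w := (hπm.div (measurable_const.sub hπm)).mul hv
  set tw : ℕ → 𝒳 → ℝ := fun n x => if |w x| ≤ (n:ℝ) then w x else 0 with htwdef
  have htwm : ∀ n, Measurable (tw n) := fun n =>
    Measurable.ite (measurableSet_le hwm.abs measurable_const) hwm measurable_const
  have htwb : ∀ n x, |tw n x| ≤ (n:ℝ) := by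
    intro n x; rw [htwdef]; dsimp only
    split
    · assumption
    · simp
  have htwle : ∀ n x, |tw n x| ≤ |w x| := by
    intro n x; rw [htwdef]; dsimp only
    split
    · exact le_rfl
    · simp
  have htwlim : ∀ x, Tendsto (fun n => tw n x) atTop (nhds (w x)) := by
    intro x
    obtain ⟨N, hN⟩ := exists_nat_ge |w x|
    refine tendsto_const_nhds.congr' ?_
    filter_upwards [eventually_ge_atTop N] with n hn
    rw [htwdef]; dsimp only
    rw [if_pos (hN.trans (by exact_mod_cast hn))]
  -- key a.e. bound : |tw n|·(1-π) ≤ |v|·π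
  have hkey : ∀ n : ℕ, ∀ᵐ ω ∂μ, |tw n (X ω)| * (1 - π (X ω)) ≤ |v (X ω)| * π (X ω) := by
    intro n
    filter_upwards [hπ01] with ω h
    have h1 : (0:ℝ) < 1 - π (X ω) := by linarith [h.2]
    have h2 : |w (X ω)| * (1 - π (X ω)) = |v (X ω)| * π (X ω) := by
      rw [hwdef]; dsimp only
      rw [abs_mul, abs_div, abs_of_pos h.1, abs_of_pos h1]
      field_simp
    calc |tw n (X ω)| * (1 - π (X ω)) ≤ |w (X ω)| * (1 - π (X ω)) :=
          mul_le_mul_of_nonneg_right (htwle n (X ω)) h1.le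
      _ = |v (X ω)| * π (X ω) := h2
  have h1πb : ∀ᵐ ω ∂μ, |1 - π (X ω)| ≤ 1 := by
    filter_upwards [hπ01] with ω h
    rw [abs_of_nonneg (by linarith [h.2])]
    linarith [h.1]
  have h1πint : Integrable (fun ω => 1 - π (X ω)) μ :=
    (integrable_const (1:ℝ)).mono'
      ((measurable_const.sub (hπm.comp hX)).aestronglyMeasurable)
      (by filter_upwards [h1πb] with ω h using by simpa [Real.norm_eq_abs] using h)
  -- integrability of (1-A)·w(X)
  have hGint : Integrable (fun ω => (1 - A ω) * (π (X ω) / (1 - π (X ω)) * v (X ω))) μ := by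
    have hGmeas : Measurable fun ω => (1 - A ω) * (π (X ω) / (1 - π (X ω)) * v (X ω)) :=
      (measurable_const.sub hA).mul (hwm.comp hX)
    refine ⟨hGmeas.aestronglyMeasurable, ?_⟩
    rw [hasFiniteIntegral_iff_norm]
    have hint : ∀ n : ℕ, Integrable (fun ω => |tw n (X ω)| * (1 - A ω)) μ :=
      fun n => h1Aint.bdd_mul (((htwm n).abs.comp hX).aestronglyMeasurable)
        (Eventually.of_forall fun ω => by
          simpa [Real.norm_eq_abs, abs_abs] using htwb n (X ω))
    have hnn : ∀ n : ℕ, 0 ≤ᵐ[μ] fun ω => |tw n (X ω)| * (1 - A ω) :=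
      fun n => Eventually.of_forall fun ω =>
        mul_nonneg (abs_nonneg _) (by linarith [(hA01 ω).2])
    have hle : ∀ n : ℕ, ∫ ω, |tw n (X ω)| * (1 - A ω) ∂μ
        ≤ ∫ ω, |v (X ω)| * π (X ω) ∂μ := by
      intro n
      have hp := aux_pull_bdd (p := fun x => 1 - π x) (C := (n:ℝ)) μ hX h1Aint h1A
        ((htwm n).abs) (fun x => by rw [abs_abs]; exact htwb n x)
      rw [hp]
      refine integral_mono_ae ?_ hπvabsint (hkey n)
      refine h1πint.bdd_mul (c := (n:ℝ)) (((htwm n).abs.comp hX).aestronglyMeasurable) ?_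
      exact Eventually.of_forall fun ω => by
        simpa [Real.norm_eq_abs, abs_abs] using htwb n (X ω)
    calc ∫⁻ ω, ENNReal.ofReal ‖(1 - A ω) * (π (X ω) / (1 - π (X ω)) * v (X ω))‖ ∂μ
        = ∫⁻ ω, ⨆ n : ℕ, ENNReal.ofReal (|tw n (X ω)| * (1 - A ω)) ∂μ := by
          refine lintegral_congr_ae (Eventually.of_forall fun ω => ?_)
          have h1An : 0 ≤ 1 - A ω := by linarith [(hA01 ω).2]
          dsimp only
          rw [Real.norm_eq_abs, abs_mul, abs_of_nonneg h1An]
          refine le_antisymm ?_ ?_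
          · obtain ⟨N, hN⟩ := exists_nat_ge |w (X ω)|
            refine le_iSup_of_le N (le_of_eq ?_)
            rw [mul_comm]
            congr 2
            rw [htwdef]; dsimp only
            rw [if_pos hN]
          · refine iSup_le fun n => ENNReal.ofReal_le_ofReal ?_
            rw [mul_comm (1 - A ω)]
            exact mul_le_mul_of_nonneg_right (htwle n (X ω)) h1An
      _ = ⨆ n : ℕ, ∫⁻ ω, ENNReal.ofReal (|tw n (X ω)| * (1 - A ω)) ∂μ := by
          refine lintegral_iSup' (fun n => ?_) (Eventually.of_forall fun ω => ?_)
          · exact (ENNReal.measurable_ofReal.comp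
              (((htwm n).abs.comp hX).mul (measurable_const.sub hA))).aemeasurable
          · intro n m hnm
            refine ENNReal.ofReal_le_ofReal (mul_le_mul_of_nonneg_right ?_
              (by linarith [(hA01 ω).2]))
            rw [htwdef]; dsimp only
            split
            · rename_i h1
              rw [if_pos (h1.trans (by exact_mod_cast hnm))]
            · simp
      _ ≤ ENNReal.ofReal (∫ ω, |v (X ω)| * π (X ω) ∂μ) := by
          refine iSup_le fun n => ?_
          rw [← ofReal_integral_eq_lintegral_ofReal (hint n) (hnn n)]
          exact ENNReal.ofReal_le_ofReal (hle n)
      _ < ⊤ := ENNReal.ofReal_lt_top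
  refine ⟨hGint, ?_⟩
  -- final equality
  have hGabs : Integrable (fun ω => |w (X ω)| * (1 - A ω)) μ := by
    refine hGint.abs.congr (Eventually.of_forall fun ω => ?_)
    have h1An : 0 ≤ 1 - A ω := by linarith [(hA01 ω).2]
    show |(1 - A ω) * (π (X ω) / (1 - π (X ω)) * v (X ω))| = |w (X ω)| * (1 - A ω)
    rw [hwdef]; dsimp only
    rw [abs_mul, abs_of_nonneg h1An, mul_comm]
  have hl : Tendsto (fun n => ∫ ω, tw n (X ω) * (1 - A ω) ∂μ) atTop
      (nhds (∫ ω, w (X ω) * (1 - A ω) ∂μ)) := by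
    refine tendsto_integral_of_dominated_convergence (fun ω => |w (X ω)| * (1 - A ω))
      (fun n => (((htwm n).comp hX).mul (measurable_const.sub hA)).aestronglyMeasurable) hGabs
      (fun n => Eventually.of_forall fun ω => ?_)
      (Eventually.of_forall fun ω => (htwlim (X ω)).mul_const _)
    have h1An : 0 ≤ 1 - A ω := by linarith [(hA01 ω).2]
    rw [Real.norm_eq_abs, abs_mul, abs_of_nonneg h1An]
    exact mul_le_mul_of_nonneg_right (htwle n (X ω)) h1An
  have hr : Tendsto (fun n => ∫ ω, tw n (X ω) * (1 - π (X ω)) ∂μ) atTop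
      (nhds (∫ ω, w (X ω) * (1 - π (X ω)) ∂μ)) := by
    refine tendsto_integral_of_dominated_convergence (fun ω => |v (X ω)| * π (X ω))
      (fun n => (((htwm n).comp hX).mul
        (measurable_const.sub (hπm.comp hX))).aestronglyMeasurable) hπvabsint
      (fun n => ?_) (Eventually.of_forall fun ω => (htwlim (X ω)).mul_const _)
    filter_upwards [hkey n, hπ01] with ω h hp
    have h1 : (0:ℝ) < 1 - π (X ω) := by linarith [hp.2]
    rw [Real.norm_eq_abs, abs_mul, abs_of_pos h1]
    exact h
  have heqn : (fun n : ℕ => ∫ ω, tw n (X ω) * (1 - A ω) ∂μ)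
      = fun n : ℕ => ∫ ω, tw n (X ω) * (1 - π (X ω)) ∂μ := by
    funext n
    exact aux_pull_bdd (p := fun x => 1 - π x) μ hX h1Aint h1A (htwm n) (htwb n)
  rw [heqn] at hl
  have hfinal : ∫ ω, w (X ω) * (1 - A ω) ∂μ = ∫ ω, w (X ω) * (1 - π (X ω)) ∂μ :=
    tendsto_nhds_unique hl hr
  have hwπ : ∫ ω, w (X ω) * (1 - π (X ω)) ∂μ = ∫ ω, v (X ω) * π (X ω) ∂μ := by
    refine integral_congr_ae ?_
    filter_upwards [hπ01] with ω h
    have h1 : (1:ℝ) - π (X ω) ≠ 0 := by intro hc; nlinarith [h.2]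
    rw [hwdef]; dsimp only
    field_simp
  calc ∫ ω, (1 - A ω) * (π (X ω) / (1 - π (X ω)) * v (X ω)) ∂μ
      = ∫ ω, w (X ω) * (1 - A ω) ∂μ := by
        refine integral_congr_ae (Eventually.of_forall fun ω => ?_)
        rw [hwdef]; dsimp only; ring
    _ = ∫ ω, w (X ω) * (1 - π (X ω)) ∂μ := hfinal
    _ = ∫ ω, v (X ω) * π (X ω) ∂μ := hwπ
    _ = ∫ ω, v (X ω) * A ω ∂μ := eq1.symm
    _ = ∫ ω, A ω * v (X ω) ∂μ := by
        refine integral_congr_ae (Eventually.of_forall fun ω => ?_)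
        ring

theorem aux_goalB {Ω 𝒳 : Type*} [mΩ : MeasurableSpace Ω] [m𝒳 : MeasurableSpace 𝒳]
    (μ : Measure Ω) [IsProbabilityMeasure μ] {X : Ω → 𝒳} (hX : Measurable X)
    {A : Ω → ℝ} (hA : Measurable A) (hAbin : ∀ ω, A ω = 0 ∨ A ω = 1)
    {π : 𝒳 → ℝ} (hπm : Measurable π)
    (hπ01 : ∀ᵐ ω ∂μ, 0 < π (X ω) ∧ π (X ω) < 1)
    (hπ : IsCondExpOn μ X Set.univ A π)
    {Yd : Ω → ℝ} (hYdint : Integrable Yd μ)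
    {mPT : 𝒳 → ℝ}
    (hPT1 : IsCondExpOn μ X {ω | A ω = 1} Yd mPT)
    (hPT0 : IsCondExpOn μ X {ω | A ω = 0} Yd mPT)
    (hB10int : Integrable (fun ω => (1 - A ω) * (π (X ω) / (1 - π (X ω))) * Yd ω) μ) :
    ∫ ω, (1 - A ω) * (π (X ω) / (1 - π (X ω))) * Yd ω ∂μ = ∫ ω, A ω * Yd ω ∂μ := by
  have hA01 : ∀ ω, 0 ≤ A ω ∧ A ω ≤ 1 := fun ω => by
    rcases hAbin ω with h | h <;> rw [h] <;> norm_num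
  have hAint : Integrable A μ :=
    (integrable_const (1:ℝ)).mono' hA.aestronglyMeasurable
      (Eventually.of_forall fun ω => by
        rw [Real.norm_eq_abs, abs_of_nonneg (hA01 ω).1]; exact (hA01 ω).2)
  have h1Aint : Integrable (fun ω => 1 - A ω) μ := (integrable_const 1).sub hAint
  have hπb : ∀ᵐ ω ∂μ, |π (X ω)| ≤ 1 := by
    filter_upwards [hπ01] with ω h
    rw [abs_of_pos h.1]; exact h.2.le
  have hπcond : (fun ω => π (X ω)) =ᵐ[μ] μ[A|m𝒳.comap X] :=
    aux_pi_condexp μ hX hAint hπm hπb hπ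
  have h1A : (fun ω => 1 - π (X ω)) =ᵐ[μ] μ[fun ω => 1 - A ω|m𝒳.comap X] := by
    have h := condExp_sub (μ := μ) (m := m𝒳.comap X) (integrable_const (1:ℝ)) hAint
    rw [condExp_const hX.comap_le] at h
    have hfe : (fun ω => 1 - A ω) = ((fun _ => (1:ℝ)) - A) := rfl
    rw [hfe]
    filter_upwards [h, hπcond] with ω h1 h2
    have h1' : (μ[(fun _ => (1:ℝ)) - A|m𝒳.comap X]) ω = 1 - (μ[A|m𝒳.comap X]) ω := by
      simpa [Pi.sub_apply] using h1
    rw [h1', ← h2]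
  have hE1 : MeasurableSet {ω | A ω = 1} := hA (measurableSet_singleton 1)
  have hE0 : MeasurableSet {ω | A ω = 0} := hA (measurableSet_singleton 0)
  have hBA : A = Set.indicator {ω | A ω = 1} (fun _ => (1:ℝ)) := by
    funext ω
    rcases hAbin ω with h | h
    · rw [h]; symm
      apply Set.indicator_of_notMem
      simp only [Set.mem_setOf_eq, h]
      norm_num
    · rw [h]; symm
      exact Set.indicator_of_mem (show ω ∈ {ω | A ω = 1} from h) (fun _ => (1:ℝ))
  have hB0 : (fun ω => 1 - A ω) = Set.indicator {ω | A ω = 0} (fun _ => (1:ℝ)) := by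
    funext ω
    rcases hAbin ω with h | h
    · rw [h]; symm
      simpa using Set.indicator_of_mem (show ω ∈ {ω | A ω = 0} from h) (fun _ => (1:ℝ))
    · rw [h]; symm
      simpa using Set.indicator_of_notMem
        (show ω ∉ {ω | A ω = 0} by simp only [Set.mem_setOf_eq, h]; norm_num) (fun _ => (1:ℝ))
  have hq1 : μ[fun ω => A ω * Yd ω|m𝒳.comap X] =ᵐ[μ]
      fun ω => mPT (X ω) * (μ[A|m𝒳.comap X]) ω :=
    aux_loc μ hX hE1 hBA hYdint hPT1
  have hq0 : μ[fun ω => (1 - A ω) * Yd ω|m𝒳.comap X] =ᵐ[μ]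
      fun ω => mPT (X ω) * (μ[fun ω => 1 - A ω|m𝒳.comap X]) ω :=
    aux_loc μ hX hE0 hB0 hYdint hPT0
  have hu1int : Integrable (fun ω => (1 - A ω) * Yd ω) μ :=
    hYdint.bdd_mul (c := (1:ℝ)) ((measurable_const.sub hA).aestronglyMeasurable)
      (Eventually.of_forall fun ω => by
        rw [Real.norm_eq_abs, abs_of_nonneg (by linarith [(hA01 ω).2])]
        linarith [(hA01 ω).1])
  have hrm : Measurable fun x => π x / (1 - π x) := hπm.div (measurable_const.sub hπm)
  have hFsm : StronglyMeasurable[m𝒳.comap X] (fun ω => π (X ω) / (1 - π (X ω))) :=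
    (hrm.comp (comap_measurable X)).stronglyMeasurable
  have hru1int : Integrable (fun ω => (π (X ω) / (1 - π (X ω))) * ((1 - A ω) * Yd ω)) μ :=
    hB10int.congr (Eventually.of_forall fun ω => by ring)
  have hpull := aux_pullout hX.comap_le μ hFsm hu1int hru1int
  calc ∫ ω, (1 - A ω) * (π (X ω) / (1 - π (X ω))) * Yd ω ∂μ
      = ∫ ω, (π (X ω) / (1 - π (X ω))) * ((1 - A ω) * Yd ω) ∂μ :=
        integral_congr_ae (Eventually.of_forall fun ω => by ring)
    _ = ∫ ω, (π (X ω) / (1 - π (X ω)))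
          * (μ[fun ω => (1 - A ω) * Yd ω|m𝒳.comap X]) ω ∂μ := hpull
    _ = ∫ ω, (μ[fun ω => A ω * Yd ω|m𝒳.comap X]) ω ∂μ := by
        refine integral_congr_ae ?_
        filter_upwards [hq0, hq1, h1A, hπcond, hπ01] with ω e0 e1 eA eπ hb
        have h1ne : (1:ℝ) - π (X ω) ≠ 0 := by
          have := hb.2; intro hc; nlinarith
        rw [e0, ← eA, e1, ← eπ]
        field_simp
    _ = ∫ ω, A ω * Yd ω ∂μ := integral_condExp hX.comap_le

end AuxEIF

/-- **The full-data efficient influence function has mean zero.** Under conditional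
parallel trends, consistency and positivity, the full-data efficient influence function
`φ_F(D) = (A/E[A])(Y1 - Y0 - μ1(X,0) + μ0(X,0))
  - ((1-A)π(X)/((1-π(X))E[A]))(Y1 - Y0 - μ1(X,0) + μ0(X,0)) - (A/E[A])θ*`
satisfies `E[φ_F(D)] = 0`, where `θ* = E[Y1(1) - Y1(0) ∣ A = 1]`. -/
theorem fullData_EIF_mean_zero
    {Ω 𝒳 : Type*} [MeasurableSpace Ω] [MeasurableSpace 𝒳]
    (μ : Measure Ω) [IsProbabilityMeasure μ]
    (X : Ω → 𝒳) (A Y0 Y10 Y11 Y1 : Ω → ℝ)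
    (hX : Measurable X) (hA : Measurable A)
    (hY0 : Measurable Y0) (hY10 : Measurable Y10) (hY11 : Measurable Y11)
    (hAbin : ∀ ω, A ω = 0 ∨ A ω = 1)
    (hY0int : Integrable Y0 μ) (hY10int : Integrable Y10 μ) (hY11int : Integrable Y11 μ)
    -- consistency
    (hcons : ∀ ω, Y1 ω = A ω * Y11 ω + (1 - A ω) * Y10 ω)
    -- positivity
    (π : 𝒳 → ℝ)
    (hπ : IsCondExpOn μ X Set.univ A π)
    (hA1pos : 0 < μ {ω | A ω = 1})
    (hπ01 : ∀ᵐ ω ∂μ, 0 < π (X ω) ∧ π (X ω) < 1)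
    -- conditional parallel trends, via a common version mPT
    (mPT : 𝒳 → ℝ)
    (hPT1 : IsCondExpOn μ X {ω | A ω = 1} (fun ω => Y10 ω - Y0 ω) mPT)
    (hPT0 : IsCondExpOn μ X {ω | A ω = 0} (fun ω => Y10 ω - Y0 ω) mPT)
    -- regression functions μ1(·,0), μ0(·,0)
    (m10 m00 : 𝒳 → ℝ)
    (hm10 : IsCondExpOn μ X {ω | A ω = 0} Y1 m10)
    (hm00 : IsCondExpOn μ X {ω | A ω = 0} Y0 m00)
    -- the identified ATT
    (θ : ℝ)
    (hθ : θ = (∫ ω in {ω | A ω = 1}, (Y11 ω - Y10 ω) ∂μ) / (μ {ω | A ω = 1}).toReal)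
    -- expectation of A and integrability of the influence function
    (EA : ℝ) (hEA : EA = ∫ ω, A ω ∂μ)
    (hint : Integrable (fun ω =>
      A ω / EA * (Y1 ω - Y0 ω - m10 (X ω) + m00 (X ω))
        - (1 - A ω) * π (X ω) / ((1 - π (X ω)) * EA)
            * (Y1 ω - Y0 ω - m10 (X ω) + m00 (X ω))
        - A ω / EA * θ) μ) :
    ∫ ω, (A ω / EA * (Y1 ω - Y0 ω - m10 (X ω) + m00 (X ω))
        - (1 - A ω) * π (X ω) / ((1 - π (X ω)) * EA)
            * (Y1 ω - Y0 ω - m10 (X ω) + m00 (X ω))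
        - A ω / EA * θ) ∂μ = 0 := by
  have hπm : Measurable π := hπ.1
  have hm10m : Measurable m10 := hm10.1
  have hm00m : Measurable m00 := hm00.1
  have hA01 : ∀ ω, 0 ≤ A ω ∧ A ω ≤ 1 := fun ω => by
    rcases hAbin ω with h | h <;> rw [h] <;> norm_num
  have hAint : Integrable A μ :=
    (integrable_const (1:ℝ)).mono' hA.aestronglyMeasurable
      (Eventually.of_forall fun ω => by
        rw [Real.norm_eq_abs, abs_of_nonneg (hA01 ω).1]; exact (hA01 ω).2)
  have hE1 : MeasurableSet {ω | A ω = 1} := hA (measurableSet_singleton 1)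
  have hBA : A = Set.indicator {ω | A ω = 1} (fun _ => (1:ℝ)) := by
    funext ω
    rcases hAbin ω with h | h
    · rw [h]; symm
      apply Set.indicator_of_notMem
      simp only [Set.mem_setOf_eq, h]
      norm_num
    · rw [h]; symm
      exact Set.indicator_of_mem (show ω ∈ {ω | A ω = 1} from h) (fun _ => (1:ℝ))
  -- EA = μ(A=1) > 0
  have hEA' : EA = (μ {ω | A ω = 1}).toReal := by
    have h1 : ∫ ω, A ω ∂μ = ∫ ω, Set.indicator {ω | A ω = 1} (fun _ => (1:ℝ)) ω ∂μ :=
      integral_congr_ae (Eventually.of_forall fun ω => congrFun hBA ω)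
    rw [hEA, h1, integral_indicator hE1, setIntegral_const, smul_eq_mul, mul_one, measureReal_def]
  have hEApos : 0 < EA := by
    rw [hEA']
    exact ENNReal.toReal_pos hA1pos.ne' (measure_ne_top μ _)
  have hEAne : EA ≠ 0 := hEApos.ne'
  -- Y1 measurable/integrable
  have hY1eq : Y1 = fun ω => A ω * Y11 ω + (1 - A ω) * Y10 ω := funext hcons
  have hY1m : Measurable Y1 := by
    rw [hY1eq]
    exact (hA.mul hY11).add ((measurable_const.sub hA).mul hY10)
  have hY1int : Integrable Y1 μ := by
    rw [hY1eq]
    refine Integrable.add ?_ ?_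
    · exact hY11int.bdd_mul (c := 1) hA.aestronglyMeasurable
        (Eventually.of_forall fun ω => by
          rw [Real.norm_eq_abs, abs_of_nonneg (hA01 ω).1]; exact (hA01 ω).2)
    · exact hY10int.bdd_mul (c := 1) (measurable_const.sub hA).aestronglyMeasurable
        (Eventually.of_forall fun ω => by
          rw [Real.norm_eq_abs, abs_of_nonneg (by linarith [(hA01 ω).2])]
          linarith [(hA01 ω).1])
  -- integrability of the three terms
  have hT3int : Integrable (fun ω => A ω / EA * θ) μ := by
    refine (hAint.mul_const (θ / EA)).congr (Eventually.of_forall fun ω => ?_)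
    ring
  have hψint : Integrable (fun ω =>
      A ω / EA * (Y1 ω - Y0 ω - m10 (X ω) + m00 (X ω))
        - (1 - A ω) * π (X ω) / ((1 - π (X ω)) * EA)
            * (Y1 ω - Y0 ω - m10 (X ω) + m00 (X ω))) μ := by
    refine (hint.add hT3int).congr (Eventually.of_forall fun ω => ?_)
    simp only [Pi.add_apply]
    ring
  have hT1int : Integrable (fun ω =>
      A ω / EA * (Y1 ω - Y0 ω - m10 (X ω) + m00 (X ω))) μ := by
    have h0 := hψint.bdd_mul (c := 1) hA.aestronglyMeasurable
      (Eventually.of_forall fun ω => by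
        rw [Real.norm_eq_abs, abs_of_nonneg (hA01 ω).1]; exact (hA01 ω).2)
    refine h0.congr (Eventually.of_forall fun ω => ?_)
    beta_reduce
    rcases hAbin ω with h | h <;> rw [h] <;> ring
  have hT2int : Integrable (fun ω =>
      (1 - A ω) * π (X ω) / ((1 - π (X ω)) * EA)
        * (Y1 ω - Y0 ω - m10 (X ω) + m00 (X ω))) μ := by
    have h0 := hψint.bdd_mul (f := fun ω => 1 - A ω) (c := 1) (measurable_const.sub hA).aestronglyMeasurable
      (Eventually.of_forall fun ω => by
        rw [Real.norm_eq_abs,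
          abs_of_nonneg (show (0:ℝ) ≤ 1 - A ω by linarith [(hA01 ω).2])]
        linarith [(hA01 ω).1])
    refine h0.neg.congr (Eventually.of_forall fun ω => ?_)
    simp only [Pi.neg_apply]
    beta_reduce
    rcases hAbin ω with h | h <;> rw [h] <;> ring
  -- A·W integrable
  have hAW : Integrable (fun ω =>
      A ω * (Y1 ω - Y0 ω - m10 (X ω) + m00 (X ω))) μ := by
    refine (hT1int.const_mul EA).congr (Eventually.of_forall fun ω => ?_)
    field_simp
  -- (1-A)·r(X)·W integrable
  have hrW : Integrable (fun ω =>
      (1 - A ω) * (π (X ω) / (1 - π (X ω)))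
        * (Y1 ω - Y0 ω - m10 (X ω) + m00 (X ω))) μ := by
    refine (hT2int.const_mul EA).congr ?_
    filter_upwards [hπ01] with ω hb
    have h1ne : (1:ℝ) - π (X ω) ≠ 0 := by intro hc; nlinarith [hb.2]
    field_simp
  -- A (Y1 - Y0) integrable
  have hAY : Integrable (fun ω => A ω * (Y1 ω - Y0 ω)) μ :=
    (hY1int.sub hY0int).bdd_mul (c := 1) hA.aestronglyMeasurable
      (Eventually.of_forall fun ω => by
        rw [Real.norm_eq_abs, abs_of_nonneg (hA01 ω).1]; exact (hA01 ω).2)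
  -- A v(X) integrable, v = m10 - m00
  have hvm : Measurable fun x => m10 x - m00 x := hm10m.sub hm00m
  have hAv : Integrable (fun ω => A ω * (m10 (X ω) - m00 (X ω))) μ := by
    refine (hAY.sub hAW).congr (Eventually.of_forall fun ω => ?_)
    simp only [Pi.sub_apply]
    ring
  -- Lemma A
  have hlemA := aux_lemA μ hX hA hAbin hπm hπ01 hπ hvm hAv
  -- (1-A) r(X) (Y10 - Y0) integrable
  have hB10int : Integrable (fun ω =>
      (1 - A ω) * (π (X ω) / (1 - π (X ω))) * (Y10 ω - Y0 ω)) μ := by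
    refine (hrW.add hlemA.1).congr (Eventually.of_forall fun ω => ?_)
    simp only [Pi.add_apply]
    rcases hAbin ω with h | h <;> rw [hcons ω, h] <;> ring
  -- Goal B
  have hGB := aux_goalB (Yd := fun ω => Y10 ω - Y0 ω) μ hX hA hAbin hπm hπ01 hπ (hY10int.sub hY0int) hPT1 hPT0 hB10int
  -- helper integrabilities
  have hbdd : ∀ {f : Ω → ℝ}, Integrable f μ → Integrable (fun ω => A ω * f ω) μ :=
    fun {f} hf => hf.bdd_mul (c := 1) hA.aestronglyMeasurable
      (Eventually.of_forall fun ω => by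
        rw [Real.norm_eq_abs, abs_of_nonneg (hA01 ω).1]; exact (hA01 ω).2)
  have hA110 : Integrable (fun ω => A ω * (Y11 ω - Y0 ω)) μ := hbdd (hY11int.sub hY0int)
  have hA100 : Integrable (fun ω => A ω * (Y10 ω - Y0 ω)) μ := hbdd (hY10int.sub hY0int)
  have hA1110 : Integrable (fun ω => A ω * (Y11 ω - Y10 ω)) μ := hbdd (hY11int.sub hY10int)
  -- values
  have e1 : ∫ ω, A ω / EA * (Y1 ω - Y0 ω - m10 (X ω) + m00 (X ω)) ∂μ
      = ((∫ ω, A ω * (Y11 ω - Y0 ω) ∂μ) - ∫ ω, A ω * (m10 (X ω) - m00 (X ω)) ∂μ) / EA := by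
    have h1 : ∫ ω, A ω / EA * (Y1 ω - Y0 ω - m10 (X ω) + m00 (X ω)) ∂μ
        = ∫ ω, (1 / EA) * (A ω * (Y11 ω - Y0 ω) - A ω * (m10 (X ω) - m00 (X ω))) ∂μ := by
      refine integral_congr_ae (Eventually.of_forall fun ω => ?_)
      beta_reduce
      rcases hAbin ω with h | h <;> rw [hcons ω, h] <;> ring
    rw [h1, integral_const_mul, integral_sub hA110 hAv]
    ring
  have e2 : ∫ ω, (1 - A ω) * π (X ω) / ((1 - π (X ω)) * EA)
        * (Y1 ω - Y0 ω - m10 (X ω) + m00 (X ω)) ∂μ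
      = ((∫ ω, A ω * (Y10 ω - Y0 ω) ∂μ) - ∫ ω, A ω * (m10 (X ω) - m00 (X ω)) ∂μ) / EA := by
    have h1 : ∫ ω, (1 - A ω) * π (X ω) / ((1 - π (X ω)) * EA)
          * (Y1 ω - Y0 ω - m10 (X ω) + m00 (X ω)) ∂μ
        = ∫ ω, (1 / EA) * ((1 - A ω) * (π (X ω) / (1 - π (X ω))) * (Y10 ω - Y0 ω)
              - (1 - A ω) * (π (X ω) / (1 - π (X ω)) * (m10 (X ω) - m00 (X ω)))) ∂μ := by
      refine integral_congr_ae ?_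
      filter_upwards [hπ01] with ω hb
      have h1ne : (1:ℝ) - π (X ω) ≠ 0 := by intro hc; nlinarith [hb.2]
      beta_reduce
      rcases hAbin ω with h | h <;> rw [hcons ω, h]
      · field_simp
        ring
      · ring
    rw [h1, integral_const_mul, integral_sub hB10int hlemA.1, hGB, hlemA.2]
    ring
  have e3 : ∫ ω, A ω / EA * θ ∂μ
      = ((∫ ω, A ω * (Y11 ω - Y0 ω) ∂μ) - ∫ ω, A ω * (Y10 ω - Y0 ω) ∂μ) / EA := by
    have h1 : ∫ ω, A ω / EA * θ ∂μ = (θ / EA) * ∫ ω, A ω ∂μ := by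
      rw [← integral_const_mul]
      exact integral_congr_ae (Eventually.of_forall fun ω => by ring)
    have hId : ∫ ω in {ω | A ω = 1}, (Y11 ω - Y10 ω) ∂μ
        = ∫ ω, A ω * (Y11 ω - Y10 ω) ∂μ := by
      rw [← integral_indicator hE1]
      refine integral_congr_ae (Eventually.of_forall fun ω => ?_)
      beta_reduce
      rcases hAbin ω with h | h
      · rw [Set.indicator_of_notMem (by simp only [Set.mem_setOf_eq, h]; norm_num)]
        rw [h]; ring
      · rw [Set.indicator_of_mem (show ω ∈ {ω | A ω = 1} from h)]
        rw [h]; ring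
    have hsplit : ∫ ω, A ω * (Y11 ω - Y10 ω) ∂μ
        = (∫ ω, A ω * (Y11 ω - Y0 ω) ∂μ) - ∫ ω, A ω * (Y10 ω - Y0 ω) ∂μ := by
      rw [← integral_sub hA110 hA100]
      exact integral_congr_ae (Eventually.of_forall fun ω => by ring)
    have ht : (μ {ω | A ω = 1}).toReal ≠ 0 := by rw [← hEA']; exact hEAne
    rw [h1, ← hEA, hθ, hEA', hId, hsplit]
    field_simp [ht]
    try ring
  calc ∫ ω, (A ω / EA * (Y1 ω - Y0 ω - m10 (X ω) + m00 (X ω))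
        - (1 - A ω) * π (X ω) / ((1 - π (X ω)) * EA)
            * (Y1 ω - Y0 ω - m10 (X ω) + m00 (X ω))
        - A ω / EA * θ) ∂μ
      = (∫ ω, (A ω / EA * (Y1 ω - Y0 ω - m10 (X ω) + m00 (X ω))
          - (1 - A ω) * π (X ω) / ((1 - π (X ω)) * EA)
              * (Y1 ω - Y0 ω - m10 (X ω) + m00 (X ω))) ∂μ)
        - ∫ ω, A ω / EA * θ ∂μ := integral_sub hψint hT3int
    _ = ((∫ ω, A ω / EA * (Y1 ω - Y0 ω - m10 (X ω) + m00 (X ω)) ∂μ)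
        - ∫ ω, (1 - A ω) * π (X ω) / ((1 - π (X ω)) * EA)
            * (Y1 ω - Y0 ω - m10 (X ω) + m00 (X ω)) ∂μ)
        - ∫ ω, A ω / EA * θ ∂μ := by rw [integral_sub hT1int hT2int]
    _ = 0 := by rw [e1, e2, e3]; ring
end
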